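/- arXiv:2004.10713 — 11 statements merged into one kernel-verified Lean document; each statement's English description precedes it below -/
import Mathlib

section
/- Let g₂ : ℝ × ℝ → ℝ be C¹ on the first quadrant with g₂ > 0 and ∂g₂/∂S ≥ 0 there, and set F₂(S, I) = I·S·g₂(S, I). Let S̃, Ṽ₁, Ĩ₂ > 0. Then for all S > 0 and V₁ > 0: 2 − F₂(S̃, Ĩ₂)/F₂(S, Ĩ₂) + S·F₂(S̃, Ĩ₂)/(S̃·F₂(S, Ĩ₂)) − V₁/Ṽ₁ − S·Ṽ₁/(S̃·V₁) ≤ 0. -/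
/-- Remark 5.6: if `F₂(S,I) = I·S·g₂(S,I)` with `g₂` C¹, positive and
nondecreasing in `S` on the first quadrant, then for any fixed `S̃, Ṽ₁, Ĩ₂ > 0` and all
`S, V₁ > 0` the stated combination is nonpositive. -/
theorem remark_5_6 (g₂ g₂S F₂ : ℝ → ℝ → ℝ)
    (hgC1 : ContDiffOn ℝ 1 (fun p : ℝ × ℝ => g₂ p.1 p.2) {p : ℝ × ℝ | 0 ≤ p.1 ∧ 0 ≤ p.2})
    (hgpos : ∀ S I : ℝ, 0 ≤ S → 0 ≤ I → 0 < g₂ S I)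
    (hdgS : ∀ S I : ℝ, 0 ≤ S → 0 ≤ I → HasDerivAt (fun x => g₂ x I) (g₂S S I) S)
    (hgS : ∀ S I : ℝ, 0 ≤ S → 0 ≤ I → 0 ≤ g₂S S I)
    (hF : ∀ S I : ℝ, F₂ S I = I * (S * g₂ S I))
    (St Vt It : ℝ) (hSt : 0 < St) (hVt : 0 < Vt) (hIt : 0 < It) :
    ∀ S V₁ : ℝ, 0 < S → 0 < V₁ →
      2 - F₂ St It / F₂ S It + S * F₂ St It / (St * F₂ S It)
        - V₁ / Vt - S * Vt / (St * V₁) ≤ 0 := by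
  intro S V₁ hS hV
  have hmono : MonotoneOn (fun x => g₂ x It) (Set.Ici (0:ℝ)) := by
    apply monotoneOn_of_deriv_nonneg (convex_Ici 0)
    · intro x hx
      exact (hdgS x It hx hIt.le).continuousAt.continuousWithinAt
    · intro x hx
      rw [interior_Ici] at hx
      exact (hdgS x It hx.le hIt.le).differentiableAt.differentiableWithinAt
    · intro x hx
      rw [interior_Ici] at hx
      rw [(hdgS x It hx.le hIt.le).deriv]
      exact hgS x It hx.le hIt.le
  set gS := g₂ S It with hgSdef
  set gSt := g₂ St It with hgStdef
  have hgSpos : 0 < gS := hgpos S It hS.le hIt.le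
  have hgStpos : 0 < gSt := hgpos St It hSt.le hIt.le
  have hFS : F₂ S It = It * (S * gS) := hF S It
  have hFSt : F₂ St It = It * (St * gSt) := hF St It
  have hFSpos : 0 < F₂ S It := by rw [hFS]; positivity
  set r := Real.sqrt (S / St) with hr
  have hrpos : 0 < r := Real.sqrt_pos.2 (by positivity)
  have hr2 : r ^ 2 = S / St := Real.sq_sqrt (by positivity)
  set a := F₂ St It / F₂ S It with ha
  have hapos : 0 < a := div_pos (by rw [hFSt]; positivity) hFSpos
  have har2 : a * r ^ 2 = gSt / gS := by
    rw [hr2, ha, hFS, hFSt]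
    field_simp
  have hAM : 2 * r ≤ V₁ / Vt + r ^ 2 * Vt / V₁ := by
    rw [div_add_div _ _ (ne_of_gt hVt) (ne_of_gt hV), le_div_iff₀ (by positivity)]
    nlinarith [sq_nonneg (V₁ - r * Vt)]
  have hkey : 0 ≤ (1 - r ^ 2) * (a * r ^ 2 - 1) := by
    rcases le_total S St with h | h
    · have hg : gS ≤ gSt := hmono (Set.mem_Ici.2 hS.le) (Set.mem_Ici.2 hSt.le) h
      have h1 : 1 ≤ a * r ^ 2 := by
        rw [har2, le_div_iff₀ hgSpos]; linarith
      have h2 : r ^ 2 ≤ 1 := by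
        rw [hr2]; exact div_le_one_of_le₀ h hSt.le
      nlinarith
    · have hg : gSt ≤ gS := hmono (Set.mem_Ici.2 hSt.le) (Set.mem_Ici.2 hS.le) h
      have h1 : a * r ^ 2 ≤ 1 := by
        rw [har2, div_le_one hgSpos]; exact hg
      have h2 : 1 ≤ r ^ 2 := by
        rw [hr2, le_div_iff₀ hSt]; linarith
      nlinarith
  have hr2pos : 0 < r ^ 2 := by positivity
  have hmain : 2 * (1 - r) ≤ (1 - r ^ 2) * a := by
    have h1 : (1 - r ^ 2) ≤ (1 - r ^ 2) * a * r ^ 2 := by nlinarith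
    have h2 : 2 * (1 - r) * r ^ 2 ≤ (1 - r ^ 2) := by
      nlinarith [sq_nonneg (1 - r), mul_nonneg (sq_nonneg (1 - r)) hrpos.le]
    nlinarith
  have hterm1 : S * F₂ St It / (St * F₂ S It) = r ^ 2 * a := by
    rw [hr2, ha]
    field_simp
  have hterm2 : S * Vt / (St * V₁) = r ^ 2 * Vt / V₁ := by
    rw [hr2]
    field_simp
  rw [hterm1, hterm2]
  linarith [hAM, hmain]
end

section
/- Under hypotheses H1–H2 (and with σ₁ = (∂F₁/∂I)(S⁰, 0) well defined), system (3) admits a single-strain-1 equilibrium, i.e. a triple (S̄, V̄₁, Ī₁) with S̄, V̄₁, Ī₁ > 0 satisfying Λ − F₁(S̄, Ī₁) − λS̄ = 0, rS̄ − μV̄₁ = 0 and F₁(S̄, Ī₁) − α₁Ī₁ = 0, if and only if R₁ > 1; moreover, when it exists this equilibrium is unique. -/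
/-!
At an equilibrium with `I > 0`, the I-equation reads `f₁(S, I) = α₁`, and subtracting it from the
S-equation gives `λ S = Λ - α₁ I`. Along this segment, which runs from `(S⁰, 0)` to `(0, Λ/α₁)`,
`φ(I) = f₁((Λ - α₁ I)/λ, I)` is strictly decreasing by H2, starts at `f₁(S⁰, 0) = σ₁` and ends at
`f₁(0, Λ/α₁) = 0`. So `φ = α₁` has a root in `(0, Λ/α₁)` iff `α₁ < σ₁`, by the intermediate value
theorem, and that root is unique.
-/

open Set

section Monotonicity

variable {f f' : ℝ → ℝ} {D : Set ℝ}

theorem strictMonoOn_of_hasDerivAt_pos (hD : Convex ℝ D) (hf : ∀ x ∈ D, HasDerivAt f (f' x) x)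
    (hf' : ∀ x ∈ D, 0 < f' x) : StrictMonoOn f D :=
  strictMonoOn_of_hasDerivWithinAt_pos hD (fun x hx => (hf x hx).continuousAt.continuousWithinAt)
    (fun x hx => (hf x (interior_subset hx)).hasDerivWithinAt)
    (fun x hx => hf' x (interior_subset hx))

theorem antitoneOn_of_hasDerivAt_nonpos (hD : Convex ℝ D) (hf : ∀ x ∈ D, HasDerivAt f (f' x) x)
    (hf' : ∀ x ∈ D, f' x ≤ 0) : AntitoneOn f D :=
  antitoneOn_of_hasDerivWithinAt_nonpos hD (fun x hx => (hf x hx).continuousAt.continuousWithinAt)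
    (fun x hx => (hf x (interior_subset hx)).hasDerivWithinAt)
    (fun x hx => hf' x (interior_subset hx))

end Monotonicity

theorem strictAntiOn_apply_of_strictMonoOn_of_antitoneOn {α β γ : Type*} [Preorder α]
    [Preorder β] [Preorder γ] {f : α → β → γ} {s : β → α} {A : Set α} {t : Set β}
    (hs : StrictAntiOn s t) (hst : MapsTo s t A) (hfA : ∀ y ∈ t, StrictMonoOn (f · y) A)
    (hft : ∀ x ∈ A, AntitoneOn (f x) t) : StrictAntiOn (fun y => f (s y) y) t := by
  intro y hy y' hy' hlt
  calc f (s y') y' ≤ f (s y') y := hft _ (hst hy') hy hy' hlt.le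
    _ < f (s y) y := hfA y hy (hst hy') (hst hy) (hs hy hy' hlt)

theorem StrictAntiOn.exists_mem_Ioo_eq_iff {φ : ℝ → ℝ} {a b c : ℝ} (hab : a ≤ b)
    (hφ : StrictAntiOn φ (Icc a b)) (hcont : ContinuousOn φ (Icc a b)) (hb : φ b < c) :
    (∃ x ∈ Ioo a b, φ x = c) ↔ c < φ a := by
  constructor
  · rintro ⟨x, hx, rfl⟩
    exact hφ (left_mem_Icc.2 hab) (Ioo_subset_Icc_self hx) hx.1
  · intro ha
    exact intermediate_value_Ioo' hab hcont ⟨hb, ha⟩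

theorem hasDerivAt_id_mul_zero {f : ℝ → ℝ} {f' : ℝ} (hf : HasDerivAt f f' 0) :
    HasDerivAt (fun y => y * f y) (f 0) 0 := by
  simpa using (hasDerivAt_id' (0 : ℝ)).fun_mul hf

section Equilibrium

variable {Λ α lam : ℝ}

noncomputable def equilibriumSusceptible (Λ α lam I : ℝ) : ℝ := (Λ - α * I) / lam

theorem equilibriumSusceptible_zero : equilibriumSusceptible Λ α lam 0 = Λ / lam := by
  simp [equilibriumSusceptible]

theorem equilibriumSusceptible_div_self (hα : α ≠ 0) :
    equilibriumSusceptible Λ α lam (Λ / α) = 0 := by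
  simp [equilibriumSusceptible, mul_div_cancel₀ Λ hα]

theorem equilibriumSusceptible_pos (hα : 0 < α) (hlam : 0 < lam) {I : ℝ} (hI : I < Λ / α) :
    0 < equilibriumSusceptible Λ α lam I := by
  rw [lt_div_iff₀ hα] at hI
  exact div_pos (by linarith) hlam

theorem equilibriumSusceptible_nonneg (hα : 0 < α) (hlam : 0 < lam) {I : ℝ} (hI : I ≤ Λ / α) :
    0 ≤ equilibriumSusceptible Λ α lam I := by
  rw [le_div_iff₀ hα] at hI
  exact div_nonneg (by linarith) hlam.le

theorem strictAnti_equilibriumSusceptible (hα : 0 < α) (hlam : 0 < lam) :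
    StrictAnti (equilibriumSusceptible Λ α lam) := fun I I' hlt => by
  unfold equilibriumSusceptible
  gcongr

theorem singleStrainEquilibrium_iff {r μ : ℝ} {F f : ℝ → ℝ → ℝ} (hFf : ∀ S I, F S I = I * f S I)
    (hα : 0 < α) (hlam : 0 < lam) (hr : 0 < r) (hμ : 0 < μ) {S V I : ℝ} :
    (0 < S ∧ 0 < V ∧ 0 < I ∧ Λ - F S I - lam * S = 0 ∧ r * S - μ * V = 0 ∧
        F S I - α * I = 0) ↔
      I ∈ Ioo 0 (Λ / α) ∧ f (equilibriumSusceptible Λ α lam I) I = α ∧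
        S = equilibriumSusceptible Λ α lam I ∧ V = r * S / μ := by
  simp only [hFf, mem_Ioo]
  constructor
  · rintro ⟨hS, -, hI, hSeq, hVeq, hIeq⟩
    have hf : f S I = α := mul_left_cancel₀ hI.ne' (by linarith)
    have hS_eq : S = equilibriumSusceptible Λ α lam I := by
      rw [equilibriumSusceptible, eq_div_iff hlam.ne']
      linarith
    refine ⟨⟨hI, ?_⟩, hS_eq ▸ hf, hS_eq, ?_⟩
    · rw [lt_div_iff₀ hα]
      linarith [mul_pos hlam hS]
    · rw [eq_div_iff hμ.ne']
      linarith
  · rintro ⟨⟨hI, hIlt⟩, hf, rfl, rfl⟩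
    have hS := equilibriumSusceptible_pos (lam := lam) hα hlam hIlt
    refine ⟨hS, by positivity, hI, ?_, by field_simp; ring, by rw [hf]; ring⟩
    rw [hf, equilibriumSusceptible]
    field_simp
    ring

theorem strictAntiOn_apply_equilibriumSusceptible {f fS fI : ℝ → ℝ → ℝ} (hα : 0 < α)
    (hlam : 0 < lam) (hdfS : ∀ S I, 0 ≤ S → 0 ≤ I → HasDerivAt (f · I) (fS S I) S)
    (hdfI : ∀ S I, 0 ≤ S → 0 ≤ I → HasDerivAt (f S ·) (fI S I) I)
    (hfS : ∀ S I, 0 ≤ S → 0 ≤ I → 0 < fS S I) (hfI : ∀ S I, 0 ≤ S → 0 ≤ I → fI S I ≤ 0) :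
    StrictAntiOn (fun I => f (equilibriumSusceptible Λ α lam I) I) (Icc 0 (Λ / α)) :=
  strictAntiOn_apply_of_strictMonoOn_of_antitoneOn
    ((strictAnti_equilibriumSusceptible hα hlam).strictAntiOn _)
    (fun _ hI => equilibriumSusceptible_nonneg hα hlam hI.2)
    (fun I hI => strictMonoOn_of_hasDerivAt_pos (convex_Ici 0)
      (fun S hS => hdfS S I hS hI.1) (fun S hS => hfS S I hS hI.1))
    (fun S hS => antitoneOn_of_hasDerivAt_nonpos (convex_Icc 0 _)
      (fun I hI => hdfI S I hS hI.1) (fun I hI => hfI S I hS hI.1))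

theorem continuousOn_apply_equilibriumSusceptible {f : ℝ → ℝ → ℝ} (hα : 0 < α) (hlam : 0 < lam)
    (hf : ContinuousOn (fun p : ℝ × ℝ => f p.1 p.2) {p : ℝ × ℝ | 0 ≤ p.1 ∧ 0 ≤ p.2}) :
    ContinuousOn (fun I => f (equilibriumSusceptible Λ α lam I) I) (Icc 0 (Λ / α)) :=
  hf.comp (f := fun I => (equilibriumSusceptible Λ α lam I, I))
    (by unfold equilibriumSusceptible; fun_prop)
    fun I (hI : I ∈ Icc 0 _) => ⟨equilibriumSusceptible_nonneg hα hlam hI.2, hI.1⟩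

theorem apply_equilibriumSusceptible_div_self {F f : ℝ → ℝ → ℝ} (hFf : ∀ S I, F S I = I * f S I)
    (hF : F 0 (Λ / α) = 0) (hΛ : Λ ≠ 0) (hα : α ≠ 0) :
    f (equilibriumSusceptible Λ α lam (Λ / α)) (Λ / α) = 0 := by
  rw [hFf, mul_eq_zero, or_iff_right (div_ne_zero hΛ hα)] at hF
  rwa [equilibriumSusceptible_div_self hα]

end Equilibrium

theorem strain1_equilibrium_exists_iff_general
    (Λ r μ α₁ lam : ℝ)
    (hΛ : 0 < Λ) (hr : 0 < r) (hμ : 0 < μ)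
    (hα₁ : μ < α₁) (hlam : lam = r + μ)
    (F₁ f₁ F₁I f₁S f₁I : ℝ → ℝ → ℝ)
    (hf₁C1 : ContDiffOn ℝ 1 (fun p : ℝ × ℝ => f₁ p.1 p.2) {p : ℝ × ℝ | 0 ≤ p.1 ∧ 0 ≤ p.2})
    (hH1₁ : ∀ S I : ℝ, F₁ S I = I * f₁ S I)
    (hF₁zero : ∀ S I : ℝ, 0 ≤ S → 0 ≤ I → F₁ 0 I = 0 ∧ F₁ S 0 = 0)
    (hdF₁I : ∀ S I : ℝ, 0 ≤ S → 0 ≤ I → HasDerivAt (fun y => F₁ S y) (F₁I S I) I)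
    (hdf₁S : ∀ S I : ℝ, 0 ≤ S → 0 ≤ I → HasDerivAt (fun x => f₁ x I) (f₁S S I) S)
    (hdf₁I : ∀ S I : ℝ, 0 ≤ S → 0 ≤ I → HasDerivAt (fun y => f₁ S y) (f₁I S I) I)
    (hH2f₁S : ∀ S I : ℝ, 0 ≤ S → 0 ≤ I → 0 < f₁S S I)
    (hH2f₁I : ∀ S I : ℝ, 0 ≤ S → 0 ≤ I → f₁I S I ≤ 0)
    (R₁ : ℝ) (hR₁ : R₁ = F₁I (Λ / lam) 0 / α₁) :
    ((∃ Sb Vb Ib : ℝ, 0 < Sb ∧ 0 < Vb ∧ 0 < Ib ∧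
        Λ - F₁ Sb Ib - lam * Sb = 0 ∧ r * Sb - μ * Vb = 0 ∧
        F₁ Sb Ib - α₁ * Ib = 0) ↔ 1 < R₁) ∧
    (∀ Sb Vb Ib Sb' Vb' Ib' : ℝ,
      (0 < Sb ∧ 0 < Vb ∧ 0 < Ib ∧ Λ - F₁ Sb Ib - lam * Sb = 0 ∧
        r * Sb - μ * Vb = 0 ∧ F₁ Sb Ib - α₁ * Ib = 0) →
      (0 < Sb' ∧ 0 < Vb' ∧ 0 < Ib' ∧ Λ - F₁ Sb' Ib' - lam * Sb' = 0 ∧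
        r * Sb' - μ * Vb' = 0 ∧ F₁ Sb' Ib' - α₁ * Ib' = 0) →
      Sb = Sb' ∧ Vb = Vb' ∧ Ib = Ib') := by
  have hα₁_pos : 0 < α₁ := hμ.trans hα₁
  have hlam_pos : 0 < lam := hlam ▸ add_pos hr hμ
  have hb : 0 < Λ / α₁ := div_pos hΛ hα₁_pos
  set φ : ℝ → ℝ := fun I => f₁ (equilibriumSusceptible Λ α₁ lam I) I with hφ
  have hφ_anti : StrictAntiOn φ (Icc 0 (Λ / α₁)) :=
    strictAntiOn_apply_equilibriumSusceptible hα₁_pos hlam_pos hdf₁S hdf₁I hH2f₁S hH2f₁I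
  have hφ_end : φ (Λ / α₁) = 0 := apply_equilibriumSusceptible_div_self hH1₁
    (hF₁zero 0 _ le_rfl hb.le).1 hΛ.ne' hα₁_pos.ne'
  have hσ₁ : F₁I (Λ / lam) 0 = φ 0 := by
    have hS₀ : 0 ≤ Λ / lam := (div_pos hΛ hlam_pos).le
    refine (hdF₁I _ 0 hS₀ le_rfl).unique ?_
    simpa only [hφ, equilibriumSusceptible_zero, ← hH1₁]
      using hasDerivAt_id_mul_zero (hdf₁I _ 0 hS₀ le_rfl)
  have hequil := fun S V I =>
    singleStrainEquilibrium_iff (Λ := Λ) (S := S) (V := V) (I := I) hH1₁ hα₁_pos hlam_pos hr hμ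
  refine ⟨?_, ?_⟩
  · rw [hR₁, hσ₁, one_lt_div hα₁_pos, ← hφ_anti.exists_mem_Ioo_eq_iff hb.le
      (continuousOn_apply_equilibriumSusceptible hα₁_pos hlam_pos hf₁C1.continuousOn)
      (hφ_end ▸ hα₁_pos)]
    simp only [hequil]
    constructor
    · rintro ⟨S, V, I, hI, hφI, -, -⟩
      exact ⟨I, hI, hφI⟩
    · rintro ⟨I, hI, hφI⟩
      exact ⟨_, _, I, hI, hφI, rfl, rfl⟩
  · intro S V I S' V' I' h h'
    obtain ⟨hI, hφI, rfl, rfl⟩ := (hequil S V I).1 h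
    obtain ⟨hI', hφI', rfl, rfl⟩ := (hequil S' V' I').1 h'
    obtain rfl : I = I' :=
      hφ_anti.injOn (Ioo_subset_Icc_self hI) (Ioo_subset_Icc_self hI') (hφI.trans hφI'.symm)
    exact ⟨rfl, rfl, rfl⟩

/-- Theorem 4.5(1): under H1–H2, system (3) admits a single-strain-1
equilibrium iff R₁ = σ₁/α₁ > 1, where σ₁ = ∂F₁/∂I(S⁰,0); moreover it is unique. -/
theorem strain1_equilibrium_exists_iff
    (Λ r μ k α₁ α₂ lam : ℝ)
    (hΛ : 0 < Λ) (hr : 0 < r) (hμ : 0 < μ) (hk : 0 < k)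
    (hα₁ : μ < α₁) (hα₂ : μ < α₂) (hlam : lam = r + μ)
    (F₁ F₂ f₁ f₂ F₁S F₁I F₂S F₂I f₁S f₁I f₂S f₂I : ℝ → ℝ → ℝ)
    (hF₁nn : ∀ S I : ℝ, 0 ≤ S → 0 ≤ I → 0 ≤ F₁ S I)
    (hF₂nn : ∀ S I : ℝ, 0 ≤ S → 0 ≤ I → 0 ≤ F₂ S I)
    (hF₁C1 : ContDiffOn ℝ 1 (fun p : ℝ × ℝ => F₁ p.1 p.2) {p : ℝ × ℝ | 0 ≤ p.1 ∧ 0 ≤ p.2})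
    (hF₂C1 : ContDiffOn ℝ 1 (fun p : ℝ × ℝ => F₂ p.1 p.2) {p : ℝ × ℝ | 0 ≤ p.1 ∧ 0 ≤ p.2})
    (hf₁C1 : ContDiffOn ℝ 1 (fun p : ℝ × ℝ => f₁ p.1 p.2) {p : ℝ × ℝ | 0 ≤ p.1 ∧ 0 ≤ p.2})
    (hf₂C1 : ContDiffOn ℝ 1 (fun p : ℝ × ℝ => f₂ p.1 p.2) {p : ℝ × ℝ | 0 ≤ p.1 ∧ 0 ≤ p.2})
    (hH1₁ : ∀ S I : ℝ, F₁ S I = I * f₁ S I)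
    (hH1₂ : ∀ S I : ℝ, F₂ S I = I * f₂ S I)
    (hF₁zero : ∀ S I : ℝ, 0 ≤ S → 0 ≤ I → F₁ 0 I = 0 ∧ F₁ S 0 = 0)
    (hF₂zero : ∀ S I : ℝ, 0 ≤ S → 0 ≤ I → F₂ 0 I = 0 ∧ F₂ S 0 = 0)
    (hdF₁S : ∀ S I : ℝ, 0 ≤ S → 0 ≤ I → HasDerivAt (fun x => F₁ x I) (F₁S S I) S)
    (hdF₁I : ∀ S I : ℝ, 0 ≤ S → 0 ≤ I → HasDerivAt (fun y => F₁ S y) (F₁I S I) I)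
    (hdF₂S : ∀ S I : ℝ, 0 ≤ S → 0 ≤ I → HasDerivAt (fun x => F₂ x I) (F₂S S I) S)
    (hdF₂I : ∀ S I : ℝ, 0 ≤ S → 0 ≤ I → HasDerivAt (fun y => F₂ S y) (F₂I S I) I)
    (hdf₁S : ∀ S I : ℝ, 0 ≤ S → 0 ≤ I → HasDerivAt (fun x => f₁ x I) (f₁S S I) S)
    (hdf₁I : ∀ S I : ℝ, 0 ≤ S → 0 ≤ I → HasDerivAt (fun y => f₁ S y) (f₁I S I) I)
    (hdf₂S : ∀ S I : ℝ, 0 ≤ S → 0 ≤ I → HasDerivAt (fun x => f₂ x I) (f₂S S I) S)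
    (hdf₂I : ∀ S I : ℝ, 0 ≤ S → 0 ≤ I → HasDerivAt (fun y => f₂ S y) (f₂I S I) I)
    (hH2f₁S : ∀ S I : ℝ, 0 ≤ S → 0 ≤ I → 0 < f₁S S I)
    (hH2f₁I : ∀ S I : ℝ, 0 ≤ S → 0 ≤ I → f₁I S I ≤ 0)
    (hH2f₂S : ∀ S I : ℝ, 0 ≤ S → 0 ≤ I → 0 < f₂S S I)
    (hH2f₂I : ∀ S I : ℝ, 0 ≤ S → 0 ≤ I → f₂I S I ≤ 0)
    (R₁ : ℝ) (hR₁ : R₁ = F₁I (Λ / lam) 0 / α₁) :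
    ((∃ Sb Vb Ib : ℝ, 0 < Sb ∧ 0 < Vb ∧ 0 < Ib ∧
        Λ - F₁ Sb Ib - lam * Sb = 0 ∧ r * Sb - μ * Vb = 0 ∧
        F₁ Sb Ib - α₁ * Ib = 0) ↔ 1 < R₁) ∧
    (∀ Sb Vb Ib Sb' Vb' Ib' : ℝ,
      (0 < Sb ∧ 0 < Vb ∧ 0 < Ib ∧ Λ - F₁ Sb Ib - lam * Sb = 0 ∧
        r * Sb - μ * Vb = 0 ∧ F₁ Sb Ib - α₁ * Ib = 0) →
      (0 < Sb' ∧ 0 < Vb' ∧ 0 < Ib' ∧ Λ - F₁ Sb' Ib' - lam * Sb' = 0 ∧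
        r * Sb' - μ * Vb' = 0 ∧ F₁ Sb' Ib' - α₁ * Ib' = 0) →
      Sb = Sb' ∧ Vb = Vb' ∧ Ib = Ib') :=
  strain1_equilibrium_exists_iff_general Λ r μ α₁ lam hΛ hr hμ hα₁ hlam F₁ f₁ F₁I f₁S f₁I hf₁C1 hH1₁
    hF₁zero hdF₁I hdf₁S hdf₁I hH2f₁S hH2f₁I R₁ hR₁
end

section
/- Under hypotheses H1–H2 (and with σ₂ = (∂F₂/∂I)(S⁰, 0) well defined), system (3) admits a single-strain-2 equilibrium, i.e. a triple (S̃, Ṽ₁, Ĩ₂) with S̃, Ṽ₁, Ĩ₂ > 0 satisfying Λ − F₂(S̃, Ĩ₂) − λS̃ = 0, rS̃ − (μ + kĨ₂)Ṽ₁ = 0 and F₂(S̃, Ĩ₂) + kĨ₂Ṽ₁ − α₂Ĩ₂ = 0, if and only if R₂ > 1. Moreover, if −α₂rμ − α₂μ² + kΛr < 0 then this equilibrium is unique, while if −α₂rμ − α₂μ² + kΛr > 0 then there is at most one such equilibrium with Ĩ₂ in the interval [(−rα₂ − α₂μ + √(rα₂(rα₂ + α₂μ + kΛ)))/(α₂k),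 Λ/α₂]. -/
/-! Eliminating `V` and adding the first and third equations shows that an equilibrium is
determined by its `I`-coordinate: `S` and `V` are explicit rational functions `S(I)`, `V(I)`, and
`I ∈ (0, Λ/α₂)` must solve the reduced equation `f₂(S(I), I) + k V(I) = α₂`. Its left side equals
`α₂ R₂` at `I = 0` and `0` at `I = Λ/α₂` (by H1), so `R₂ > 1` gives a solution by the intermediate
value theorem. Conversely, at an equilibrium `S ≤ S⁰` and `V < V(0)`, so by H2 the left side is
below `α₂ R₂`. Uniqueness holds wherever the left side is strictly decreasing: `V(I)` always
decreases, and `S(I)` does once `α₂k²I² + 2α₂kλI ≥ kΛr − α₂μλ`, which holds for every `I > 0` if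
`kΛr < α₂μλ` and from the stated threshold on otherwise. -/

open Set

theorem monotoneOn_Ici_of_hasDerivAt_nonneg {g g' : ℝ → ℝ} {a : ℝ}
    (hg : ∀ x, a ≤ x → HasDerivAt g (g' x) x) (hg' : ∀ x, a ≤ x → 0 ≤ g' x) :
    MonotoneOn g (Ici a) :=
  monotoneOn_of_hasDerivWithinAt_nonneg (convex_Ici a)
    (fun x hx => (hg x hx).continuousAt.continuousWithinAt)
    (fun x hx => (hg x (interior_subset hx)).hasDerivWithinAt)
    (fun x hx => hg' x (interior_subset hx))

theorem antitoneOn_Ici_of_hasDerivAt_nonpos {g g' : ℝ → ℝ} {a : ℝ}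
    (hg : ∀ x, a ≤ x → HasDerivAt g (g' x) x) (hg' : ∀ x, a ≤ x → g' x ≤ 0) :
    AntitoneOn g (Ici a) :=
  antitoneOn_of_hasDerivWithinAt_nonpos (convex_Ici a)
    (fun x hx => (hg x hx).continuousAt.continuousWithinAt)
    (fun x hx => (hg x (interior_subset hx)).hasDerivWithinAt)
    (fun x hx => hg' x (interior_subset hx))

theorem le_of_hasDerivAt_partial_nonneg_nonpos {f fS fI : ℝ → ℝ → ℝ}
    (hdS : ∀ S I, 0 ≤ S → 0 ≤ I → HasDerivAt (fun x => f x I) (fS S I) S)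
    (hdI : ∀ S I, 0 ≤ S → 0 ≤ I → HasDerivAt (fun y => f S y) (fI S I) I)
    (hS : ∀ S I, 0 ≤ S → 0 ≤ I → 0 ≤ fS S I) (hI : ∀ S I, 0 ≤ S → 0 ≤ I → fI S I ≤ 0)
    {S S' I I' : ℝ} (hS' : 0 ≤ S') (hSS : S' ≤ S) (hI0 : 0 ≤ I) (hII : I ≤ I') :
    f S' I' ≤ f S I :=
  calc f S' I' ≤ f S I' :=
        monotoneOn_Ici_of_hasDerivAt_nonneg (fun x hx => hdS x I' hx (hI0.trans hII))
          (fun x hx => hS x I' hx (hI0.trans hII)) hS' (hS'.trans hSS) hSS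
    _ ≤ f S I :=
        antitoneOn_Ici_of_hasDerivAt_nonpos (fun y hy => hdI S y (hS'.trans hSS) hy)
          (fun y hy => hI S y (hS'.trans hSS) hy) hI0 (hI0.trans hII) hII

theorem hasDerivAt_zero_of_eq_id_mul {F f : ℝ → ℝ} {f' : ℝ} (hF : ∀ y, F y = y * f y)
    (hf : HasDerivAt f f' 0) : HasDerivAt F (f 0) 0 := by
  have h := (hasDerivAt_id (0 : ℝ)).mul hf
  simp only [id_eq, one_mul, zero_mul, add_zero] at h
  exact (funext hF : F = _) ▸ h

namespace FluStrain2

variable {Λ r μ k α : ℝ}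

noncomputable def equilibriumS (Λ r μ k α I : ℝ) : ℝ :=
  (Λ - α * I) * (μ + k * I) / (μ * (r + μ + k * I))

noncomputable def equilibriumV (Λ r μ k α I : ℝ) : ℝ :=
  r * (Λ - α * I) / (μ * (r + μ + k * I))

noncomputable def equilibriumResidual (Λ r μ k α : ℝ) (f : ℝ → ℝ → ℝ) (I : ℝ) : ℝ :=
  f (equilibriumS Λ r μ k α I) I + k * equilibriumV Λ r μ k α I - α

def IsEquilibrium (Λ r μ k α lam : ℝ) (F : ℝ → ℝ → ℝ) (S V I : ℝ) : Prop :=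
  0 < S ∧ 0 < V ∧ 0 < I ∧ Λ - F S I - lam * S = 0 ∧ r * S - (μ + k * I) * V = 0 ∧
    F S I + k * I * V - α * I = 0

/-- For `I ≥ 0` the quadratic condition holds exactly from its positive root
`(-(r * α) - α * μ + √(r * α * (r * α + α * μ + k * Λ))) / (α * k)` on. -/
def antitoneRegion (Λ r μ k α : ℝ) : Set ℝ :=
  {I | 0 ≤ I ∧ k * Λ * r - α * μ * (r + μ) ≤ α * k ^ 2 * I ^ 2 + 2 * α * k * (r + μ) * I}

theorem denominator_pos (hr : 0 < r) (hμ : 0 < μ) (hk : 0 < k) {I : ℝ} (hI : 0 ≤ I) :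
    0 < μ * (r + μ + k * I) := by
  have := mul_nonneg hk.le hI
  positivity

theorem equilibriumS_zero (hμ : 0 < μ) : equilibriumS Λ r μ k α 0 = Λ / (r + μ) := by
  rw [equilibriumS, mul_zero, sub_zero, mul_zero, add_zero, add_zero, mul_comm μ,
    mul_div_mul_right _ _ hμ.ne']

theorem equilibriumV_zero : equilibriumV Λ r μ k α 0 = r * Λ / (μ * (r + μ)) := by
  simp [equilibriumV]

theorem equilibriumResidual_zero (hμ : 0 < μ) (f : ℝ → ℝ → ℝ) :
    equilibriumResidual Λ r μ k α f 0 = f (Λ / (r + μ)) 0 + k * r * Λ / (μ * (r + μ)) - α := by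
  rw [equilibriumResidual, equilibriumS_zero hμ, equilibriumV_zero, mul_div_assoc']
  ring_nf

theorem equilibriumResidual_div (hα : 0 < α) (f : ℝ → ℝ → ℝ) :
    equilibriumResidual Λ r μ k α f (Λ / α) = f 0 (Λ / α) - α := by
  have h : Λ - α * (Λ / α) = 0 := by rw [mul_div_cancel₀ _ hα.ne', sub_self]
  simp [equilibriumResidual, equilibriumS, equilibriumV, h]

theorem equilibriumS_nonneg (hr : 0 < r) (hμ : 0 < μ) (hk : 0 < k) (hα : 0 < α) {I : ℝ}
    (hI : I ∈ Icc 0 (Λ / α)) : 0 ≤ equilibriumS Λ r μ k α I := by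
  have hαI : α * I ≤ Λ := (le_div_iff₀' hα).1 hI.2
  have := mul_nonneg hk.le hI.1
  unfold equilibriumS
  apply div_nonneg (mul_nonneg (by linarith) (by linarith)) (denominator_pos hr hμ hk hI.1).le

theorem equilibriumS_antitoneOn (hr : 0 < r) (hμ : 0 < μ) (hk : 0 < k) (hα : 0 < α) :
    AntitoneOn (equilibriumS Λ r μ k α) (antitoneRegion Λ r μ k α) := by
  rintro a ⟨ha, hQa⟩ b ⟨hb, -⟩ hab
  have hQ : 0 ≤ α * k ^ 2 * a * b + α * (r + μ) * k * (a + b) - (k * Λ * r - α * μ * (r + μ)) := by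
    nlinarith [mul_nonneg (mul_nonneg (mul_nonneg hα.le (sq_nonneg k)) ha) (sub_nonneg.2 hab),
      mul_nonneg (mul_nonneg (mul_nonneg hα.le (add_pos hr hμ).le) hk.le) (sub_nonneg.2 hab)]
  unfold equilibriumS
  rw [div_le_div_iff₀ (denominator_pos hr hμ hk hb) (denominator_pos hr hμ hk ha)]
  linear_combination μ * (b - a) * hQ

theorem equilibriumV_strictAntiOn (hΛ : 0 < Λ) (hr : 0 < r) (hμ : 0 < μ) (hk : 0 < k)
    (hα : 0 < α) : StrictAntiOn (equilibriumV Λ r μ k α) (Ici 0) := by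
  intro a ha b hb hab
  unfold equilibriumV
  rw [div_lt_div_iff₀ (denominator_pos hr hμ hk hb) (denominator_pos hr hμ hk ha)]
  have h : 0 < r * μ * (b - a) * (k * Λ + α * (r + μ)) := by
    have := sub_pos.2 hab
    positivity
  linear_combination h

theorem isEquilibrium_iff {F f : ℝ → ℝ → ℝ} (hF : ∀ S I, F S I = I * f S I)
    (hr : 0 < r) (hμ : 0 < μ) (hk : 0 < k) {S V I : ℝ} :
    IsEquilibrium Λ r μ k α (r + μ) F S V I ↔
      0 < I ∧ α * I < Λ ∧ S = equilibriumS Λ r μ k α I ∧ V = equilibriumV Λ r μ k α I ∧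
        equilibriumResidual Λ r μ k α f I = 0 := by
  simp only [IsEquilibrium, hF]
  constructor
  · rintro ⟨hS, hV, hI, e1, e2, e3⟩
    have hD := denominator_pos hr hμ hk hI.le
    have hM : 0 < μ + k * I := by have := mul_pos hk hI; linarith
    have hres : f S I + k * V - α = 0 :=
      (mul_eq_zero.1 (by linear_combination e3)).resolve_left hI.ne'
    have hSD : S * (μ * (r + μ + k * I)) = (Λ - α * I) * (μ + k * I) := by
      linear_combination (-(μ + k * I)) * e1 - (μ + k * I) * e3 - k * I * e2
    have hαI : α * I < Λ := by
      have := pos_of_mul_pos_left (hSD ▸ mul_pos hS hD) hM.le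
      linarith
    have hSeq : S = equilibriumS Λ r μ k α I := (eq_div_iff hD.ne').2 hSD
    have hVeq : V = equilibriumV Λ r μ k α I := by
      rw [equilibriumV, eq_div_iff hD.ne']
      apply mul_right_cancel₀ hM.ne'
      linear_combination (-(μ * (r + μ + k * I))) * e2 + r * hSD
    refine ⟨hI, hαI, hSeq, hVeq, ?_⟩
    rw [equilibriumResidual, ← hSeq, ← hVeq, hres]
  · rintro ⟨hI, hαI, rfl, rfl, hres⟩
    have hD := denominator_pos hr hμ hk hI.le
    have hM : 0 < μ + k * I := by have := mul_pos hk hI; linarith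
    have hΛI : 0 < Λ - α * I := sub_pos.2 hαI
    rw [equilibriumResidual] at hres
    refine ⟨div_pos (mul_pos hΛI hM) hD, div_pos (mul_pos hr hΛI) hD, hI, ?_, ?_, ?_⟩
    · rw [show f (equilibriumS Λ r μ k α I) I = α - k * equilibriumV Λ r μ k α I by linarith]
      unfold equilibriumS equilibriumV
      field_simp
      ring
    · unfold equilibriumS equilibriumV
      field_simp
      ring
    · linear_combination I * hres

theorem mem_antitoneRegion_of_nonpos (hr : 0 < r) (hμ : 0 < μ) (hk : 0 < k) (hα : 0 < α)
    (hΔ : -(α * r * μ) - α * μ ^ 2 + k * Λ * r ≤ 0) {I : ℝ} (hI : 0 ≤ I) :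
    I ∈ antitoneRegion Λ r μ k α := by
  refine ⟨hI, ?_⟩
  have : 0 ≤ α * k ^ 2 * I ^ 2 + 2 * α * k * (r + μ) * I := by positivity
  linarith

theorem mem_antitoneRegion_of_le (hΛ : 0 < Λ) (hr : 0 < r) (hμ : 0 < μ) (hk : 0 < k) (hα : 0 < α)
    {I : ℝ} (hI0 : 0 ≤ I)
    (hI : (-(r * α) - α * μ + √(r * α * (r * α + α * μ + k * Λ))) / (α * k) ≤ I) :
    I ∈ antitoneRegion Λ r μ k α := by
  refine ⟨hI0, ?_⟩
  have hsqrt : √(r * α * (r * α + α * μ + k * Λ)) ≤ α * k * I + r * α + α * μ := by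
    linarith [(div_le_iff₀ (mul_pos hα hk)).1 hI]
  have hsq : r * α * (r * α + α * μ + k * Λ) ≤ (α * k * I + r * α + α * μ) ^ 2 := by
    have := hα.le
    calc r * α * (r * α + α * μ + k * Λ) = √(r * α * (r * α + α * μ + k * Λ)) ^ 2 :=
          (Real.sq_sqrt (by positivity)).symm
      _ ≤ _ := pow_le_pow_left₀ (Real.sqrt_nonneg _) hsqrt 2
  -- `hsq` is `α` times the claim
  nlinarith

theorem equilibriumResidual_strictAntiOn {f : ℝ → ℝ → ℝ}
    (hf : ∀ ⦃S S' I I'⦄, 0 ≤ S' → S' ≤ S → 0 ≤ I → I ≤ I' → f S' I' ≤ f S I)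
    (hΛ : 0 < Λ) (hr : 0 < r) (hμ : 0 < μ) (hk : 0 < k) (hα : 0 < α) :
    StrictAntiOn (equilibriumResidual Λ r μ k α f) (antitoneRegion Λ r μ k α ∩ Icc 0 (Λ / α)) := by
  rintro a ⟨ha, ha'⟩ b ⟨hb, hb'⟩ hab
  have hS := hf (equilibriumS_nonneg hr hμ hk hα hb')
    (equilibriumS_antitoneOn hr hμ hk hα ha hb hab.le) ha'.1 hab.le
  have hV := equilibriumV_strictAntiOn hΛ hr hμ hk hα ha'.1 hb'.1 hab
  have hkV := mul_lt_mul_of_pos_left hV hk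
  unfold equilibriumResidual
  linarith

theorem continuousOn_equilibriumResidual {f : ℝ → ℝ → ℝ}
    (hcont : ContinuousOn (fun p : ℝ × ℝ => f p.1 p.2) {p | 0 ≤ p.1 ∧ 0 ≤ p.2})
    (hr : 0 < r) (hμ : 0 < μ) (hk : 0 < k) (hα : 0 < α) :
    ContinuousOn (equilibriumResidual Λ r μ k α f) (Icc 0 (Λ / α)) := by
  have hD : ∀ I ∈ Icc 0 (Λ / α), μ * (r + μ + k * I) ≠ 0 := fun I hI =>
    (denominator_pos hr hμ hk hI.1).ne'
  have hSc : ContinuousOn (equilibriumS Λ r μ k α) (Icc 0 (Λ / α)) :=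
    ContinuousOn.div (by fun_prop) (by fun_prop) hD
  have hVc : ContinuousOn (equilibriumV Λ r μ k α) (Icc 0 (Λ / α)) :=
    ContinuousOn.div (by fun_prop) (by fun_prop) hD
  have hfc : ContinuousOn (fun I => f (equilibriumS Λ r μ k α I) I) (Icc 0 (Λ / α)) :=
    hcont.comp (hSc.prodMk continuousOn_id) fun I hI => ⟨equilibriumS_nonneg hr hμ hk hα hI, hI.1⟩
  exact (hfc.add (continuousOn_const.mul hVc)).sub continuousOn_const

theorem exists_isEquilibrium_of_equilibriumResidual_pos {F f : ℝ → ℝ → ℝ}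
    (hF : ∀ S I, F S I = I * f S I) (hF0 : F 0 (Λ / α) = 0)
    (hcont : ContinuousOn (fun p : ℝ × ℝ => f p.1 p.2) {p | 0 ≤ p.1 ∧ 0 ≤ p.2})
    (hΛ : 0 < Λ) (hr : 0 < r) (hμ : 0 < μ) (hk : 0 < k) (hα : 0 < α)
    (h0 : 0 < equilibriumResidual Λ r μ k α f 0) :
    ∃ S V I, IsEquilibrium Λ r μ k α (r + μ) F S V I := by
  have hc : 0 < Λ / α := div_pos hΛ hα
  have hend : equilibriumResidual Λ r μ k α f (Λ / α) = -α := by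
    rw [equilibriumResidual_div hα, ← zero_sub]
    congr 1
    exact (mul_eq_zero.1 ((hF _ _).symm.trans hF0)).resolve_left hc.ne'
  obtain ⟨I, hI, hres⟩ := intermediate_value_Icc' hc.le
    (continuousOn_equilibriumResidual hcont hr hμ hk hα) ⟨by linarith, h0.le⟩
  have hI0 : 0 < I := lt_of_le_of_ne hI.1 (by rintro rfl; linarith)
  have hIc : I < Λ / α := lt_of_le_of_ne hI.2 (by rintro rfl; linarith)
  exact ⟨_, _, I, (isEquilibrium_iff hF hr hμ hk).2
    ⟨hI0, (lt_div_iff₀' hα).1 hIc, rfl, rfl, hres⟩⟩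

theorem equilibriumResidual_zero_pos_of_isEquilibrium {F f : ℝ → ℝ → ℝ}
    (hF : ∀ S I, F S I = I * f S I) (hFnn : ∀ S I, 0 ≤ S → 0 ≤ I → 0 ≤ F S I)
    (hf : ∀ ⦃S S' I I'⦄, 0 ≤ S' → S' ≤ S → 0 ≤ I → I ≤ I' → f S' I' ≤ f S I)
    (hΛ : 0 < Λ) (hr : 0 < r) (hμ : 0 < μ) (hk : 0 < k) (hα : 0 < α) {S V I : ℝ}
    (h : IsEquilibrium Λ r μ k α (r + μ) F S V I) :
    0 < equilibriumResidual Λ r μ k α f 0 := by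
  obtain ⟨hS, -, hI, e1, -⟩ := id h
  have hS0 : S ≤ equilibriumS Λ r μ k α 0 := by
    rw [equilibriumS_zero hμ, le_div_iff₀ (by positivity)]
    linarith [hFnn S I hS.le hI.le]
  obtain ⟨-, -, rfl, rfl, hres⟩ := (isEquilibrium_iff hF hr hμ hk).1 h
  have hf0 := hf hS.le hS0 le_rfl hI.le
  have hV := equilibriumV_strictAntiOn hΛ hr hμ hk hα self_mem_Ici hI.le hI
  have hkV := mul_lt_mul_of_pos_left hV hk
  unfold equilibriumResidual at hres ⊢
  linarith

theorem IsEquilibrium.eq_of_mem_antitoneRegion {F f : ℝ → ℝ → ℝ}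
    (hF : ∀ S I, F S I = I * f S I)
    (hf : ∀ ⦃S S' I I'⦄, 0 ≤ S' → S' ≤ S → 0 ≤ I → I ≤ I' → f S' I' ≤ f S I)
    (hΛ : 0 < Λ) (hr : 0 < r) (hμ : 0 < μ) (hk : 0 < k) (hα : 0 < α) {S V I S' V' I' : ℝ}
    (h : IsEquilibrium Λ r μ k α (r + μ) F S V I)
    (h' : IsEquilibrium Λ r μ k α (r + μ) F S' V' I')
    (hI : I ∈ antitoneRegion Λ r μ k α) (hI' : I' ∈ antitoneRegion Λ r μ k α) :
    S = S' ∧ V = V' ∧ I = I' := by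
  obtain ⟨-, hαI, rfl, rfl, hres⟩ := (isEquilibrium_iff hF hr hμ hk).1 h
  obtain ⟨-, hαI', rfl, rfl, hres'⟩ := (isEquilibrium_iff hF hr hμ hk).1 h'
  have hII : I = I' := (equilibriumResidual_strictAntiOn hf hΛ hr hμ hk hα).injOn
    ⟨hI, hI.1, (le_div_iff₀' hα).2 hαI.le⟩ ⟨hI', hI'.1, (le_div_iff₀' hα).2 hαI'.le⟩
    (hres.trans hres'.symm)
  subst hII
  exact ⟨rfl, rfl, rfl⟩

end FluStrain2

open FluStrain2 in
theorem strain2_equilibrium_exists_iff_general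
    (Λ r μ k α₂ lam : ℝ)
    (hΛ : 0 < Λ) (hr : 0 < r) (hμ : 0 < μ) (hk : 0 < k)
    (hα₂ : μ < α₂) (hlam : lam = r + μ)
    (F₂ f₂ F₂I f₂S f₂I : ℝ → ℝ → ℝ)
    (hF₂nn : ∀ S I : ℝ, 0 ≤ S → 0 ≤ I → 0 ≤ F₂ S I)
    (hf₂C1 : ContDiffOn ℝ 1 (fun p : ℝ × ℝ => f₂ p.1 p.2) {p : ℝ × ℝ | 0 ≤ p.1 ∧ 0 ≤ p.2})
    (hH1₂ : ∀ S I : ℝ, F₂ S I = I * f₂ S I)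
    (hF₂zero : ∀ S I : ℝ, 0 ≤ S → 0 ≤ I → F₂ 0 I = 0 ∧ F₂ S 0 = 0)
    (hdF₂I : ∀ S I : ℝ, 0 ≤ S → 0 ≤ I → HasDerivAt (fun y => F₂ S y) (F₂I S I) I)
    (hdf₂S : ∀ S I : ℝ, 0 ≤ S → 0 ≤ I → HasDerivAt (fun x => f₂ x I) (f₂S S I) S)
    (hdf₂I : ∀ S I : ℝ, 0 ≤ S → 0 ≤ I → HasDerivAt (fun y => f₂ S y) (f₂I S I) I)
    (hH2f₂S : ∀ S I : ℝ, 0 ≤ S → 0 ≤ I → 0 < f₂S S I)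
    (hH2f₂I : ∀ S I : ℝ, 0 ≤ S → 0 ≤ I → f₂I S I ≤ 0)
    (R₂ : ℝ) (hR₂ : R₂ = F₂I (Λ / lam) 0 / α₂ + (k * r * Λ) / (α₂ * μ * lam)) :
    ((∃ St Vt It : ℝ, 0 < St ∧ 0 < Vt ∧ 0 < It ∧
        Λ - F₂ St It - lam * St = 0 ∧ r * St - (μ + k * It) * Vt = 0 ∧
        F₂ St It + k * It * Vt - α₂ * It = 0) ↔ 1 < R₂) ∧
    (-(α₂ * r * μ) - α₂ * μ ^ 2 + k * Λ * r < 0 →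
      ∀ St Vt It St' Vt' It' : ℝ,
        (0 < St ∧ 0 < Vt ∧ 0 < It ∧ Λ - F₂ St It - lam * St = 0 ∧
          r * St - (μ + k * It) * Vt = 0 ∧ F₂ St It + k * It * Vt - α₂ * It = 0) →
        (0 < St' ∧ 0 < Vt' ∧ 0 < It' ∧ Λ - F₂ St' It' - lam * St' = 0 ∧
          r * St' - (μ + k * It') * Vt' = 0 ∧ F₂ St' It' + k * It' * Vt' - α₂ * It' = 0) →
        St = St' ∧ Vt = Vt' ∧ It = It') ∧
    (0 < -(α₂ * r * μ) - α₂ * μ ^ 2 + k * Λ * r →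
      ∀ St Vt It St' Vt' It' : ℝ,
        (0 < St ∧ 0 < Vt ∧ 0 < It ∧ Λ - F₂ St It - lam * St = 0 ∧
          r * St - (μ + k * It) * Vt = 0 ∧ F₂ St It + k * It * Vt - α₂ * It = 0 ∧
          It ∈ Set.Icc ((-(r * α₂) - α₂ * μ +
            Real.sqrt (r * α₂ * (r * α₂ + α₂ * μ + k * Λ))) / (α₂ * k)) (Λ / α₂)) →
        (0 < St' ∧ 0 < Vt' ∧ 0 < It' ∧ Λ - F₂ St' It' - lam * St' = 0 ∧
          r * St' - (μ + k * It') * Vt' = 0 ∧ F₂ St' It' + k * It' * Vt' - α₂ * It' = 0 ∧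
          It' ∈ Set.Icc ((-(r * α₂) - α₂ * μ +
            Real.sqrt (r * α₂ * (r * α₂ + α₂ * μ + k * Λ))) / (α₂ * k)) (Λ / α₂)) →
        St = St' ∧ Vt = Vt' ∧ It = It') := by
  subst hlam
  have hα : 0 < α₂ := hμ.trans hα₂
  have hf : ∀ ⦃S S' I I'⦄, 0 ≤ S' → S' ≤ S → 0 ≤ I → I ≤ I' → f₂ S' I' ≤ f₂ S I :=
    fun _ _ _ _ => le_of_hasDerivAt_partial_nonneg_nonpos hdf₂S hdf₂I
      (fun S I hS hI => (hH2f₂S S I hS hI).le) hH2f₂I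
  have hS0 : 0 ≤ Λ / (r + μ) := by positivity
  have hσ : F₂I (Λ / (r + μ)) 0 = f₂ (Λ / (r + μ)) 0 :=
    (hdF₂I _ 0 hS0 le_rfl).unique
      (hasDerivAt_zero_of_eq_id_mul (hH1₂ _) (hdf₂I _ 0 hS0 le_rfl))
  have hR : 1 < R₂ ↔ 0 < equilibriumResidual Λ r μ k α₂ f₂ 0 := by
    have : R₂ = (f₂ (Λ / (r + μ)) 0 + k * r * Λ / (μ * (r + μ))) / α₂ := by
      rw [hR₂, hσ]
      field_simp
    rw [this, one_lt_div hα, equilibriumResidual_zero hμ, sub_pos]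
  refine ⟨⟨fun ⟨S, V, I, h⟩ => hR.2 ?_, fun h => ?_⟩, ?_, ?_⟩
  · exact equilibriumResidual_zero_pos_of_isEquilibrium hH1₂ hF₂nn hf hΛ hr hμ hk hα h
  · exact exists_isEquilibrium_of_equilibriumResidual_pos hH1₂
      (hF₂zero 0 _ le_rfl (by positivity)).1 hf₂C1.continuousOn hΛ hr hμ hk hα (hR.1 h)
  · intro hΔ S V I S' V' I' h h'
    exact IsEquilibrium.eq_of_mem_antitoneRegion hH1₂ hf hΛ hr hμ hk hα h h'
      (mem_antitoneRegion_of_nonpos hr hμ hk hα hΔ.le h.2.2.1.le)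
      (mem_antitoneRegion_of_nonpos hr hμ hk hα hΔ.le h'.2.2.1.le)
  · rintro - S V I S' V' I' ⟨hS, hV, hI, e1, e2, e3, hmem⟩ ⟨hS', hV', hI', e1', e2', e3', hmem'⟩
    exact IsEquilibrium.eq_of_mem_antitoneRegion hH1₂ hf hΛ hr hμ hk hα
      ⟨hS, hV, hI, e1, e2, e3⟩ ⟨hS', hV', hI', e1', e2', e3'⟩
      (mem_antitoneRegion_of_le hΛ hr hμ hk hα hI.le hmem.1)
      (mem_antitoneRegion_of_le hΛ hr hμ hk hα hI'.le hmem'.1)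

/-- Theorem 4.5(2): under H1–H2, system (3) admits a single-strain-2
equilibrium iff R₂ = σ₂/α₂ + krΛ/(α₂μλ) > 1, with σ₂ = ∂F₂/∂I(S⁰,0). If
−α₂rμ − α₂μ² + kΛr < 0 it is unique; if −α₂rμ − α₂μ² + kΛr > 0 there is at most one
such equilibrium with Ĩ₂ in the stated interval. -/
theorem strain2_equilibrium_exists_iff
    (Λ r μ k α₁ α₂ lam : ℝ)
    (hΛ : 0 < Λ) (hr : 0 < r) (hμ : 0 < μ) (hk : 0 < k)
    (hα₁ : μ < α₁) (hα₂ : μ < α₂) (hlam : lam = r + μ)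
    (F₁ F₂ f₁ f₂ F₁S F₁I F₂S F₂I f₁S f₁I f₂S f₂I : ℝ → ℝ → ℝ)
    (hF₁nn : ∀ S I : ℝ, 0 ≤ S → 0 ≤ I → 0 ≤ F₁ S I)
    (hF₂nn : ∀ S I : ℝ, 0 ≤ S → 0 ≤ I → 0 ≤ F₂ S I)
    (hF₁C1 : ContDiffOn ℝ 1 (fun p : ℝ × ℝ => F₁ p.1 p.2) {p : ℝ × ℝ | 0 ≤ p.1 ∧ 0 ≤ p.2})
    (hF₂C1 : ContDiffOn ℝ 1 (fun p : ℝ × ℝ => F₂ p.1 p.2) {p : ℝ × ℝ | 0 ≤ p.1 ∧ 0 ≤ p.2})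
    (hf₁C1 : ContDiffOn ℝ 1 (fun p : ℝ × ℝ => f₁ p.1 p.2) {p : ℝ × ℝ | 0 ≤ p.1 ∧ 0 ≤ p.2})
    (hf₂C1 : ContDiffOn ℝ 1 (fun p : ℝ × ℝ => f₂ p.1 p.2) {p : ℝ × ℝ | 0 ≤ p.1 ∧ 0 ≤ p.2})
    (hH1₁ : ∀ S I : ℝ, F₁ S I = I * f₁ S I)
    (hH1₂ : ∀ S I : ℝ, F₂ S I = I * f₂ S I)
    (hF₁zero : ∀ S I : ℝ, 0 ≤ S → 0 ≤ I → F₁ 0 I = 0 ∧ F₁ S 0 = 0)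
    (hF₂zero : ∀ S I : ℝ, 0 ≤ S → 0 ≤ I → F₂ 0 I = 0 ∧ F₂ S 0 = 0)
    (hdF₁S : ∀ S I : ℝ, 0 ≤ S → 0 ≤ I → HasDerivAt (fun x => F₁ x I) (F₁S S I) S)
    (hdF₁I : ∀ S I : ℝ, 0 ≤ S → 0 ≤ I → HasDerivAt (fun y => F₁ S y) (F₁I S I) I)
    (hdF₂S : ∀ S I : ℝ, 0 ≤ S → 0 ≤ I → HasDerivAt (fun x => F₂ x I) (F₂S S I) S)
    (hdF₂I : ∀ S I : ℝ, 0 ≤ S → 0 ≤ I → HasDerivAt (fun y => F₂ S y) (F₂I S I) I)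
    (hdf₁S : ∀ S I : ℝ, 0 ≤ S → 0 ≤ I → HasDerivAt (fun x => f₁ x I) (f₁S S I) S)
    (hdf₁I : ∀ S I : ℝ, 0 ≤ S → 0 ≤ I → HasDerivAt (fun y => f₁ S y) (f₁I S I) I)
    (hdf₂S : ∀ S I : ℝ, 0 ≤ S → 0 ≤ I → HasDerivAt (fun x => f₂ x I) (f₂S S I) S)
    (hdf₂I : ∀ S I : ℝ, 0 ≤ S → 0 ≤ I → HasDerivAt (fun y => f₂ S y) (f₂I S I) I)
    (hH2f₁S : ∀ S I : ℝ, 0 ≤ S → 0 ≤ I → 0 < f₁S S I)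
    (hH2f₁I : ∀ S I : ℝ, 0 ≤ S → 0 ≤ I → f₁I S I ≤ 0)
    (hH2f₂S : ∀ S I : ℝ, 0 ≤ S → 0 ≤ I → 0 < f₂S S I)
    (hH2f₂I : ∀ S I : ℝ, 0 ≤ S → 0 ≤ I → f₂I S I ≤ 0)
    (R₂ : ℝ) (hR₂ : R₂ = F₂I (Λ / lam) 0 / α₂ + (k * r * Λ) / (α₂ * μ * lam)) :
    ((∃ St Vt It : ℝ, 0 < St ∧ 0 < Vt ∧ 0 < It ∧
        Λ - F₂ St It - lam * St = 0 ∧ r * St - (μ + k * It) * Vt = 0 ∧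
        F₂ St It + k * It * Vt - α₂ * It = 0) ↔ 1 < R₂) ∧
    (-(α₂ * r * μ) - α₂ * μ ^ 2 + k * Λ * r < 0 →
      ∀ St Vt It St' Vt' It' : ℝ,
        (0 < St ∧ 0 < Vt ∧ 0 < It ∧ Λ - F₂ St It - lam * St = 0 ∧
          r * St - (μ + k * It) * Vt = 0 ∧ F₂ St It + k * It * Vt - α₂ * It = 0) →
        (0 < St' ∧ 0 < Vt' ∧ 0 < It' ∧ Λ - F₂ St' It' - lam * St' = 0 ∧
          r * St' - (μ + k * It') * Vt' = 0 ∧ F₂ St' It' + k * It' * Vt' - α₂ * It' = 0) →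
        St = St' ∧ Vt = Vt' ∧ It = It') ∧
    (0 < -(α₂ * r * μ) - α₂ * μ ^ 2 + k * Λ * r →
      ∀ St Vt It St' Vt' It' : ℝ,
        (0 < St ∧ 0 < Vt ∧ 0 < It ∧ Λ - F₂ St It - lam * St = 0 ∧
          r * St - (μ + k * It) * Vt = 0 ∧ F₂ St It + k * It * Vt - α₂ * It = 0 ∧
          It ∈ Set.Icc ((-(r * α₂) - α₂ * μ +
            Real.sqrt (r * α₂ * (r * α₂ + α₂ * μ + k * Λ))) / (α₂ * k)) (Λ / α₂)) →
        (0 < St' ∧ 0 < Vt' ∧ 0 < It' ∧ Λ - F₂ St' It' - lam * St' = 0 ∧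
          r * St' - (μ + k * It') * Vt' = 0 ∧ F₂ St' It' + k * It' * Vt' - α₂ * It' = 0 ∧
          It' ∈ Set.Icc ((-(r * α₂) - α₂ * μ +
            Real.sqrt (r * α₂ * (r * α₂ + α₂ * μ + k * Λ))) / (α₂ * k)) (Λ / α₂)) →
        St = St' ∧ Vt = Vt' ∧ It = It') :=
  strain2_equilibrium_exists_iff_general Λ r μ k α₂ lam hΛ hr hμ hk hα₂ hlam F₂ f₂ F₂I f₂S f₂I hF₂nn
    hf₂C1 hH1₂ hF₂zero hdF₂I hdf₂S hdf₂I hH2f₂S hH2f₂I R₂ hR₂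
end

section
/- Under hypotheses H1–H2, if in addition (∂F₂/∂S)(S, I₂) ≤ I₂ for all S, I₂ ≥ 0, then system (3) admits a unique single-strain-2 equilibrium, i.e. a unique triple (S̃, Ṽ₁, Ĩ₂) with S̃, Ṽ₁, Ĩ₂ > 0 satisfying Λ − F₂(S̃, Ĩ₂) − λS̃ = 0, rS̃ − (μ + kĨ₂)Ṽ₁ = 0 and F₂(S̃, Ĩ₂) + kĨ₂Ṽ₁ − α₂Ĩ₂ = 0, if and only if R₂ > 1. -/
/-!
Writing `F₂ S I = I * f₂ S I`, an equilibrium solves `I f₂(S, I) + λS = Λ`, `(μ + kI)V = rS` and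
`f₂(S, I) + kV = α₂`. As `f₂` increases in `S`, the first equation has for each `I ≥ 0` a unique
root `S = φ(I) ∈ (0, Λ/λ]`, and `φ` is continuous. Along this curve
`Φ(I) = f₂(φ I, I) + k r φ(I) / (μ + kI)` starts at `Φ(0) = α₂ R₂` and drops below `α₂` for large
`I`, so the intermediate value theorem produces an equilibrium when `R₂ > 1`. Conversely an
equilibrium has `S ≤ Λ/λ`, and monotonicity of `f₂` gives `α₂ < Φ(0)`.

Two equilibria with `I < I'` cannot coexist: if `S' ≤ S` then `V' < V` and the third equation
fails, while if `S < S'` the first two equations force `(r + μ)(μ + kI') < k r I'`.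
-/

open Set Filter Topology

theorem continuousWithinAt_implicit_of_strictMonoOn {X : Type*} [TopologicalSpace X]
    {g : ℝ → X → ℝ} {φ : X → ℝ} {s : Set X} {t : Set ℝ} {x₀ : X} {c : ℝ}
    (hmono : ∀ x ∈ s, StrictMonoOn (fun y => g y x) t)
    (hcont : ∀ y ∈ t, ContinuousWithinAt (g y) s x₀)
    (hφt : ∀ x ∈ s, φ x ∈ t) (hφ : ∀ x ∈ s, g (φ x) x = c)
    (hx₀ : x₀ ∈ s) (ht : t ∈ 𝓝 (φ x₀)) : ContinuousWithinAt φ s x₀ := by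
  refine tendsto_order.2 ⟨fun a ha => ?_, fun b hb => ?_⟩
  · obtain ⟨y, ⟨hay, hy⟩, hyt⟩ := 
      Filter.nonempty_of_mem (inter_mem (Ioo_mem_nhdsLT ha) (nhdsWithin_le_nhds ht))
    have hgy : g y x₀ < c := hφ x₀ hx₀ ▸ (hmono x₀ hx₀).lt_iff_lt hyt (hφt x₀ hx₀) |>.2 hy
    filter_upwards [(hcont y hyt).eventually_lt_const hgy, self_mem_nhdsWithin] with x hx hxs
    exact hay.trans (((hmono x hxs).lt_iff_lt hyt (hφt x hxs)).1 (hφ x hxs ▸ hx))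
  · obtain ⟨y, ⟨hy, hyb⟩, hyt⟩ := 
      Filter.nonempty_of_mem (inter_mem (Ioo_mem_nhdsGT hb) (nhdsWithin_le_nhds ht))
    have hgy : c < g y x₀ := hφ x₀ hx₀ ▸ (hmono x₀ hx₀).lt_iff_lt (hφt x₀ hx₀) hyt |>.2 hy
    filter_upwards [(hcont y hyt).eventually_const_lt hgy, self_mem_nhdsWithin] with x hx hxs
    exact (((hmono x hxs).lt_iff_lt (hφt x hxs) hyt).1 (hφ x hxs ▸ hx)).trans hyb

theorem monotoneOn_of_hasDerivAt_nonneg {D : Set ℝ} (hD : Convex ℝ D) {g g' : ℝ → ℝ}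
    (hg : ∀ x ∈ D, HasDerivAt g (g' x) x) (hg' : ∀ x ∈ D, 0 ≤ g' x) : MonotoneOn g D :=
  monotoneOn_of_hasDerivWithinAt_nonneg hD (fun x hx => (hg x hx).continuousAt.continuousWithinAt)
    (fun x hx => (hg x (interior_subset hx)).hasDerivWithinAt)
    fun x hx => hg' x (interior_subset hx)

theorem antitoneOn_of_hasDerivAt_nonpos_s7 {D : Set ℝ} (hD : Convex ℝ D) {g g' : ℝ → ℝ}
    (hg : ∀ x ∈ D, HasDerivAt g (g' x) x) (hg' : ∀ x ∈ D, g' x ≤ 0) : AntitoneOn g D :=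
  antitoneOn_of_hasDerivWithinAt_nonpos hD (fun x hx => (hg x hx).continuousAt.continuousWithinAt)
    (fun x hx => (hg x (interior_subset hx)).hasDerivWithinAt)
    fun x hx => hg' x (interior_subset hx)

def IsStrain2Equilibrium (Λ r μ k α₂ lam : ℝ) (F : ℝ → ℝ → ℝ) (S V I : ℝ) : Prop :=
  0 < S ∧ 0 < V ∧ 0 < I ∧ Λ - F S I - lam * S = 0 ∧ r * S - (μ + k * I) * V = 0 ∧
    F S I + k * I * V - α₂ * I = 0

section Strain2

variable {Λ r μ k α lam S V I S' V' I' : ℝ} {f : ℝ → ℝ → ℝ}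

theorem isStrain2Equilibrium_mul_iff :
    IsStrain2Equilibrium Λ r μ k α lam (fun S I => I * f S I) S V I ↔
      0 < S ∧ 0 < V ∧ 0 < I ∧ I * f S I + lam * S = Λ ∧ (μ + k * I) * V = r * S ∧
        f S I + k * V = α := by
  refine ⟨fun ⟨hS, hV, hI, e₁, e₂, e₃⟩ => ⟨hS, hV, hI, by linarith, by linarith, ?_⟩,
    fun ⟨hS, hV, hI, e₁, e₂, e₃⟩ => ⟨hS, hV, hI, by linarith, by linarith, ?_⟩⟩
  · exact mul_left_cancel₀ hI.ne' (by linear_combination e₃)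
  · linear_combination I * e₃

theorem IsStrain2Equilibrium.infected_le (hlam : lam = r + μ) (hr : 0 < r) (hμ : 0 < μ)
    (hk : 0 < k)
    (hmonoS : ∀ I, 0 ≤ I → MonotoneOn (fun S => f S I) (Ici 0))
    (hantiI : ∀ S, 0 ≤ S → AntitoneOn (f S) (Ici 0))
    (hnn : ∀ S I, 0 ≤ S → 0 ≤ I → 0 ≤ I * f S I)
    (h : IsStrain2Equilibrium Λ r μ k α lam (fun S I => I * f S I) S V I)
    (h' : IsStrain2Equilibrium Λ r μ k α lam (fun S I => I * f S I) S' V' I') : I ≤ I' := by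
  obtain ⟨hS, hV, hI, e₁, e₂, e₃⟩ := isStrain2Equilibrium_mul_iff.1 h
  obtain ⟨hS', hV', hI', e₁', e₂', e₃'⟩ := isStrain2Equilibrium_mul_iff.1 h'
  by_contra! hlt
  rcases le_or_gt S S' with hSS | hSS
  · have hf : f S I ≤ f S' I' :=
      (hmonoS I hI.le hS.le hS'.le hSS).trans (hantiI S' hS'.le hI'.le hI.le hlt.le)
    have hVV : V < V' := by nlinarith [mul_pos (mul_pos hk (sub_pos.2 hlt)) hV']
    nlinarith
  · have hf' : 0 ≤ f S' I' := nonneg_of_mul_nonneg_right (hnn S' I' hS'.le hI'.le) hI'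
    have hbal : k * I * (V - V') = f S' I' * (I - I') + lam * (S - S') := by
      linear_combination e₁' - e₁ - I * (e₃' - e₃)
    have hV : (μ + k * I) * (V - V') < r * (S - S') := by
      nlinarith [mul_pos (mul_pos hk (sub_pos.2 hlt)) hV']
    have hkr : k * r * I < lam * (μ + k * I) := by rw [hlam]; nlinarith [mul_pos hk hI]
    have hD : 0 < μ + k * I := by positivity
    have hlow : lam * (S - S') ≤ k * I * (V - V') := by
      rw [hbal]; linarith [mul_nonneg hf' (sub_pos.2 hlt).le]
    have := calc (μ + k * I) * (lam * (S - S'))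
        ≤ (μ + k * I) * (k * I * (V - V')) := mul_le_mul_of_nonneg_left hlow hD.le
      _ = k * I * ((μ + k * I) * (V - V')) := by ring
      _ < k * I * (r * (S - S')) := by gcongr
      _ = k * r * I * (S - S') := by ring
      _ < lam * (μ + k * I) * (S - S') := by gcongr
      _ = (μ + k * I) * (lam * (S - S')) := by ring
    exact this.false

theorem strictMonoOn_balance (hlam : 0 < lam)
    (hmonoS : ∀ I, 0 ≤ I → MonotoneOn (fun S => f S I) (Ici 0)) {I : ℝ} (hI : 0 ≤ I) :
    StrictMonoOn (fun S => I * f S I + lam * S) (Ici 0) := fun _ ha _ hb hab =>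
  add_lt_add_of_le_of_lt (mul_le_mul_of_nonneg_left (hmonoS I hI ha hb hab.le) hI)
    (mul_lt_mul_of_pos_left hab hlam)

theorem IsStrain2Equilibrium.unique (hlam : lam = r + μ) (hr : 0 < r)
    (hμ : 0 < μ) (hk : 0 < k)
    (hmonoS : ∀ I, 0 ≤ I → MonotoneOn (fun S => f S I) (Ici 0))
    (hantiI : ∀ S, 0 ≤ S → AntitoneOn (f S) (Ici 0))
    (hnn : ∀ S I, 0 ≤ S → 0 ≤ I → 0 ≤ I * f S I)
    (h : IsStrain2Equilibrium Λ r μ k α lam (fun S I => I * f S I) S V I)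
    (h' : IsStrain2Equilibrium Λ r μ k α lam (fun S I => I * f S I) S' V' I') :
    S = S' ∧ V = V' ∧ I = I' := by
  obtain rfl : I = I' := le_antisymm (h.infected_le hlam hr hμ hk hmonoS hantiI hnn h')
    (h'.infected_le hlam hr hμ hk hmonoS hantiI hnn h)
  obtain ⟨hS, hV, hI, e₁, e₂, -⟩ := isStrain2Equilibrium_mul_iff.1 h
  obtain ⟨hS', hV', -, e₁', e₂', -⟩ := isStrain2Equilibrium_mul_iff.1 h'
  obtain rfl : S = S' := (strictMonoOn_balance (by linarith) hmonoS hI.le).injOn hS.le hS'.le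
    (e₁.trans e₁'.symm)
  exact ⟨rfl, mul_left_cancel₀ (by positivity : μ + k * I ≠ 0) (e₂.trans e₂'.symm), rfl⟩

theorem IsStrain2Equilibrium.lt_threshold (hlam : 0 < lam) (hr : 0 < r)
    (hμ : 0 < μ) (hk : 0 < k)
    (hmonoS : ∀ I, 0 ≤ I → MonotoneOn (fun S => f S I) (Ici 0))
    (hantiI : ∀ S, 0 ≤ S → AntitoneOn (f S) (Ici 0))
    (hnn : ∀ S I, 0 ≤ S → 0 ≤ I → 0 ≤ I * f S I)
    (h : IsStrain2Equilibrium Λ r μ k α lam (fun S I => I * f S I) S V I) :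
    α < f (Λ / lam) 0 + k * r * (Λ / lam) / μ := by
  obtain ⟨hS, hV, hI, e₁, e₂, e₃⟩ := isStrain2Equilibrium_mul_iff.1 h
  have hSle : S ≤ Λ / lam := by
    rw [le_div_iff₀ hlam]; linarith [hnn S I hS.le hI.le]
  have hf : f S I ≤ f (Λ / lam) 0 :=
    (hantiI S hS.le self_mem_Ici hI.le hI.le).trans (hmonoS 0 le_rfl hS.le (hS.le.trans hSle) hSle)
  have hV : k * V < k * r * (Λ / lam) / μ := by
    rw [lt_div_iff₀ hμ]
    nlinarith [mul_pos (mul_pos hk hV) (mul_pos hk hI),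
      mul_le_mul_of_nonneg_left hSle (mul_pos hk hr).le]
  linarith

theorem exists_continuousOn_balance_curve (hΛ : 0 < Λ) (hlam : 0 < lam)
    (hcont : ContinuousOn (fun p : ℝ × ℝ => f p.1 p.2) {p | 0 ≤ p.1 ∧ 0 ≤ p.2})
    (hmonoS : ∀ I, 0 ≤ I → MonotoneOn (fun S => f S I) (Ici 0))
    (hnn : ∀ S I, 0 ≤ S → 0 ≤ I → 0 ≤ I * f S I) (hzero : ∀ I, 0 ≤ I → I * f 0 I = 0) :
    ∃ φ : ℝ → ℝ, ContinuousOn φ (Ici 0) ∧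
      ∀ I, 0 ≤ I → φ I ∈ Ioc 0 (Λ / lam) ∧ I * f (φ I) I + lam * φ I = Λ := by
  have hcontS : ∀ I, 0 ≤ I → ContinuousOn (fun S => f S I) (Ici 0) := fun I hI =>
    hcont.comp (continuousOn_id.prodMk continuousOn_const) fun S hS => ⟨hS, hI⟩
  have hcontI : ∀ S, 0 ≤ S → ContinuousOn (f S) (Ici 0) := fun S hS =>
    hcont.comp (continuousOn_const.prodMk continuousOn_id) fun I hI => ⟨hS, hI⟩
  have hsol : ∀ I, 0 ≤ I → ∃ S ∈ Ioc 0 (Λ / lam), I * f S I + lam * S = Λ := by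
    intro I hI
    have hS₀ : 0 ≤ Λ / lam := by positivity
    refine intermediate_value_Ioc hS₀
      ((continuousOn_const.mul (hcontS I hI)).add (continuousOn_const.mul continuousOn_id)
        |>.mono Icc_subset_Ici_self) ⟨?_, ?_⟩
    · simp [hzero I hI, hΛ]
    · have hF := hnn _ I hS₀ hI
      show Λ ≤ I * f (Λ / lam) I + lam * (Λ / lam)
      rw [mul_div_cancel₀ _ hlam.ne']
      linarith
  choose! φ hφ using hsol
  refine ⟨φ, fun I₀ hI₀ => ?_, hφ⟩
  exact continuousWithinAt_implicit_of_strictMonoOn (g := fun S I => I * f S I + lam * S)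
    (t := Ioi 0) (fun I hI => (strictMonoOn_balance hlam hmonoS hI).mono Ioi_subset_Ici_self)
    (fun S hS => (((continuousOn_id.mul (hcontI S hS.le)).add continuousOn_const) I₀ hI₀))
    (fun I hI => (hφ I hI).1.1) (fun I hI => (hφ I hI).2) hI₀ (Ioi_mem_nhds (hφ I₀ hI₀).1.1)

theorem exists_isStrain2Equilibrium (hΛ : 0 < Λ) (hr : 0 < r) (hμ : 0 < μ) (hk : 0 < k)
    (hα : 0 < α) (hlam : 0 < lam)
    (hcont : ContinuousOn (fun p : ℝ × ℝ => f p.1 p.2) {p | 0 ≤ p.1 ∧ 0 ≤ p.2})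
    (hmonoS : ∀ I, 0 ≤ I → MonotoneOn (fun S => f S I) (Ici 0))
    (hnn : ∀ S I, 0 ≤ S → 0 ≤ I → 0 ≤ I * f S I) (hzero : ∀ I, 0 ≤ I → I * f 0 I = 0)
    (hR : α < f (Λ / lam) 0 + k * r * (Λ / lam) / μ) :
    ∃ S V I, IsStrain2Equilibrium Λ r μ k α lam (fun S I => I * f S I) S V I := by
  obtain ⟨φ, hφc, hφ⟩ := exists_continuousOn_balance_curve hΛ hlam hcont hmonoS hnn hzero
  set Φ : ℝ → ℝ := fun I => f (φ I) I + k * r * φ I / (μ + k * I) with hΦ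
  have hΦc : ContinuousOn Φ (Ici 0) := by
    refine (hcont.comp (hφc.prodMk continuousOn_id) fun I hI => ⟨(hφ I hI).1.1.le, hI⟩).add
      ((continuousOn_const.mul hφc).div (by fun_prop) fun I hI => ?_)
    have : 0 ≤ I := hI
    positivity
  have hΦ0 : α < Φ 0 := by
    have hφ0 : φ 0 = Λ / lam := by
      field_simp
      linarith [(hφ 0 le_rfl).2]
    simpa [hΦ, hφ0] using hR
  -- Any `M > (Λ + r Λ / lam) / α` works: `M Φ(M) ≤ Λ + r Λ / lam`, as `M f(φ M, M) ≤ Λ` and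
  -- `φ M ≤ Λ / lam`.
  set M := (Λ + r * (Λ / lam)) / α + 1 with hM
  have hM0 : 0 < M := by positivity
  have hΦM : Φ M < α := by
    obtain ⟨⟨hφM, hφMle⟩, hbal⟩ := hφ M hM0.le
    have h₁ : M * f (φ M) M ≤ Λ := by nlinarith
    have h₂ : k * r * φ M / (μ + k * M) * M ≤ r * (Λ / lam) := by
      rw [div_mul_eq_mul_div, div_le_iff₀ (by positivity)]
      have : 0 ≤ r * (Λ / lam) * μ := by positivity
      nlinarith [mul_le_mul_of_nonneg_left hφMle (mul_pos (mul_pos hk hr) hM0).le]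
    have h₃ : Λ + r * (Λ / lam) < α * M := by
      rw [hM, mul_add, mul_div_cancel₀ _ hα.ne']; linarith
    refine lt_of_mul_lt_mul_right ?_ hM0.le
    simp only [hΦ, add_mul]
    linarith
  obtain ⟨I, ⟨hI, -⟩, hΦI⟩ := intermediate_value_Ioc' hM0.le (hΦc.mono Icc_subset_Ici_self)
    ⟨hΦM.le, hΦ0⟩
  obtain ⟨⟨hφI, -⟩, hbal⟩ := hφ I hI.le
  have hD : 0 < μ + k * I := by positivity
  refine ⟨φ I, r * φ I / (μ + k * I), I, isStrain2Equilibrium_mul_iff.2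
    ⟨hφI, by positivity, hI, hbal, mul_div_cancel₀ _ hD.ne', ?_⟩⟩
  rw [← hΦI, hΦ]
  field_simp

end Strain2

theorem strain2_equilibrium_unique_iff_general
    (Λ r μ k α₂ lam : ℝ)
    (hΛ : 0 < Λ) (hr : 0 < r) (hμ : 0 < μ) (hk : 0 < k)
    (hα₂ : μ < α₂) (hlam : lam = r + μ)
    (F₂ f₂ F₂I f₂S f₂I : ℝ → ℝ → ℝ)
    (hF₂nn : ∀ S I : ℝ, 0 ≤ S → 0 ≤ I → 0 ≤ F₂ S I)
    (hf₂C1 : ContDiffOn ℝ 1 (fun p : ℝ × ℝ => f₂ p.1 p.2) {p : ℝ × ℝ | 0 ≤ p.1 ∧ 0 ≤ p.2})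
    (hH1₂ : ∀ S I : ℝ, F₂ S I = I * f₂ S I)
    (hF₂zero : ∀ S I : ℝ, 0 ≤ S → 0 ≤ I → F₂ 0 I = 0 ∧ F₂ S 0 = 0)
    (hdF₂I : ∀ S I : ℝ, 0 ≤ S → 0 ≤ I → HasDerivAt (fun y => F₂ S y) (F₂I S I) I)
    (hdf₂S : ∀ S I : ℝ, 0 ≤ S → 0 ≤ I → HasDerivAt (fun x => f₂ x I) (f₂S S I) S)
    (hdf₂I : ∀ S I : ℝ, 0 ≤ S → 0 ≤ I → HasDerivAt (fun y => f₂ S y) (f₂I S I) I)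
    (hH2f₂S : ∀ S I : ℝ, 0 ≤ S → 0 ≤ I → 0 < f₂S S I)
    (hH2f₂I : ∀ S I : ℝ, 0 ≤ S → 0 ≤ I → f₂I S I ≤ 0)
    (R₂ : ℝ) (hR₂ : R₂ = F₂I (Λ / lam) 0 / α₂ + (k * r * Λ) / (α₂ * μ * lam)) :
    ((∃ St Vt It : ℝ, 0 < St ∧ 0 < Vt ∧ 0 < It ∧
        Λ - F₂ St It - lam * St = 0 ∧ r * St - (μ + k * It) * Vt = 0 ∧
        F₂ St It + k * It * Vt - α₂ * It = 0) ↔ 1 < R₂) ∧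
    (∀ St Vt It St' Vt' It' : ℝ,
      (0 < St ∧ 0 < Vt ∧ 0 < It ∧ Λ - F₂ St It - lam * St = 0 ∧
        r * St - (μ + k * It) * Vt = 0 ∧ F₂ St It + k * It * Vt - α₂ * It = 0) →
      (0 < St' ∧ 0 < Vt' ∧ 0 < It' ∧ Λ - F₂ St' It' - lam * St' = 0 ∧
        r * St' - (μ + k * It') * Vt' = 0 ∧ F₂ St' It' + k * It' * Vt' - α₂ * It' = 0) →
      St = St' ∧ Vt = Vt' ∧ It = It') := by
  obtain rfl : F₂ = fun S I => I * f₂ S I := funext₂ hH1₂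
  have hlam₀ : 0 < lam := by linarith
  have hα₂₀ : 0 < α₂ := hμ.trans hα₂
  have hS₀ : 0 ≤ Λ / lam := by positivity
  have hmonoS : ∀ I, 0 ≤ I → MonotoneOn (fun S => f₂ S I) (Ici 0) := fun I hI =>
    monotoneOn_of_hasDerivAt_nonneg (convex_Ici 0) (fun S hS => hdf₂S S I hS hI)
      fun S hS => (hH2f₂S S I hS hI).le
  have hantiI : ∀ S, 0 ≤ S → AntitoneOn (f₂ S) (Ici 0) := fun S hS =>
    antitoneOn_of_hasDerivAt_nonpos_s7 (convex_Ici 0) (fun I hI => hdf₂I S I hS hI)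
      fun I hI => hH2f₂I S I hS hI
  have hF₂I : F₂I (Λ / lam) 0 = f₂ (Λ / lam) 0 := by
    simpa using (hdF₂I _ 0 hS₀ le_rfl).unique ((hasDerivAt_id 0).mul (hdf₂I _ 0 hS₀ le_rfl))
  have hR : 1 < R₂ ↔ α₂ < f₂ (Λ / lam) 0 + k * r * (Λ / lam) / μ := by
    rw [← one_lt_div hα₂₀, hR₂, hF₂I]
    field_simp
  refine ⟨⟨fun ⟨S, V, I, h⟩ => hR.2 ?_, fun h => ?_⟩, fun S V I S' V' I' h h' => ?_⟩
  · exact IsStrain2Equilibrium.lt_threshold hlam₀ hr hμ hk hmonoS hantiI hF₂nn h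
  · exact exists_isStrain2Equilibrium hΛ hr hμ hk hα₂₀ hlam₀ hf₂C1.continuousOn hmonoS
      hF₂nn (fun I hI => (hF₂zero 0 I le_rfl hI).1) (hR.1 h)
  · exact IsStrain2Equilibrium.unique hlam hr hμ hk hmonoS hantiI hF₂nn h h'

/-- Theorem 4.6: under H1–H2 and ∂F₂/∂S(S,I₂) ≤ I₂ on the first quadrant,
system (3) admits a unique single-strain-2 equilibrium iff R₂ > 1. -/
theorem strain2_equilibrium_unique_iff
    (Λ r μ k α₁ α₂ lam : ℝ)
    (hΛ : 0 < Λ) (hr : 0 < r) (hμ : 0 < μ) (hk : 0 < k)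
    (hα₁ : μ < α₁) (hα₂ : μ < α₂) (hlam : lam = r + μ)
    (F₁ F₂ f₁ f₂ F₁S F₁I F₂S F₂I f₁S f₁I f₂S f₂I : ℝ → ℝ → ℝ)
    (hF₁nn : ∀ S I : ℝ, 0 ≤ S → 0 ≤ I → 0 ≤ F₁ S I)
    (hF₂nn : ∀ S I : ℝ, 0 ≤ S → 0 ≤ I → 0 ≤ F₂ S I)
    (hF₁C1 : ContDiffOn ℝ 1 (fun p : ℝ × ℝ => F₁ p.1 p.2) {p : ℝ × ℝ | 0 ≤ p.1 ∧ 0 ≤ p.2})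
    (hF₂C1 : ContDiffOn ℝ 1 (fun p : ℝ × ℝ => F₂ p.1 p.2) {p : ℝ × ℝ | 0 ≤ p.1 ∧ 0 ≤ p.2})
    (hf₁C1 : ContDiffOn ℝ 1 (fun p : ℝ × ℝ => f₁ p.1 p.2) {p : ℝ × ℝ | 0 ≤ p.1 ∧ 0 ≤ p.2})
    (hf₂C1 : ContDiffOn ℝ 1 (fun p : ℝ × ℝ => f₂ p.1 p.2) {p : ℝ × ℝ | 0 ≤ p.1 ∧ 0 ≤ p.2})
    (hH1₁ : ∀ S I : ℝ, F₁ S I = I * f₁ S I)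
    (hH1₂ : ∀ S I : ℝ, F₂ S I = I * f₂ S I)
    (hF₁zero : ∀ S I : ℝ, 0 ≤ S → 0 ≤ I → F₁ 0 I = 0 ∧ F₁ S 0 = 0)
    (hF₂zero : ∀ S I : ℝ, 0 ≤ S → 0 ≤ I → F₂ 0 I = 0 ∧ F₂ S 0 = 0)
    (hdF₁S : ∀ S I : ℝ, 0 ≤ S → 0 ≤ I → HasDerivAt (fun x => F₁ x I) (F₁S S I) S)
    (hdF₁I : ∀ S I : ℝ, 0 ≤ S → 0 ≤ I → HasDerivAt (fun y => F₁ S y) (F₁I S I) I)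
    (hdF₂S : ∀ S I : ℝ, 0 ≤ S → 0 ≤ I → HasDerivAt (fun x => F₂ x I) (F₂S S I) S)
    (hdF₂I : ∀ S I : ℝ, 0 ≤ S → 0 ≤ I → HasDerivAt (fun y => F₂ S y) (F₂I S I) I)
    (hdf₁S : ∀ S I : ℝ, 0 ≤ S → 0 ≤ I → HasDerivAt (fun x => f₁ x I) (f₁S S I) S)
    (hdf₁I : ∀ S I : ℝ, 0 ≤ S → 0 ≤ I → HasDerivAt (fun y => f₁ S y) (f₁I S I) I)
    (hdf₂S : ∀ S I : ℝ, 0 ≤ S → 0 ≤ I → HasDerivAt (fun x => f₂ x I) (f₂S S I) S)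
    (hdf₂I : ∀ S I : ℝ, 0 ≤ S → 0 ≤ I → HasDerivAt (fun y => f₂ S y) (f₂I S I) I)
    (hH2f₁S : ∀ S I : ℝ, 0 ≤ S → 0 ≤ I → 0 < f₁S S I)
    (hH2f₁I : ∀ S I : ℝ, 0 ≤ S → 0 ≤ I → f₁I S I ≤ 0)
    (hH2f₂S : ∀ S I : ℝ, 0 ≤ S → 0 ≤ I → 0 < f₂S S I)
    (hH2f₂I : ∀ S I : ℝ, 0 ≤ S → 0 ≤ I → f₂I S I ≤ 0)
    (hF₂Sle : ∀ S I : ℝ, 0 ≤ S → 0 ≤ I → F₂S S I ≤ I)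
    (R₂ : ℝ) (hR₂ : R₂ = F₂I (Λ / lam) 0 / α₂ + (k * r * Λ) / (α₂ * μ * lam)) :
    ((∃ St Vt It : ℝ, 0 < St ∧ 0 < Vt ∧ 0 < It ∧
        Λ - F₂ St It - lam * St = 0 ∧ r * St - (μ + k * It) * Vt = 0 ∧
        F₂ St It + k * It * Vt - α₂ * It = 0) ↔ 1 < R₂) ∧
    (∀ St Vt It St' Vt' It' : ℝ,
      (0 < St ∧ 0 < Vt ∧ 0 < It ∧ Λ - F₂ St It - lam * St = 0 ∧
        r * St - (μ + k * It) * Vt = 0 ∧ F₂ St It + k * It * Vt - α₂ * It = 0) →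
      (0 < St' ∧ 0 < Vt' ∧ 0 < It' ∧ Λ - F₂ St' It' - lam * St' = 0 ∧
        r * St' - (μ + k * It') * Vt' = 0 ∧ F₂ St' It' + k * It' * Vt' - α₂ * It' = 0) →
      St = St' ∧ Vt = Vt' ∧ It = It') :=
  strain2_equilibrium_unique_iff_general Λ r μ k α₂ lam hΛ hr hμ hk hα₂ hlam F₂ f₂ F₂I f₂S f₂I hF₂nn
    hf₂C1 hH1₂ hF₂zero hdF₂I hdf₂S hdf₂I hH2f₂S hH2f₂I R₂ hR₂
end

section
/- Under hypothesis H1, the Jacobian matrix J of system (3) evaluated at the disease-free equilibrium E₀ = (S⁰, V₁⁰, 0, 0) has characteristic polynomial (X + λ)·(X + μ)·(X − α₁(R₁ − 1))·(X − α₂(R₂ − 1)); consequently, if R₀ < 1 then every eigenvalue of J has negative real part, while if R₀ > 1 then J has a positive real eigenvalue. -/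
open Polynomial Matrix

set_option maxHeartbeats 1000000

/-- Theorem 5.1: under H1, the Jacobian of system (3) at the disease-free
equilibrium E₀ = (S⁰, V₁⁰, 0, 0) has characteristic polynomial
(X+λ)(X+μ)(X−α₁(R₁−1))(X−α₂(R₂−1)); hence R₀ < 1 forces all eigenvalues to have negative
real part, and R₀ > 1 yields a positive real eigenvalue. -/
theorem jacobian_at_E0
    (Λ r μ k α₁ α₂ lam : ℝ)
    (hΛ : 0 < Λ) (hr : 0 < r) (hμ : 0 < μ) (hk : 0 < k)
    (hα₁ : μ < α₁) (hα₂ : μ < α₂) (hlam : lam = r + μ)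
    (F₁ F₂ f₁ f₂ F₁S F₁I F₂S F₂I f₁S f₁I f₂S f₂I : ℝ → ℝ → ℝ)
    (hF₁nn : ∀ S I : ℝ, 0 ≤ S → 0 ≤ I → 0 ≤ F₁ S I)
    (hF₂nn : ∀ S I : ℝ, 0 ≤ S → 0 ≤ I → 0 ≤ F₂ S I)
    (hF₁C1 : ContDiffOn ℝ 1 (fun p : ℝ × ℝ => F₁ p.1 p.2) {p : ℝ × ℝ | 0 ≤ p.1 ∧ 0 ≤ p.2})
    (hF₂C1 : ContDiffOn ℝ 1 (fun p : ℝ × ℝ => F₂ p.1 p.2) {p : ℝ × ℝ | 0 ≤ p.1 ∧ 0 ≤ p.2})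
    (hf₁C1 : ContDiffOn ℝ 1 (fun p : ℝ × ℝ => f₁ p.1 p.2) {p : ℝ × ℝ | 0 ≤ p.1 ∧ 0 ≤ p.2})
    (hf₂C1 : ContDiffOn ℝ 1 (fun p : ℝ × ℝ => f₂ p.1 p.2) {p : ℝ × ℝ | 0 ≤ p.1 ∧ 0 ≤ p.2})
    (hH1₁ : ∀ S I : ℝ, F₁ S I = I * f₁ S I)
    (hH1₂ : ∀ S I : ℝ, F₂ S I = I * f₂ S I)
    (hF₁zero : ∀ S I : ℝ, 0 ≤ S → 0 ≤ I → F₁ 0 I = 0 ∧ F₁ S 0 = 0)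
    (hF₂zero : ∀ S I : ℝ, 0 ≤ S → 0 ≤ I → F₂ 0 I = 0 ∧ F₂ S 0 = 0)
    (hdF₁S : ∀ S I : ℝ, 0 ≤ S → 0 ≤ I → HasDerivAt (fun x => F₁ x I) (F₁S S I) S)
    (hdF₁I : ∀ S I : ℝ, 0 ≤ S → 0 ≤ I → HasDerivAt (fun y => F₁ S y) (F₁I S I) I)
    (hdF₂S : ∀ S I : ℝ, 0 ≤ S → 0 ≤ I → HasDerivAt (fun x => F₂ x I) (F₂S S I) S)
    (hdF₂I : ∀ S I : ℝ, 0 ≤ S → 0 ≤ I → HasDerivAt (fun y => F₂ S y) (F₂I S I) I)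
    (hdf₁S : ∀ S I : ℝ, 0 ≤ S → 0 ≤ I → HasDerivAt (fun x => f₁ x I) (f₁S S I) S)
    (hdf₁I : ∀ S I : ℝ, 0 ≤ S → 0 ≤ I → HasDerivAt (fun y => f₁ S y) (f₁I S I) I)
    (hdf₂S : ∀ S I : ℝ, 0 ≤ S → 0 ≤ I → HasDerivAt (fun x => f₂ x I) (f₂S S I) S)
    (hdf₂I : ∀ S I : ℝ, 0 ≤ S → 0 ≤ I → HasDerivAt (fun y => f₂ S y) (f₂I S I) I)
    (S0 V0 R₁ R₂ : ℝ)
    (hS0 : S0 = Λ / lam) (hV0 : V0 = r * Λ / (μ * lam))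
    (hR₁ : R₁ = F₁I S0 0 / α₁)
    (hR₂ : R₂ = F₂I S0 0 / α₂ + (k * r * Λ) / (α₂ * μ * lam))
    (J : Matrix (Fin 4) (Fin 4) ℝ)
    (hJ : J = !![-(F₁S S0 0) - F₂S S0 0 - lam, 0, -(F₁I S0 0), -(F₂I S0 0);
                 r, -μ - k * 0, 0, -(k * V0);
                 F₁S S0 0, 0, F₁I S0 0 - α₁, 0;
                 F₂S S0 0, k * 0, 0, F₂I S0 0 + k * V0 - α₂]) :
    J.charpoly = (X + C lam) * (X + C μ) * (X - C (α₁ * (R₁ - 1))) * (X - C (α₂ * (R₂ - 1))) ∧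
    (max R₁ R₂ < 1 →
      ∀ z : ℂ, ((J.map (fun x : ℝ => (x : ℂ))).charpoly).IsRoot z → z.re < 0) ∧
    (1 < max R₁ R₂ → ∃ x : ℝ, 0 < x ∧ J.charpoly.IsRoot x) := by
  have hlam0 : 0 < lam := by rw [hlam]; positivity
  have hα₁0 : 0 < α₁ := hμ.trans hα₁
  have hα₂0 : 0 < α₂ := hμ.trans hα₂
  have hS0nn : 0 ≤ S0 := by rw [hS0]; positivity
  -- the partial derivatives in S vanish at (S0, 0)
  have h1 : F₁S S0 0 = 0 := by
    have h := hdF₁S S0 0 hS0nn le_rfl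
    have hz : (fun x => F₁ x 0) = fun _ : ℝ => (0 : ℝ) := funext fun x => by
      rw [hH1₁]; ring
    rw [hz] at h
    exact h.unique (hasDerivAt_const _ _)
  have h2 : F₂S S0 0 = 0 := by
    have h := hdF₂S S0 0 hS0nn le_rfl
    have hz : (fun x => F₂ x 0) = fun _ : ℝ => (0 : ℝ) := funext fun x => by
      rw [hH1₂]; ring
    rw [hz] at h
    exact h.unique (hasDerivAt_const _ _)
  set σ₁ := F₁I S0 0 with hσ₁
  set σ₂ := F₂I S0 0 with hσ₂
  have ha : α₁ * (R₁ - 1) = σ₁ - α₁ := by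
    rw [hR₁]; field_simp
  have hb : α₂ * (R₂ - 1) = σ₂ + k * V0 - α₂ := by
    rw [hR₂, hV0]; field_simp
  have hJ' : J = !![-lam, 0, -σ₁, -σ₂; r, -μ, 0, -(k * V0);
      0, 0, σ₁ - α₁, 0; 0, 0, 0, σ₂ + k * V0 - α₂] := by
    rw [hJ, h1, h2]; norm_num
  have hcp : J.charpoly =
      (X + C lam) * (X + C μ) * (X - C (σ₁ - α₁)) * (X - C (σ₂ + k * V0 - α₂)) := by
    rw [hJ']
    have h : charmatrix (!![-lam, 0, -σ₁, -σ₂; r, -μ, 0, -(k * V0);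
        0, 0, σ₁ - α₁, 0; 0, 0, 0, σ₂ + k * V0 - α₂] : Matrix (Fin 4) (Fin 4) ℝ)
        = !![X + C lam, 0, C σ₁, C σ₂; -C r, X + C μ, 0, C (k * V0);
             0, 0, X - C (σ₁ - α₁), 0; 0, 0, 0, X - C (σ₂ + k * V0 - α₂)] := by
      ext i j
      fin_cases i <;> fin_cases j <;>
        simp [charmatrix_apply, Matrix.one_apply, vecHead, vecTail]
    rw [Matrix.charpoly, h]
    simp [Matrix.det_succ_row_zero, Fin.sum_univ_succ]
    ring
  have hcp' : J.charpoly =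
      (X + C lam) * (X + C μ) * (X - C (α₁ * (R₁ - 1))) * (X - C (α₂ * (R₂ - 1))) := by
    rw [hcp, ha, hb]
  refine ⟨hcp', ?_, ?_⟩
  · intro hmax z hz
    have hR₁1 : R₁ < 1 := lt_of_le_of_lt (le_max_left _ _) hmax
    have hR₂1 : R₂ < 1 := lt_of_le_of_lt (le_max_right _ _) hmax
    have hmap : (J.map (fun x : ℝ => (x : ℂ))).charpoly = J.charpoly.map (algebraMap ℝ ℂ) := by
      rw [← Matrix.charpoly_map]; rfl
    rw [hmap, hcp'] at hz
    simp only [IsRoot, Polynomial.eval_map, Polynomial.eval₂_mul, Polynomial.eval₂_add,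
      Polynomial.eval₂_sub, Polynomial.eval₂_X, Polynomial.eval₂_C, Complex.coe_algebraMap] at hz
    have := mul_eq_zero.mp hz
    rcases this with h | h
    · rcases mul_eq_zero.mp h with h | h
      · rcases mul_eq_zero.mp h with h | h
        · have : z = -(lam : ℂ) := by linear_combination h
          rw [this]; simpa using hlam0
        · have : z = -(μ : ℂ) := by linear_combination h
          rw [this]; simpa using hμ
      · have : z = ((α₁ * (R₁ - 1) : ℝ) : ℂ) := by linear_combination h
        rw [this]
        simp only [Complex.ofReal_re]
        nlinarith
    · have : z = ((α₂ * (R₂ - 1) : ℝ) : ℂ) := by linear_combination h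
      rw [this]
      simp only [Complex.ofReal_re]
      nlinarith
  · intro hmax
    rcases max_lt_iff.not.mp (not_lt.mpr hmax.le) with h
    by_cases h1' : 1 < R₁
    · refine ⟨α₁ * (R₁ - 1), by nlinarith, ?_⟩
      rw [hcp']
      simp [IsRoot]
    · have h2' : 1 < R₂ := by
        rcases lt_max_iff.mp hmax with h | h
        · exact absurd h h1'
        · exact h
      refine ⟨α₂ * (R₂ - 1), by nlinarith, ?_⟩
      rw [hcp']
      simp [IsRoot]
end

section
/- Under hypotheses H1–H2, let (S̄, V̄₁, Ī₁) be a single-strain-1 equilibrium (S̄, V̄₁, Ī₁ > 0 with Λ − F₁(S̄, Ī₁) − λS̄ = 0, rS̄ − μV̄₁ = 0, F₁(S̄, Ī₁) − α₁Ī₁ = 0) and set R̄₂ = ((∂F₂/∂I)(S̄, 0) + kV̄₁)/α₂. If R̄₂ < 1, then every complex eigenvalue of the Jacobian matrix of system (3) at E₁ = (S̄, V̄₁, Ī₁, 0) has negative real part; if R̄₂ > 1, then α₂(R̄₂ − 1) is a positive real eigenvalue of this Jacobian. -/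
/-!
Along the boundary `I₂ = 0` the Jacobian at `E₁` is block triangular: the `I₂`-row reduces to its
diagonal entry `∂F₂/∂I(S̄, 0) + kV̄₁ − α₂ = α₂(R̄₂ − 1)` (because `F₂(·, 0) ≡ 0` kills `∂F₂/∂S`),
the `V₁`-column to `−μ`, and what remains is the `(S, I₁)` block. Writing `F₁ = I f₁` and using
`f₁(S̄, Ī₁) = α₁`, this block has `∂F₁/∂S = Ī₁ ∂f₁/∂S > 0` and `∂F₁/∂I − α₁ = Ī₁ ∂f₁/∂I ≤ 0`, hence
negative trace and positive determinant, so its eigenvalues lie in the open left half-plane.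
The sign of the spectrum is therefore decided by `α₂(R̄₂ − 1)` alone.
-/

open Polynomial

theorem Matrix.charpoly_fin_four_of_zeros {R : Type*} [CommRing R] (a c d e f h i k q : R) :
    (!![a, 0, c, d; e, f, 0, h; i, 0, k, 0; 0, 0, 0, q] : Matrix (Fin 4) (Fin 4) R).charpoly
      = (X - C f) * (X - C q) * (X ^ 2 - C (a + k) * X + C (a * k - c * i)) := by
  simp [Matrix.charpoly, Matrix.det_succ_row_zero, Fin.sum_univ_succ, Matrix.charmatrix_apply,
    Fin.succAbove]
  ring

theorem Complex.re_neg_of_sq_sub_mul_add_eq_zero {s d : ℝ} (hs : s < 0) (hd : 0 < d) {z : ℂ}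
    (hz : z ^ 2 - s * z + d = 0) : z.re < 0 := by
  have hre := congrArg Complex.re hz
  have him := congrArg Complex.im hz
  simp only [pow_two, Complex.sub_re, Complex.add_re, Complex.mul_re, Complex.ofReal_re,
    Complex.ofReal_im, Complex.sub_im, Complex.add_im, Complex.mul_im, Complex.zero_re,
    Complex.zero_im] at hre him
  by_cases hreal : z.im = 0
  · rw [hreal] at hre
    nlinarith
  · have hsum : z.im * (2 * z.re - s) = 0 := by linarith
    linarith [(mul_eq_zero.1 hsum).resolve_left hreal]

theorem re_neg_of_isRoot_charpoly_fin_four_of_zeros {a c d e f h i k q : ℝ}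
    (hf : f < 0) (hq : q < 0) (htr : a + k < 0) (hdet : 0 < a * k - c * i) {z : ℂ}
    (hz : ((!![a, 0, c, d; e, f, 0, h; i, 0, k, 0; 0, 0, 0, q] : Matrix (Fin 4) (Fin 4) ℝ).map
      (fun x : ℝ => (x : ℂ))).charpoly.IsRoot z) : z.re < 0 := by
  change (Matrix.map _ Complex.ofRealHom).charpoly.IsRoot z at hz
  rw [Matrix.charpoly_map, Matrix.charpoly_fin_four_of_zeros] at hz
  simp only [IsRoot, Polynomial.map_mul, Polynomial.map_sub, Polynomial.map_add, Polynomial.map_pow,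
    map_X, map_C, eval_mul, eval_sub, eval_add, eval_pow, eval_X, eval_C,
    Complex.ofRealHom_eq_coe, mul_eq_zero, sub_eq_zero] at hz
  rcases hz with (rfl | rfl) | hquad
  · simpa using hf
  · simpa using hq
  · exact Complex.re_neg_of_sq_sub_mul_add_eq_zero htr hdet (by simpa using hquad)

theorem isRoot_charpoly_fin_four_of_zeros {R : Type*} [CommRing R] (a c d e f h i k q : R) :
    (!![a, 0, c, d; e, f, 0, h; i, 0, k, 0; 0, 0, 0, q] : Matrix (Fin 4) (Fin 4) R).charpoly.IsRoot
      q := by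
  simp [IsRoot, Matrix.charpoly_fin_four_of_zeros]

theorem partials_eq_of_eq_mul {F f : ℝ → ℝ → ℝ} (hF : ∀ S I, F S I = I * f S I)
    {S I FS FI fS fI : ℝ}
    (hFS : HasDerivAt (fun x => F x I) FS S) (hfS : HasDerivAt (fun x => f x I) fS S)
    (hFI : HasDerivAt (fun y => F S y) FI I) (hfI : HasDerivAt (fun y => f S y) fI I) :
    FS = I * fS ∧ FI = f S I + I * fI := by
  simp only [hF] at hFS hFI
  exact ⟨hFS.unique (hfS.const_mul I), hFI.unique (by simpa using (hasDerivAt_id' I).fun_mul hfI)⟩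

theorem jacobian_at_E1_general
    (r μ k α₁ α₂ lam : ℝ)
    (hr : 0 < r) (hμ : 0 < μ)
    (hα₁ : μ < α₁) (hα₂ : μ < α₂) (hlam : lam = r + μ)
    (F₁ F₂ f₁ F₁S F₁I F₂S F₂I f₁S f₁I : ℝ → ℝ → ℝ)
    (hH1₁ : ∀ S I : ℝ, F₁ S I = I * f₁ S I)
    (hF₂zero : ∀ S I : ℝ, 0 ≤ S → 0 ≤ I → F₂ 0 I = 0 ∧ F₂ S 0 = 0)
    (hdF₁S : ∀ S I : ℝ, 0 ≤ S → 0 ≤ I → HasDerivAt (fun x => F₁ x I) (F₁S S I) S)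
    (hdF₁I : ∀ S I : ℝ, 0 ≤ S → 0 ≤ I → HasDerivAt (fun y => F₁ S y) (F₁I S I) I)
    (hdF₂S : ∀ S I : ℝ, 0 ≤ S → 0 ≤ I → HasDerivAt (fun x => F₂ x I) (F₂S S I) S)
    (hdf₁S : ∀ S I : ℝ, 0 ≤ S → 0 ≤ I → HasDerivAt (fun x => f₁ x I) (f₁S S I) S)
    (hdf₁I : ∀ S I : ℝ, 0 ≤ S → 0 ≤ I → HasDerivAt (fun y => f₁ S y) (f₁I S I) I)
    (hH2f₁S : ∀ S I : ℝ, 0 ≤ S → 0 ≤ I → 0 < f₁S S I)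
    (hH2f₁I : ∀ S I : ℝ, 0 ≤ S → 0 ≤ I → f₁I S I ≤ 0)
    (Sb Vb Ib : ℝ) (hSb : 0 < Sb) (hIb : 0 < Ib)
    (heq3 : F₁ Sb Ib - α₁ * Ib = 0)
    (Rb₂ : ℝ) (hRb₂ : Rb₂ = (F₂I Sb 0 + k * Vb) / α₂)
    (J : Matrix (Fin 4) (Fin 4) ℝ)
    (hJ : J = !![-(F₁S Sb Ib) - F₂S Sb 0 - lam, 0, -(F₁I Sb Ib), -(F₂I Sb 0);
                 r, -μ - k * 0, 0, -(k * Vb);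
                 F₁S Sb Ib, 0, F₁I Sb Ib - α₁, 0;
                 F₂S Sb 0, k * 0, 0, F₂I Sb 0 + k * Vb - α₂]) :
    (Rb₂ < 1 →
      ∀ z : ℂ, ((J.map (fun x : ℝ => (x : ℂ))).charpoly).IsRoot z → z.re < 0) ∧
    (1 < Rb₂ → 0 < α₂ * (Rb₂ - 1) ∧ J.charpoly.IsRoot (α₂ * (Rb₂ - 1))) := by
  have hα₂pos : 0 < α₂ := hμ.trans hα₂
  have hlam_nonneg : 0 ≤ lam := by rw [hlam]; positivity
  obtain ⟨hF₁S, hF₁I⟩ := partials_eq_of_eq_mul hH1₁ (hdF₁S Sb Ib hSb.le hIb.le)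
    (hdf₁S Sb Ib hSb.le hIb.le) (hdF₁I Sb Ib hSb.le hIb.le) (hdf₁I Sb Ib hSb.le hIb.le)
  have hf₁ : f₁ Sb Ib = α₁ := mul_left_cancel₀ hIb.ne' (by linarith [hH1₁ Sb Ib])
  have hF₁S_pos : 0 < F₁S Sb Ib := hF₁S ▸ mul_pos hIb (hH2f₁S Sb Ib hSb.le hIb.le)
  have hF₁I_le : F₁I Sb Ib - α₁ ≤ 0 := by
    rw [hF₁I, hf₁, add_sub_cancel_left]
    exact mul_nonpos_of_nonneg_of_nonpos hIb.le (hH2f₁I Sb Ib hSb.le hIb.le)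
  have hF₂S : F₂S Sb 0 = 0 := by
    have hvanish : (fun x => F₂ x 0) =ᶠ[nhds Sb] fun _ => 0 := by
      filter_upwards [eventually_gt_nhds hSb] with x hx using (hF₂zero x 0 hx.le le_rfl).2
    rw [← (hdF₂S Sb 0 hSb.le le_rfl).deriv, hvanish.deriv_eq, deriv_const]
  have hgrowth : F₂I Sb 0 + k * Vb - α₂ = α₂ * (Rb₂ - 1) := by
    rw [hRb₂]; field_simp
  simp only [hF₂S, mul_zero, sub_zero] at hJ
  subst hJ
  refine ⟨fun hR z hz => ?_, fun hR => ⟨mul_pos hα₂pos (by linarith), ?_⟩⟩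
  · refine re_neg_of_isRoot_charpoly_fin_four_of_zeros (by linarith) ?_ ?_ ?_ hz
    · rw [hgrowth]; nlinarith
    · linarith
    · nlinarith
  · rw [← hgrowth]
    exact isRoot_charpoly_fin_four_of_zeros ..

/-- Theorem 5.2: local stability of the single-strain-1 boundary equilibrium
E₁ = (S̄, V̄₁, Ī₁, 0) in terms of R̄₂ = (∂F₂/∂I(S̄,0) + kV̄₁)/α₂. -/
theorem jacobian_at_E1
    (Λ r μ k α₁ α₂ lam : ℝ)
    (hΛ : 0 < Λ) (hr : 0 < r) (hμ : 0 < μ) (hk : 0 < k)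
    (hα₁ : μ < α₁) (hα₂ : μ < α₂) (hlam : lam = r + μ)
    (F₁ F₂ f₁ f₂ F₁S F₁I F₂S F₂I f₁S f₁I f₂S f₂I : ℝ → ℝ → ℝ)
    (hF₁nn : ∀ S I : ℝ, 0 ≤ S → 0 ≤ I → 0 ≤ F₁ S I)
    (hF₂nn : ∀ S I : ℝ, 0 ≤ S → 0 ≤ I → 0 ≤ F₂ S I)
    (hF₁C1 : ContDiffOn ℝ 1 (fun p : ℝ × ℝ => F₁ p.1 p.2) {p : ℝ × ℝ | 0 ≤ p.1 ∧ 0 ≤ p.2})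
    (hF₂C1 : ContDiffOn ℝ 1 (fun p : ℝ × ℝ => F₂ p.1 p.2) {p : ℝ × ℝ | 0 ≤ p.1 ∧ 0 ≤ p.2})
    (hf₁C1 : ContDiffOn ℝ 1 (fun p : ℝ × ℝ => f₁ p.1 p.2) {p : ℝ × ℝ | 0 ≤ p.1 ∧ 0 ≤ p.2})
    (hf₂C1 : ContDiffOn ℝ 1 (fun p : ℝ × ℝ => f₂ p.1 p.2) {p : ℝ × ℝ | 0 ≤ p.1 ∧ 0 ≤ p.2})
    (hH1₁ : ∀ S I : ℝ, F₁ S I = I * f₁ S I)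
    (hH1₂ : ∀ S I : ℝ, F₂ S I = I * f₂ S I)
    (hF₁zero : ∀ S I : ℝ, 0 ≤ S → 0 ≤ I → F₁ 0 I = 0 ∧ F₁ S 0 = 0)
    (hF₂zero : ∀ S I : ℝ, 0 ≤ S → 0 ≤ I → F₂ 0 I = 0 ∧ F₂ S 0 = 0)
    (hdF₁S : ∀ S I : ℝ, 0 ≤ S → 0 ≤ I → HasDerivAt (fun x => F₁ x I) (F₁S S I) S)
    (hdF₁I : ∀ S I : ℝ, 0 ≤ S → 0 ≤ I → HasDerivAt (fun y => F₁ S y) (F₁I S I) I)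
    (hdF₂S : ∀ S I : ℝ, 0 ≤ S → 0 ≤ I → HasDerivAt (fun x => F₂ x I) (F₂S S I) S)
    (hdF₂I : ∀ S I : ℝ, 0 ≤ S → 0 ≤ I → HasDerivAt (fun y => F₂ S y) (F₂I S I) I)
    (hdf₁S : ∀ S I : ℝ, 0 ≤ S → 0 ≤ I → HasDerivAt (fun x => f₁ x I) (f₁S S I) S)
    (hdf₁I : ∀ S I : ℝ, 0 ≤ S → 0 ≤ I → HasDerivAt (fun y => f₁ S y) (f₁I S I) I)
    (hdf₂S : ∀ S I : ℝ, 0 ≤ S → 0 ≤ I → HasDerivAt (fun x => f₂ x I) (f₂S S I) S)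
    (hdf₂I : ∀ S I : ℝ, 0 ≤ S → 0 ≤ I → HasDerivAt (fun y => f₂ S y) (f₂I S I) I)
    (hH2f₁S : ∀ S I : ℝ, 0 ≤ S → 0 ≤ I → 0 < f₁S S I)
    (hH2f₁I : ∀ S I : ℝ, 0 ≤ S → 0 ≤ I → f₁I S I ≤ 0)
    (hH2f₂S : ∀ S I : ℝ, 0 ≤ S → 0 ≤ I → 0 < f₂S S I)
    (hH2f₂I : ∀ S I : ℝ, 0 ≤ S → 0 ≤ I → f₂I S I ≤ 0)
    (Sb Vb Ib : ℝ) (hSb : 0 < Sb) (hVb : 0 < Vb) (hIb : 0 < Ib)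
    (heq1 : Λ - F₁ Sb Ib - lam * Sb = 0)
    (heq2 : r * Sb - μ * Vb = 0)
    (heq3 : F₁ Sb Ib - α₁ * Ib = 0)
    (Rb₂ : ℝ) (hRb₂ : Rb₂ = (F₂I Sb 0 + k * Vb) / α₂)
    (J : Matrix (Fin 4) (Fin 4) ℝ)
    (hJ : J = !![-(F₁S Sb Ib) - F₂S Sb 0 - lam, 0, -(F₁I Sb Ib), -(F₂I Sb 0);
                 r, -μ - k * 0, 0, -(k * Vb);
                 F₁S Sb Ib, 0, F₁I Sb Ib - α₁, 0;
                 F₂S Sb 0, k * 0, 0, F₂I Sb 0 + k * Vb - α₂]) :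
    (Rb₂ < 1 →
      ∀ z : ℂ, ((J.map (fun x : ℝ => (x : ℂ))).charpoly).IsRoot z → z.re < 0) ∧
    (1 < Rb₂ → 0 < α₂ * (Rb₂ - 1) ∧ J.charpoly.IsRoot (α₂ * (Rb₂ - 1))) :=
  jacobian_at_E1_general r μ k α₁ α₂ lam hr hμ hα₁ hα₂ hlam F₁ F₂ f₁ F₁S F₁I F₂S F₂I f₁S f₁I hH1₁
    hF₂zero hdF₁S hdF₁I hdF₂S hdf₁S hdf₁I hH2f₁S hH2f₁I Sb Vb Ib hSb hIb heq3 Rb₂ hRb₂ J hJ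
end

section
/- Under hypotheses H1–H2, let (S̃, Ṽ₁, Ĩ₂) be a single-strain-2 equilibrium (S̃, Ṽ₁, Ĩ₂ > 0 with Λ − F₂(S̃, Ĩ₂) − λS̃ = 0, rS̃ − (μ + kĨ₂)Ṽ₁ = 0, F₂(S̃, Ĩ₂) + kĨ₂Ṽ₁ − α₂Ĩ₂ = 0), assume (∂F₂/∂I)(S̃, Ĩ₂) ≤ 0 and (∂f₂/∂I)(S̃, Ĩ₂) < 0, and set R̃₁ = (∂F₁/∂I)(S̃, 0)/α₁. If R̃₁ < 1, then every complex eigenvalue of the Jacobian matrix of system (3) at E₂ = (S̃, Ṽ₁, 0, Ĩ₂) has negative real part; if R̃₁ > 1, then α₁(R̃₁ − 1) is a positive real eigenvalue of this Jacobian. -/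
set_option maxHeartbeats 1000000 in
private lemma det_fin_four' {R : Type*} [CommRing R] (A : Matrix (Fin 4) (Fin 4) R) :
    A.det =
      A 0 0 * (A 1 1 * (A 2 2 * A 3 3 - A 2 3 * A 3 2) - A 1 2 * (A 2 1 * A 3 3 - A 2 3 * A 3 1)
        + A 1 3 * (A 2 1 * A 3 2 - A 2 2 * A 3 1))
      - A 0 1 * (A 1 0 * (A 2 2 * A 3 3 - A 2 3 * A 3 2) - A 1 2 * (A 2 0 * A 3 3 - A 2 3 * A 3 0)
        + A 1 3 * (A 2 0 * A 3 2 - A 2 2 * A 3 0))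
      + A 0 2 * (A 1 0 * (A 2 1 * A 3 3 - A 2 3 * A 3 1) - A 1 1 * (A 2 0 * A 3 3 - A 2 3 * A 3 0)
        + A 1 3 * (A 2 0 * A 3 1 - A 2 1 * A 3 0))
      - A 0 3 * (A 1 0 * (A 2 1 * A 3 2 - A 2 2 * A 3 1) - A 1 1 * (A 2 0 * A 3 2 - A 2 2 * A 3 0)
        + A 1 2 * (A 2 0 * A 3 1 - A 2 1 * A 3 0)) := by
  rw [Matrix.det_succ_row_zero]
  simp only [Fin.sum_univ_four, Matrix.det_fin_three, Matrix.submatrix_apply,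
    Fin.zero_succAbove, Fin.succ_zero_eq_one, Fin.succ_one_eq_two,
    Fin.succ_succAbove_zero, Fin.succ_succAbove_one,
    show (Fin.succ 2 : Fin 4) = 3 from rfl,
    show ((1:Fin 4).succAbove 2) = 3 from rfl,
    show ((2:Fin 4).succAbove 0) = 0 from rfl,
    show ((2:Fin 4).succAbove 1) = 1 from rfl,
    show ((2:Fin 4).succAbove 2) = 3 from rfl,
    show ((3:Fin 4).succAbove 0) = 0 from rfl,
    show ((3:Fin 4).succAbove 1) = 1 from rfl,
    show ((3:Fin 4).succAbove 2) = 2 from rfl,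
    show ((0:Fin 4):ℕ) = 0 from rfl, show ((1:Fin 4):ℕ) = 1 from rfl,
    show ((2:Fin 4):ℕ) = 2 from rfl, show ((3:Fin 4):ℕ) = 3 from rfl]
  norm_num
  ring

private lemma charpoly_eval' {n : ℕ} {R : Type*} [CommRing R] (M : Matrix (Fin n) (Fin n) R)
    (x : R) :
    M.charpoly.eval x = (Matrix.of fun i j => (if i = j then x else 0) - M i j).det := by
  rw [Matrix.charpoly, ← Polynomial.coe_evalRingHom, RingHom.map_det]
  congr 1
  ext i j
  by_cases h : i = j <;>
    simp [Matrix.charmatrix_apply, h, Matrix.diagonal_apply, Matrix.map_apply]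

set_option maxHeartbeats 1000000 in
private lemma det_factor' {R : Type*} [CommRing R] (a b β v c m lam r μ α z E C2 C1 C0 : R)
    (hE : E = β - α)
    (h2 : C2 = a + lam + (μ + c) - m)
    (h1 : C1 = (a + lam) * (μ + c) - (a + lam) * m - (μ + c) * m + v * c + a * b)
    (h0 : C0 = -((a + lam) * (μ + c) * m) + (a + lam) * v * c + b * (r * c + a * (μ + c))) :
    (Matrix.of fun i j => (if i = j then z else 0) -
      !![-a - lam, 0, -β, -b; r, -μ - c, 0, -v; 0, 0, β - α, 0; a, c, 0, m] i j).det
    = (z - E) * (z ^ 3 + C2 * z ^ 2 + C1 * z + C0) := by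
  subst hE h2 h1 h0
  have hM : (Matrix.of fun i j => (if i = j then z else 0) -
      !![-a - lam, 0, -β, -b; r, -μ - c, 0, -v; 0, 0, β - α, 0; a, c, 0, m] i j)
      = !![z - (-a - lam), 0, β, b;
           -r, z - (-μ - c), 0, v;
           0, 0, z - (β - α), 0;
           -a, -c, 0, z - m] := by
    ext i j
    fin_cases i <;> fin_cases j <;> simp
  rw [hM, det_fin_four']
  simp [Matrix.cons_val_zero, Matrix.cons_val_one, Matrix.head_cons]
  ring

private lemma cubic_root_re_neg (a₂ a₁ a₀ : ℝ) (h₂ : 0 < a₂) (h₁ : 0 < a₁) (h₀ : 0 < a₀)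
    (hRH : a₀ < a₂ * a₁) (z : ℂ)
    (hz : z ^ 3 + (a₂ : ℂ) * z ^ 2 + (a₁ : ℂ) * z + (a₀ : ℂ) = 0) : z.re < 0 := by
  set x := z.re with hx
  set y := z.im with hy
  have hre : x ^ 3 - 3 * x * y ^ 2 + a₂ * (x ^ 2 - y ^ 2) + a₁ * x + a₀ = 0 := by
    have h := congrArg Complex.re hz
    simp only [Complex.add_re, Complex.mul_re, Complex.ofReal_re, Complex.ofReal_im,
      Complex.zero_re, pow_succ, pow_zero, one_mul, Complex.mul_im, Complex.one_re,
      Complex.one_im] at h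
    rw [← hx, ← hy] at h
    nlinarith [h]
  have him : y * (3 * x ^ 2 - y ^ 2 + 2 * a₂ * x + a₁) = 0 := by
    have h := congrArg Complex.im hz
    simp only [Complex.add_im, Complex.mul_re, Complex.ofReal_re, Complex.ofReal_im,
      Complex.zero_im, pow_succ, pow_zero, one_mul, Complex.mul_im, Complex.one_re,
      Complex.one_im] at h
    rw [← hx, ← hy] at h
    nlinarith [h]
  by_contra hcon
  push_neg at hcon
  rcases eq_or_ne y 0 with hy0 | hy0
  · rw [hy0] at hre
    nlinarith [pow_nonneg hcon 3, pow_nonneg hcon 2, mul_nonneg h₁.le hcon]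
  · have hy2 : y ^ 2 = 3 * x ^ 2 + 2 * a₂ * x + a₁ := by
      have := (mul_eq_zero.mp him).resolve_left hy0
      linarith
    have key : 8 * x ^ 3 + 8 * a₂ * x ^ 2 + 2 * (a₁ + a₂ ^ 2) * x + (a₂ * a₁ - a₀) = 0 := by
      nlinarith [hre, hy2]
    nlinarith [pow_nonneg hcon 3, pow_nonneg hcon 2, mul_nonneg hcon (sq_nonneg a₂),
      mul_nonneg h₁.le hcon]

set_option maxHeartbeats 2000000 in
/-- Theorem 5.3: local stability of the single-strain-2 boundary equilibrium
E₂ = (S̃, Ṽ₁, 0, Ĩ₂) in terms of R̃₁ = ∂F₁/∂I(S̃,0)/α₁, assuming ∂F₂/∂I(S̃,Ĩ₂) ≤ 0 and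
∂f₂/∂I(S̃,Ĩ₂) < 0. -/
theorem jacobian_at_E2
    (Λ r μ k α₁ α₂ lam : ℝ)
    (hΛ : 0 < Λ) (hr : 0 < r) (hμ : 0 < μ) (hk : 0 < k)
    (hα₁ : μ < α₁) (hα₂ : μ < α₂) (hlam : lam = r + μ)
    (F₁ F₂ f₁ f₂ F₁S F₁I F₂S F₂I f₁S f₁I f₂S f₂I : ℝ → ℝ → ℝ)
    (hF₁nn : ∀ S I : ℝ, 0 ≤ S → 0 ≤ I → 0 ≤ F₁ S I)
    (hF₂nn : ∀ S I : ℝ, 0 ≤ S → 0 ≤ I → 0 ≤ F₂ S I)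
    (hF₁C1 : ContDiffOn ℝ 1 (fun p : ℝ × ℝ => F₁ p.1 p.2) {p : ℝ × ℝ | 0 ≤ p.1 ∧ 0 ≤ p.2})
    (hF₂C1 : ContDiffOn ℝ 1 (fun p : ℝ × ℝ => F₂ p.1 p.2) {p : ℝ × ℝ | 0 ≤ p.1 ∧ 0 ≤ p.2})
    (hf₁C1 : ContDiffOn ℝ 1 (fun p : ℝ × ℝ => f₁ p.1 p.2) {p : ℝ × ℝ | 0 ≤ p.1 ∧ 0 ≤ p.2})
    (hf₂C1 : ContDiffOn ℝ 1 (fun p : ℝ × ℝ => f₂ p.1 p.2) {p : ℝ × ℝ | 0 ≤ p.1 ∧ 0 ≤ p.2})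
    (hH1₁ : ∀ S I : ℝ, F₁ S I = I * f₁ S I)
    (hH1₂ : ∀ S I : ℝ, F₂ S I = I * f₂ S I)
    (hF₁zero : ∀ S I : ℝ, 0 ≤ S → 0 ≤ I → F₁ 0 I = 0 ∧ F₁ S 0 = 0)
    (hF₂zero : ∀ S I : ℝ, 0 ≤ S → 0 ≤ I → F₂ 0 I = 0 ∧ F₂ S 0 = 0)
    (hdF₁S : ∀ S I : ℝ, 0 ≤ S → 0 ≤ I → HasDerivAt (fun x => F₁ x I) (F₁S S I) S)
    (hdF₁I : ∀ S I : ℝ, 0 ≤ S → 0 ≤ I → HasDerivAt (fun y => F₁ S y) (F₁I S I) I)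
    (hdF₂S : ∀ S I : ℝ, 0 ≤ S → 0 ≤ I → HasDerivAt (fun x => F₂ x I) (F₂S S I) S)
    (hdF₂I : ∀ S I : ℝ, 0 ≤ S → 0 ≤ I → HasDerivAt (fun y => F₂ S y) (F₂I S I) I)
    (hdf₁S : ∀ S I : ℝ, 0 ≤ S → 0 ≤ I → HasDerivAt (fun x => f₁ x I) (f₁S S I) S)
    (hdf₁I : ∀ S I : ℝ, 0 ≤ S → 0 ≤ I → HasDerivAt (fun y => f₁ S y) (f₁I S I) I)
    (hdf₂S : ∀ S I : ℝ, 0 ≤ S → 0 ≤ I → HasDerivAt (fun x => f₂ x I) (f₂S S I) S)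
    (hdf₂I : ∀ S I : ℝ, 0 ≤ S → 0 ≤ I → HasDerivAt (fun y => f₂ S y) (f₂I S I) I)
    (hH2f₁S : ∀ S I : ℝ, 0 ≤ S → 0 ≤ I → 0 < f₁S S I)
    (hH2f₁I : ∀ S I : ℝ, 0 ≤ S → 0 ≤ I → f₁I S I ≤ 0)
    (hH2f₂S : ∀ S I : ℝ, 0 ≤ S → 0 ≤ I → 0 < f₂S S I)
    (hH2f₂I : ∀ S I : ℝ, 0 ≤ S → 0 ≤ I → f₂I S I ≤ 0)
    (St Vt It : ℝ) (hSt : 0 < St) (hVt : 0 < Vt) (hIt : 0 < It)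
    (heq1 : Λ - F₂ St It - lam * St = 0)
    (heq2 : r * St - (μ + k * It) * Vt = 0)
    (heq3 : F₂ St It + k * It * Vt - α₂ * It = 0)
    (hF₂Ile : F₂I St It ≤ 0) (hf₂Ilt : f₂I St It < 0)
    (Rt₁ : ℝ) (hRt₁ : Rt₁ = F₁I St 0 / α₁)
    (J : Matrix (Fin 4) (Fin 4) ℝ)
    (hJ : J = !![-(F₁S St 0) - F₂S St It - lam, 0, -(F₁I St 0), -(F₂I St It);
                 r, -μ - k * It, 0, -(k * Vt);
                 F₁S St 0, 0, F₁I St 0 - α₁, 0;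
                 F₂S St It, k * It, 0, F₂I St It + k * Vt - α₂]) :
    (Rt₁ < 1 →
      ∀ z : ℂ, ((J.map (fun x : ℝ => (x : ℂ))).charpoly).IsRoot z → z.re < 0) ∧
    (1 < Rt₁ → 0 < α₁ * (Rt₁ - 1) ∧ J.charpoly.IsRoot (α₁ * (Rt₁ - 1))) := by
  have hα₁0 : 0 < α₁ := lt_trans hμ hα₁
  -- derivative identities
  have hF1S0 : F₁S St 0 = 0 := by
    have h2 : HasDerivAt (fun x : ℝ => F₁ x 0) 0 St := by
      have hfun : (fun x : ℝ => F₁ x 0) = fun _ => (0 : ℝ) := funext fun x => by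
        rw [hH1₁]; ring
      rw [hfun]; exact hasDerivAt_const _ _
    exact (hdF₁S St 0 hSt.le le_rfl).unique h2
  have hF2S : F₂S St It = It * f₂S St It := by
    have h2 : HasDerivAt (fun x : ℝ => F₂ x It) (It * f₂S St It) St := by
      have hfun : (fun x : ℝ => F₂ x It) = fun x => It * f₂ x It := funext fun x => hH1₂ x It
      rw [hfun]; exact (hdf₂S St It hSt.le hIt.le).const_mul It
    exact (hdF₂S St It hSt.le hIt.le).unique h2
  have hF2I : F₂I St It = f₂ St It + It * f₂I St It := by
    have h2 : HasDerivAt (fun y : ℝ => F₂ St y) (1 * f₂ St It + It * f₂I St It) It := by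
      have hfun : (fun y : ℝ => F₂ St y) = fun y => y * f₂ St y := funext fun y => hH1₂ St y
      rw [hfun]; exact (hasDerivAt_id It).mul (hdf₂I St It hSt.le hIt.le)
    have h3 := (hdF₂I St It hSt.le hIt.le).unique h2
    linarith
  -- equilibrium relations
  have hf2eq : f₂ St It + k * Vt = α₂ := by
    have h := heq3
    rw [hH1₂ St It] at h
    have h' : It * (f₂ St It + k * Vt - α₂) = 0 := by linear_combination h
    have h'' := (mul_eq_zero.mp h').resolve_left hIt.ne'
    linarith
  have hf2nn : 0 ≤ f₂ St It := by
    have h := hF₂nn St It hSt.le hIt.le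
    rw [hH1₂ St It] at h
    nlinarith
  have hkIt := mul_pos hk hIt
  have hkVt := mul_pos hk hVt
  have hfS : 0 < It * f₂S St It := mul_pos hIt (hH2f₂S St It hSt.le hIt.le)
  obtain ⟨sv, hsv, hsveq⟩ : ∃ x : ℝ, 0 < x ∧ It * f₂I St It = -x :=
    ⟨-(It * f₂I St It), by nlinarith [mul_neg_of_pos_of_neg hIt hf₂Ilt], by ring⟩
  have hble : f₂ St It ≤ sv := by
    have h := hF₂Ile
    rw [hF2I, hsveq] at h
    linarith
  -- the Jacobian in normalized form
  have hJeq : J = !![-F₂S St It - lam, 0, -F₁I St 0, -F₂I St It;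
                     r, -μ - k * It, 0, -(k * Vt);
                     0, 0, F₁I St 0 - α₁, 0;
                     F₂S St It, k * It, 0, F₂I St It + k * Vt - α₂] := by
    rw [hJ]
    ext i j
    fin_cases i <;> fin_cases j <;> simp [hF1S0]
  -- cubic coefficients
  set A2 : ℝ := F₂S St It + lam + (μ + k * It) - (F₂I St It + k * Vt - α₂) with hA2
  set A1 : ℝ := (F₂S St It + lam) * (μ + k * It)
      - (F₂S St It + lam) * (F₂I St It + k * Vt - α₂)
      - (μ + k * It) * (F₂I St It + k * Vt - α₂)
      + k * Vt * (k * It) + F₂S St It * F₂I St It with hA1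
  set A0 : ℝ := -((F₂S St It + lam) * (μ + k * It) * (F₂I St It + k * Vt - α₂))
      + (F₂S St It + lam) * (k * Vt) * (k * It)
      + F₂I St It * (r * (k * It) + F₂S St It * (μ + k * It)) with hA0
  -- positivity of the Routh–Hurwitz data
  have hq : (0:ℝ) < μ + k * It := by linarith
  have hp : (0:ℝ) < It * f₂S St It + (r + μ) := by linarith
  have hA2pos : 0 < A2 := by
    rw [hA2, hF2S, hF2I, hsveq, hlam, ← hf2eq]
    linarith
  have hA1pos : 0 < A1 := by
    rw [hA1, hF2S, hF2I, hsveq, hlam, ← hf2eq]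
    nlinarith [mul_pos hp hq, mul_pos (add_pos hr hμ) hsv, mul_pos hq hsv,
      mul_pos hkVt hkIt, mul_nonneg hfS.le hf2nn]
  have hA0pos : 0 < A0 := by
    rw [hA0, hF2S, hF2I, hsveq, hlam, ← hf2eq]
    nlinarith [mul_pos (mul_pos hsv hμ) (show (0:ℝ) < r + μ + k * It by linarith),
      mul_pos (mul_pos hkVt hkIt) hp,
      mul_nonneg hf2nn (by nlinarith [mul_pos hr hkIt, mul_pos hfS hq] :
        (0:ℝ) ≤ r * (k * It) + (It * f₂S St It) * (μ + k * It))]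
  have hRHpos : A0 < A2 * A1 := by
    rw [hA0, hA2, hA1, hF2S, hF2I, hsveq, hlam, ← hf2eq]
    nlinarith [mul_pos (show (0:ℝ) < It * f₂S St It + (r + μ) + sv by linarith)
        (show (0:ℝ) < (It * f₂S St It + (r + μ)) * (μ + k * It) + (μ + k * It) ^ 2
            + (μ + k * It) * sv + sv * (r + μ) by
          nlinarith [mul_pos hp hq, pow_pos hq 2, mul_pos hq hsv,
            mul_pos hsv (add_pos hr hμ)]),
      mul_pos (show (0:ℝ) < μ + k * It + sv by linarith) (mul_pos hkVt hkIt),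
      mul_nonneg (mul_nonneg hfS.le hf2nn)
        (show (0:ℝ) ≤ It * f₂S St It + (r + μ) + sv by linarith),
      mul_nonneg (mul_nonneg hr.le hkIt.le) (show (0:ℝ) ≤ sv - f₂ St It by linarith)]
  -- evaluation of the characteristic polynomials
  have hevalR : ∀ x : ℝ, J.charpoly.eval x
      = (x - (F₁I St 0 - α₁)) * (x ^ 3 + A2 * x ^ 2 + A1 * x + A0) := by
    intro x
    rw [charpoly_eval', hJeq]
    exact det_factor' (F₂S St It) (F₂I St It) (F₁I St 0) (k * Vt) (k * It)
      (F₂I St It + k * Vt - α₂) lam r μ α₁ x _ _ _ _ rfl (by rw [hA2])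
      (by rw [hA1]; try ring) (by rw [hA0]; try ring)
  have hJCeq : J.map (fun x : ℝ => (x : ℂ))
      = !![-(F₂S St It : ℂ) - (lam : ℂ), 0, -(F₁I St 0 : ℂ), -(F₂I St It : ℂ);
           (r : ℂ), -(μ : ℂ) - (k : ℂ) * (It : ℂ), 0, -((k : ℂ) * (Vt : ℂ));
           0, 0, (F₁I St 0 : ℂ) - (α₁ : ℂ), 0;
           (F₂S St It : ℂ), (k : ℂ) * (It : ℂ), 0,
             (F₂I St It : ℂ) + (k : ℂ) * (Vt : ℂ) - (α₂ : ℂ)] := by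
    rw [hJeq]
    ext i j
    fin_cases i <;> fin_cases j <;> simp [Matrix.map_apply] <;> push_cast <;> ring
  have hevalC : ∀ z : ℂ, ((J.map (fun x : ℝ => (x : ℂ))).charpoly).eval z
      = (z - ((F₁I St 0 - α₁ : ℝ) : ℂ))
        * (z ^ 3 + (A2 : ℂ) * z ^ 2 + (A1 : ℂ) * z + (A0 : ℂ)) := by
    intro z
    rw [charpoly_eval', hJCeq]
    exact det_factor' _ _ _ _ _ _ _ _ _ _ z _ _ _ _ (by push_cast; ring)
      (by rw [hA2]; push_cast; ring) (by rw [hA1]; push_cast; ring)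
      (by rw [hA0]; push_cast; ring)
  have hβval : F₁I St 0 = Rt₁ * α₁ := by
    rw [hRt₁]; field_simp
  constructor
  · intro hR z hz
    have hz' : ((J.map (fun x : ℝ => (x : ℂ))).charpoly).eval z = 0 := hz
    rw [hevalC z] at hz'
    rcases mul_eq_zero.mp hz' with h | h
    · have hzre : z = ((F₁I St 0 - α₁ : ℝ) : ℂ) := by
        have := sub_eq_zero.mp h
        exact this
      rw [hzre, Complex.ofReal_re]
      nlinarith
    · exact cubic_root_re_neg A2 A1 A0 hA2pos hA1pos hA0pos hRHpos z h
  · intro hR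
    refine ⟨mul_pos hα₁0 (by linarith), ?_⟩
    have hx : α₁ * (Rt₁ - 1) = F₁I St 0 - α₁ := by rw [hβval]; ring
    show J.charpoly.eval (α₁ * (Rt₁ - 1)) = 0
    rw [hevalR, hx, sub_self, zero_mul]
end

section
/- Under hypotheses H1–H2, let (S*, V₁*, I₁*, I₂*) be an endemic equilibrium of system (3) (all four components positive, satisfying Λ − F₁(S*, I₁*) − F₂(S*, I₂*) − λS* = 0, rS* − (μ + kI₂*)V₁* = 0, F₁(S*, I₁*) − α₁I₁* = 0, F₂(S*, I₂*) + kI₂*V₁* − α₂I₂* = 0), and write the characteristic polynomial of the Jacobian matrix of system (3) at E₃ = (S*, V₁*, I₁*, I₂*) as X⁴ + c₁X³ + c₂X² + c₃X + c₄. If c₁c₂ − c₃ > 0 and c₁c₂c₃ − c₃² − c₁²c₄ > 0, then every complex eigenvalue of this Jacobian has negative real part. -/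
open Polynomial

/-!
Writing `Fᵢ = I fᵢ` and using the equilibrium equations, the Jacobian at E₃ takes a form in
which H2 fixes the sign of every entry: its trace is negative, so `c₁ > 0`, and its determinant
`c₄` is a sum of nonnegative terms one of which is positive. The Routh–Hurwitz criterion for
quartics then applies. A root with nonnegative real part cannot be real, since all coefficients
are positive; a nonreal one gives a real factor `X² + pX + q` with `p ≤ 0` and a cofactor
`X² + sX + t` with `s > 0`, and then `c₁c₂c₃ − c₃² − c₁²c₄ = ps((q − t)² + c₁c₃) ≤ 0`.
-/

section RouthHurwitz

variable {c₁ c₂ c₃ c₄ : ℝ}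

theorem quartic_coeffs_eq_of_common_nonreal_root {p q : ℝ} {z : ℂ}
    (hquad : z ^ 2 + p * z + q = 0)
    (hz : z ^ 4 + c₁ * z ^ 3 + c₂ * z ^ 2 + c₃ * z + c₄ = 0) (him : z.im ≠ 0) :
    ∃ s t : ℝ, c₁ = p + s ∧ c₂ = q + t + p * s ∧ c₃ = p * t + q * s ∧ c₄ = q * t := by
  -- the remainder `u X + v` of the division by `X² + pX + q` vanishes at the nonreal `z`
  set s := c₁ - p
  set t := c₂ - q - p * s
  set u := c₃ - p * t - q * s
  set v := c₄ - q * t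
  have hrem : (u : ℂ) * z + v = 0 := by
    push_cast [u, v, t, s]
    linear_combination hz - (z ^ 2 + (c₁ - p) * z + (c₂ - q - p * (c₁ - p))) * hquad
  have hu : u = 0 := by
    have := congrArg Complex.im hrem
    simp only [Complex.add_im, Complex.mul_im, Complex.ofReal_re, Complex.ofReal_im,
      zero_mul, add_zero, Complex.zero_im] at this
    exact (mul_eq_zero.mp this).resolve_right him
  have hv : v = 0 := by
    simpa [hu] using hrem
  exact ⟨s, t, by ring, by ring, by linarith, by linarith⟩

theorem hurwitz_det_nonpos_of_quadratic_factor {p q s t : ℝ} (hp : p ≤ 0)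
    (h₁ : 0 < c₁) (h₃ : 0 < c₃) (e₁ : c₁ = p + s) (e₂ : c₂ = q + t + p * s)
    (e₃ : c₃ = p * t + q * s) (e₄ : c₄ = q * t) :
    c₁ * c₂ * c₃ - c₃ ^ 2 - c₁ ^ 2 * c₄ ≤ 0 := by
  have hs : 0 ≤ s := by linarith
  have hΔ : c₁ * c₂ * c₃ - c₃ ^ 2 - c₁ ^ 2 * c₄ = p * s * ((q - t) ^ 2 + c₁ * c₃) := by
    subst e₁ e₂ e₃ e₄; ring
  rw [hΔ]
  exact mul_nonpos_of_nonpos_of_nonneg (mul_nonpos_of_nonpos_of_nonneg hp hs) (by positivity)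

theorem re_neg_of_isRoot_quartic (h₁ : 0 < c₁) (h₄ : 0 < c₄)
    (hRH1 : 0 < c₁ * c₂ - c₃) (hRH2 : 0 < c₁ * c₂ * c₃ - c₃ ^ 2 - c₁ ^ 2 * c₄) {z : ℂ}
    (hz : ((X ^ 4 + C c₁ * X ^ 3 + C c₂ * X ^ 2 + C c₃ * X + C c₄).map
      Complex.ofRealHom).IsRoot z) :
    z.re < 0 := by
  have h₃ : 0 < c₃ := by nlinarith
  have h₂ : 0 < c₂ := by nlinarith
  have hz' : z ^ 4 + c₁ * z ^ 3 + c₂ * z ^ 2 + c₃ * z + c₄ = 0 := by simpa using hz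
  by_contra! hre
  by_cases him : z.im = 0
  · have hreal : z = z.re := Complex.ext rfl (by simp [him])
    rw [hreal] at hz'
    have hroot : z.re ^ 4 + c₁ * z.re ^ 3 + c₂ * z.re ^ 2 + c₃ * z.re + c₄ = 0 := by
      exact_mod_cast hz'
    have hpos : 0 < z.re ^ 4 + c₁ * z.re ^ 3 + c₂ * z.re ^ 2 + c₃ * z.re + c₄ := by positivity
    exact hpos.ne' hroot
  · have hquad : z ^ 2 + (-2 * z.re : ℝ) * z + Complex.normSq z = 0 := by
      apply Complex.ext <;> simp [Complex.normSq_apply, pow_two] <;> ring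
    obtain ⟨s, t, e₁, e₂, e₃, e₄⟩ := quartic_coeffs_eq_of_common_nonreal_root hquad hz' him
    exact (hurwitz_det_nonpos_of_quadratic_factor (by linarith) h₁ h₃ e₁ e₂ e₃ e₄).not_gt hRH2

end RouthHurwitz

theorem Matrix.trace_eq_neg_and_det_eq_of_charpoly_eq {R : Type*} [CommRing R]
    {M : Matrix (Fin 4) (Fin 4) R} {c₁ c₂ c₃ c₄ : R}
    (h : M.charpoly = X ^ 4 + C c₁ * X ^ 3 + C c₂ * X ^ 2 + C c₃ * X + C c₄) :
    M.trace = -c₁ ∧ M.det = c₄ := by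
  constructor
  · simpa [h, coeff_X, coeff_C] using M.trace_eq_neg_charpoly_coeff
  · simpa [h, coeff_X, coeff_C, Even.neg_one_pow (by decide : Even 4)] using
      M.det_eq_sign_charpoly_coeff

theorem HasDerivAt.unique_const_mul {𝕜 : Type*} [NontriviallyNormedField 𝕜] {F f : 𝕜 → 𝕜}
    {a b c x : 𝕜} (hF : HasDerivAt F a x) (hFf : ∀ y, F y = c * f y) (hf : HasDerivAt f b x) :
    a = c * b := by
  obtain rfl : F = fun y => c * f y := funext hFf
  exact hF.unique (hf.const_mul c)

theorem HasDerivAt.unique_id_mul {𝕜 : Type*} [NontriviallyNormedField 𝕜] {F f : 𝕜 → 𝕜}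
    {a b x : 𝕜} (hF : HasDerivAt F a x) (hFf : ∀ y, F y = y * f y) (hf : HasDerivAt f b x) :
    a = f x + x * b := by
  obtain rfl : F = fun y => y * f y := funext hFf
  simpa using hF.unique ((hasDerivAt_id x).mul hf)

theorem incidence_value_and_partials {F f : ℝ → ℝ → ℝ} {FS FI fS fI S I β : ℝ}
    (hFf : ∀ S I, F S I = I * f S I) (hI : I ≠ 0) (hβ : F S I = β * I)
    (hFS : HasDerivAt (fun x => F x I) FS S) (hFI : HasDerivAt (F S) FI I)
    (hfS : HasDerivAt (fun x => f x I) fS S) (hfI : HasDerivAt (f S) fI I) :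
    f S I = β ∧ FS = I * fS ∧ FI = β + I * fI := by
  have hf : f S I = β := mul_left_cancel₀ hI (by linear_combination hβ - hFf S I)
  exact ⟨hf, hFS.unique_const_mul (hFf · I) hfS, hf ▸ hFI.unique_id_mul (hFf S) hfI⟩

/-- The Jacobian at E₃ in the variables `A = I₁*·∂f₁/∂S`, `B = I₂*·∂f₂/∂S`, `M₁ = -I₁*·∂f₁/∂I`,
`M₂ = -I₂*·∂f₂/∂I`, `G = f₂(S*, I₂*) = α₂ - kV₁*`, `K = kI₂*`, `W = kV₁*`, all nonnegative. -/
def endemicJacobian (A B M₁ M₂ G K W r μ α₁ : ℝ) : Matrix (Fin 4) (Fin 4) ℝ :=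
  !![-(A + B + r + μ), 0, -(α₁ - M₁), -(G - M₂);
     r, -(μ + K), 0, -W;
     A, 0, -M₁, 0;
     B, K, 0, -M₂]

section EndemicJacobian

variable {A B M₁ M₂ G K W r μ α₁ : ℝ}

theorem trace_endemicJacobian :
    (endemicJacobian A B M₁ M₂ G K W r μ α₁).trace = -(A + B + r + 2 * μ + K + M₁ + M₂) := by
  simp only [endemicJacobian, Matrix.trace, Fin.sum_univ_four, Matrix.diag_apply, Matrix.of_apply,
    Matrix.cons_val', Matrix.cons_val_fin_one, Matrix.cons_val_zero, Matrix.cons_val_one,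
    Matrix.cons_val]
  ring

theorem det_endemicJacobian :
    (endemicJacobian A B M₁ M₂ G K W r μ α₁).det =
      A * α₁ * (K * M₂ + K * W + μ * M₂) +
        M₁ * ((r + B) * K * (G + W) + μ * K * M₂ + μ * K * W + μ * (r + μ) * M₂ + B * μ * G) := by
  simp [endemicJacobian, Matrix.det_succ_row_zero, Fin.sum_univ_succ, Fin.succAbove]
  ring

theorem trace_endemicJacobian_neg (hA : 0 ≤ A) (hB : 0 ≤ B) (hM₁ : 0 ≤ M₁) (hM₂ : 0 ≤ M₂)
    (hK : 0 ≤ K) (hr : 0 ≤ r) (hμ : 0 < μ) :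
    (endemicJacobian A B M₁ M₂ G K W r μ α₁).trace < 0 := by
  rw [trace_endemicJacobian]
  linarith

theorem det_endemicJacobian_pos (hA : 0 < A) (hB : 0 ≤ B) (hM₁ : 0 ≤ M₁) (hM₂ : 0 ≤ M₂)
    (hG : 0 ≤ G) (hK : 0 < K) (hW : 0 < W) (hr : 0 ≤ r) (hμ : 0 ≤ μ) (hα₁ : 0 < α₁) :
    0 < (endemicJacobian A B M₁ M₂ G K W r μ α₁).det := by
  rw [det_endemicJacobian]
  positivity

end EndemicJacobian

theorem jacobian_at_E3_general
    (r μ k α₁ α₂ lam : ℝ)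
    (hr : 0 < r) (hμ : 0 < μ) (hk : 0 < k)
    (hα₁ : μ < α₁) (hlam : lam = r + μ)
    (F₁ F₂ f₁ f₂ F₁S F₁I F₂S F₂I f₁S f₁I f₂S f₂I : ℝ → ℝ → ℝ)
    (hF₂nn : ∀ S I : ℝ, 0 ≤ S → 0 ≤ I → 0 ≤ F₂ S I)
    (hH1₁ : ∀ S I : ℝ, F₁ S I = I * f₁ S I)
    (hH1₂ : ∀ S I : ℝ, F₂ S I = I * f₂ S I)
    (hdF₁S : ∀ S I : ℝ, 0 ≤ S → 0 ≤ I → HasDerivAt (fun x => F₁ x I) (F₁S S I) S)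
    (hdF₁I : ∀ S I : ℝ, 0 ≤ S → 0 ≤ I → HasDerivAt (fun y => F₁ S y) (F₁I S I) I)
    (hdF₂S : ∀ S I : ℝ, 0 ≤ S → 0 ≤ I → HasDerivAt (fun x => F₂ x I) (F₂S S I) S)
    (hdF₂I : ∀ S I : ℝ, 0 ≤ S → 0 ≤ I → HasDerivAt (fun y => F₂ S y) (F₂I S I) I)
    (hdf₁S : ∀ S I : ℝ, 0 ≤ S → 0 ≤ I → HasDerivAt (fun x => f₁ x I) (f₁S S I) S)
    (hdf₁I : ∀ S I : ℝ, 0 ≤ S → 0 ≤ I → HasDerivAt (fun y => f₁ S y) (f₁I S I) I)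
    (hdf₂S : ∀ S I : ℝ, 0 ≤ S → 0 ≤ I → HasDerivAt (fun x => f₂ x I) (f₂S S I) S)
    (hdf₂I : ∀ S I : ℝ, 0 ≤ S → 0 ≤ I → HasDerivAt (fun y => f₂ S y) (f₂I S I) I)
    (hH2f₁S : ∀ S I : ℝ, 0 ≤ S → 0 ≤ I → 0 < f₁S S I)
    (hH2f₁I : ∀ S I : ℝ, 0 ≤ S → 0 ≤ I → f₁I S I ≤ 0)
    (hH2f₂S : ∀ S I : ℝ, 0 ≤ S → 0 ≤ I → 0 < f₂S S I)
    (hH2f₂I : ∀ S I : ℝ, 0 ≤ S → 0 ≤ I → f₂I S I ≤ 0)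
    (Ss Vs Is1 Is2 : ℝ) (hSs : 0 < Ss) (hVs : 0 < Vs) (hIs1 : 0 < Is1) (hIs2 : 0 < Is2)
    (heq3 : F₁ Ss Is1 - α₁ * Is1 = 0)
    (heq4 : F₂ Ss Is2 + k * Is2 * Vs - α₂ * Is2 = 0)
    (J : Matrix (Fin 4) (Fin 4) ℝ)
    (hJ : J = !![-(F₁S Ss Is1) - F₂S Ss Is2 - lam, 0, -(F₁I Ss Is1), -(F₂I Ss Is2);
                 r, -μ - k * Is2, 0, -(k * Vs);
                 F₁S Ss Is1, 0, F₁I Ss Is1 - α₁, 0;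
                 F₂S Ss Is2, k * Is2, 0, F₂I Ss Is2 + k * Vs - α₂])
    (c₁ c₂ c₃ c₄ : ℝ)
    (hc : J.charpoly = X ^ 4 + C c₁ * X ^ 3 + C c₂ * X ^ 2 + C c₃ * X + C c₄)
    (hRH1 : 0 < c₁ * c₂ - c₃)
    (hRH2 : 0 < c₁ * c₂ * c₃ - c₃ ^ 2 - c₁ ^ 2 * c₄) :
    ∀ z : ℂ, ((J.map (fun x : ℝ => (x : ℂ))).charpoly).IsRoot z → z.re < 0 := by
  subst hlam
  obtain ⟨-, hF₁S, hF₁I⟩ := incidence_value_and_partials hH1₁ hIs1.ne' (β := α₁)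
    (by linear_combination heq3) (hdF₁S _ _ hSs.le hIs1.le) (hdF₁I _ _ hSs.le hIs1.le)
    (hdf₁S _ _ hSs.le hIs1.le) (hdf₁I _ _ hSs.le hIs1.le)
  obtain ⟨hf₂, hF₂S, hF₂I⟩ := incidence_value_and_partials hH1₂ hIs2.ne' (β := α₂ - k * Vs)
    (by linear_combination heq4) (hdF₂S _ _ hSs.le hIs2.le) (hdF₂I _ _ hSs.le hIs2.le)
    (hdf₂S _ _ hSs.le hIs2.le) (hdf₂I _ _ hSs.le hIs2.le)
  have hJ' : J = endemicJacobian (Is1 * f₁S Ss Is1) (Is2 * f₂S Ss Is2) (-(Is1 * f₁I Ss Is1))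
      (-(Is2 * f₂I Ss Is2)) (α₂ - k * Vs) (k * Is2) (k * Vs) r μ α₁ := by
    rw [hJ, hF₁S, hF₂S, hF₁I, hF₂I, endemicJacobian]
    congr 1
    simp only [Matrix.vecCons_inj, and_true, true_and]
    constructorm* _ ∧ _ <;> ring
  have hA := mul_pos hIs1 (hH2f₁S _ _ hSs.le hIs1.le)
  have hB := mul_pos hIs2 (hH2f₂S _ _ hSs.le hIs2.le)
  have hM₁ := neg_nonneg.mpr (mul_nonpos_of_nonneg_of_nonpos hIs1.le (hH2f₁I _ _ hSs.le hIs1.le))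
  have hM₂ := neg_nonneg.mpr (mul_nonpos_of_nonneg_of_nonpos hIs2.le (hH2f₂I _ _ hSs.le hIs2.le))
  have hG : 0 ≤ α₂ - k * Vs :=
    hf₂ ▸ nonneg_of_mul_nonneg_right (hH1₂ Ss Is2 ▸ hF₂nn _ _ hSs.le hIs2.le) hIs2
  obtain ⟨htr, hdet⟩ := J.trace_eq_neg_and_det_eq_of_charpoly_eq hc
  intro z hz
  have hz' : (J.charpoly.map Complex.ofRealHom).IsRoot z := by rwa [← Matrix.charpoly_map]
  rw [hc] at hz'
  refine re_neg_of_isRoot_quartic ?_ ?_ hRH1 hRH2 hz'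
  · suffices J.trace < 0 by linarith
    rw [hJ']
    exact trace_endemicJacobian_neg hA.le hB.le hM₁ hM₂ (mul_pos hk hIs2).le hr.le hμ
  · rw [← hdet, hJ']
    exact det_endemicJacobian_pos hA hB.le hM₁ hM₂ hG (mul_pos hk hIs2) (mul_pos hk hVs) hr.le
      hμ.le (hμ.trans hα₁)

/-- Theorem 5.5: local stability of the endemic equilibrium
E₃ = (S*, V₁*, I₁*, I₂*) under the Routh–Hurwitz conditions c₁c₂ − c₃ > 0 and
c₁c₂c₃ − c₃² − c₁²c₄ > 0 for the characteristic polynomial X⁴+c₁X³+c₂X²+c₃X+c₄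
of the Jacobian at E₃. -/
theorem jacobian_at_E3
    (Λ r μ k α₁ α₂ lam : ℝ)
    (hΛ : 0 < Λ) (hr : 0 < r) (hμ : 0 < μ) (hk : 0 < k)
    (hα₁ : μ < α₁) (hα₂ : μ < α₂) (hlam : lam = r + μ)
    (F₁ F₂ f₁ f₂ F₁S F₁I F₂S F₂I f₁S f₁I f₂S f₂I : ℝ → ℝ → ℝ)
    (hF₁nn : ∀ S I : ℝ, 0 ≤ S → 0 ≤ I → 0 ≤ F₁ S I)
    (hF₂nn : ∀ S I : ℝ, 0 ≤ S → 0 ≤ I → 0 ≤ F₂ S I)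
    (hF₁C1 : ContDiffOn ℝ 1 (fun p : ℝ × ℝ => F₁ p.1 p.2) {p : ℝ × ℝ | 0 ≤ p.1 ∧ 0 ≤ p.2})
    (hF₂C1 : ContDiffOn ℝ 1 (fun p : ℝ × ℝ => F₂ p.1 p.2) {p : ℝ × ℝ | 0 ≤ p.1 ∧ 0 ≤ p.2})
    (hf₁C1 : ContDiffOn ℝ 1 (fun p : ℝ × ℝ => f₁ p.1 p.2) {p : ℝ × ℝ | 0 ≤ p.1 ∧ 0 ≤ p.2})
    (hf₂C1 : ContDiffOn ℝ 1 (fun p : ℝ × ℝ => f₂ p.1 p.2) {p : ℝ × ℝ | 0 ≤ p.1 ∧ 0 ≤ p.2})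
    (hH1₁ : ∀ S I : ℝ, F₁ S I = I * f₁ S I)
    (hH1₂ : ∀ S I : ℝ, F₂ S I = I * f₂ S I)
    (hF₁zero : ∀ S I : ℝ, 0 ≤ S → 0 ≤ I → F₁ 0 I = 0 ∧ F₁ S 0 = 0)
    (hF₂zero : ∀ S I : ℝ, 0 ≤ S → 0 ≤ I → F₂ 0 I = 0 ∧ F₂ S 0 = 0)
    (hdF₁S : ∀ S I : ℝ, 0 ≤ S → 0 ≤ I → HasDerivAt (fun x => F₁ x I) (F₁S S I) S)
    (hdF₁I : ∀ S I : ℝ, 0 ≤ S → 0 ≤ I → HasDerivAt (fun y => F₁ S y) (F₁I S I) I)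
    (hdF₂S : ∀ S I : ℝ, 0 ≤ S → 0 ≤ I → HasDerivAt (fun x => F₂ x I) (F₂S S I) S)
    (hdF₂I : ∀ S I : ℝ, 0 ≤ S → 0 ≤ I → HasDerivAt (fun y => F₂ S y) (F₂I S I) I)
    (hdf₁S : ∀ S I : ℝ, 0 ≤ S → 0 ≤ I → HasDerivAt (fun x => f₁ x I) (f₁S S I) S)
    (hdf₁I : ∀ S I : ℝ, 0 ≤ S → 0 ≤ I → HasDerivAt (fun y => f₁ S y) (f₁I S I) I)
    (hdf₂S : ∀ S I : ℝ, 0 ≤ S → 0 ≤ I → HasDerivAt (fun x => f₂ x I) (f₂S S I) S)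
    (hdf₂I : ∀ S I : ℝ, 0 ≤ S → 0 ≤ I → HasDerivAt (fun y => f₂ S y) (f₂I S I) I)
    (hH2f₁S : ∀ S I : ℝ, 0 ≤ S → 0 ≤ I → 0 < f₁S S I)
    (hH2f₁I : ∀ S I : ℝ, 0 ≤ S → 0 ≤ I → f₁I S I ≤ 0)
    (hH2f₂S : ∀ S I : ℝ, 0 ≤ S → 0 ≤ I → 0 < f₂S S I)
    (hH2f₂I : ∀ S I : ℝ, 0 ≤ S → 0 ≤ I → f₂I S I ≤ 0)
    (Ss Vs Is1 Is2 : ℝ) (hSs : 0 < Ss) (hVs : 0 < Vs) (hIs1 : 0 < Is1) (hIs2 : 0 < Is2)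
    (heq1 : Λ - F₁ Ss Is1 - F₂ Ss Is2 - lam * Ss = 0)
    (heq2 : r * Ss - (μ + k * Is2) * Vs = 0)
    (heq3 : F₁ Ss Is1 - α₁ * Is1 = 0)
    (heq4 : F₂ Ss Is2 + k * Is2 * Vs - α₂ * Is2 = 0)
    (J : Matrix (Fin 4) (Fin 4) ℝ)
    (hJ : J = !![-(F₁S Ss Is1) - F₂S Ss Is2 - lam, 0, -(F₁I Ss Is1), -(F₂I Ss Is2);
                 r, -μ - k * Is2, 0, -(k * Vs);
                 F₁S Ss Is1, 0, F₁I Ss Is1 - α₁, 0;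
                 F₂S Ss Is2, k * Is2, 0, F₂I Ss Is2 + k * Vs - α₂])
    (c₁ c₂ c₃ c₄ : ℝ)
    (hc : J.charpoly = X ^ 4 + C c₁ * X ^ 3 + C c₂ * X ^ 2 + C c₃ * X + C c₄)
    (hRH1 : 0 < c₁ * c₂ - c₃)
    (hRH2 : 0 < c₁ * c₂ * c₃ - c₃ ^ 2 - c₁ ^ 2 * c₄) :
    ∀ z : ℂ, ((J.map (fun x : ℝ => (x : ℂ))).charpoly).IsRoot z → z.re < 0 :=
  jacobian_at_E3_general r μ k α₁ α₂ lam hr hμ hk hα₁ hlam F₁ F₂ f₁ f₂ F₁S F₁I F₂S F₂I f₁S f₁I f₂S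
    f₂I hF₂nn hH1₁ hH1₂ hdF₁S hdF₁I hdF₂S hdF₂I hdf₁S hdf₁I hdf₂S hdf₂I hH2f₁S hH2f₁I hH2f₂S hH2f₂I
    Ss Vs Is1 Is2 hSs hVs hIs1 hIs2 heq3 heq4 J hJ c₁ c₂ c₃ c₄ hc hRH1 hRH2
end

section
/- Let f : ℝ × ℝ → ℝ be C¹ on the first quadrant with ∂f/∂I ≤ 0 there, set F(S, I) = I·f(S, I), and assume ∂F/∂I ≥ 0 on the first quadrant. Then for all S ≥ 0, a > 0 and I > 0 with F(S, a) > 0 and F(S, I) > 0: (I/a − F(S, I)/F(S, a))·(F(S, a)/F(S, I) − 1) ≤ 0. -/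
/-- Lemma 5.1: sign lemma for an incidence function `F(S,I) = I·f(S,I)`
which is C¹ with `∂f/∂I ≤ 0` and `∂F/∂I ≥ 0` on the first quadrant. -/
theorem sign_lemma (f fI F FI : ℝ → ℝ → ℝ)
    (hfC1 : ContDiffOn ℝ 1 (fun p : ℝ × ℝ => f p.1 p.2) {p : ℝ × ℝ | 0 ≤ p.1 ∧ 0 ≤ p.2})
    (hdfI : ∀ S I : ℝ, 0 ≤ S → 0 ≤ I → HasDerivAt (fun y => f S y) (fI S I) I)
    (hfI : ∀ S I : ℝ, 0 ≤ S → 0 ≤ I → fI S I ≤ 0)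
    (hF : ∀ S I : ℝ, F S I = I * f S I)
    (hdFI : ∀ S I : ℝ, 0 ≤ S → 0 ≤ I → HasDerivAt (fun y => F S y) (FI S I) I)
    (hFI : ∀ S I : ℝ, 0 ≤ S → 0 ≤ I → 0 ≤ FI S I) :
    ∀ S a I : ℝ, 0 ≤ S → 0 < a → 0 < I → 0 < F S a → 0 < F S I →
      (I / a - F S I / F S a) * (F S a / F S I - 1) ≤ 0 := by
  intro S a I hS ha hI hFa hFI'
  -- F S is monotone on [0, ∞)
  have hFmono : MonotoneOn (F S) (Set.Ici 0) := by
    apply monotoneOn_of_deriv_nonneg (convex_Ici 0)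
    · intro x hx
      exact (hdFI S x hS hx).continuousAt.continuousWithinAt
    · intro x hx
      rw [interior_Ici] at hx
      exact (hdFI S x hS hx.le).differentiableAt.differentiableWithinAt
    · intro x hx
      rw [interior_Ici] at hx
      rw [(hdFI S x hS hx.le).deriv]
      exact hFI S x hS hx.le
  -- f S is antitone on [0, ∞)
  have hfanti : AntitoneOn (f S) (Set.Ici 0) := by
    apply antitoneOn_of_deriv_nonpos (convex_Ici 0)
    · intro x hx
      exact (hdfI S x hS hx).continuousAt.continuousWithinAt
    · intro x hx
      rw [interior_Ici] at hx
      exact (hdfI S x hS hx.le).differentiableAt.differentiableWithinAt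
    · intro x hx
      rw [interior_Ici] at hx
      rw [(hdfI S x hS hx.le).deriv]
      exact hfI S x hS hx.le
  rcases le_total a I with hle | hle
  · -- a ≤ I : second factor ≤ 0, first factor ≥ 0
    have h2 : F S a / F S I - 1 ≤ 0 := by
      have hmle : F S a ≤ F S I := hFmono (le_of_lt ha) (le_of_lt hI) hle
      have := (div_le_one hFI').mpr hmle
      linarith
    have hfle : f S I ≤ f S a := hfanti (le_of_lt ha) (le_of_lt hI) hle
    have h1 : F S I / F S a ≤ I / a := by
      rw [div_le_div_iff₀ hFa ha, hF S I, hF S a]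
      nlinarith [mul_le_mul_of_nonneg_left hfle (by positivity : (0:ℝ) ≤ I * a)]
    exact mul_nonpos_of_nonneg_of_nonpos (by linarith) h2
  · -- I ≤ a : second factor ≥ 0, first factor ≤ 0
    have h2 : 0 ≤ F S a / F S I - 1 := by
      have hmle : F S I ≤ F S a := hFmono (le_of_lt hI) (le_of_lt ha) hle
      have := (one_le_div hFI').mpr hmle
      linarith
    have hfle : f S a ≤ f S I := hfanti (le_of_lt hI) (le_of_lt ha) hle
    have h1 : I / a ≤ F S I / F S a := by
      rw [div_le_div_iff₀ ha hFa, hF S I, hF S a]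
      nlinarith [mul_le_mul_of_nonneg_left hfle (by positivity : (0:ℝ) ≤ I * a)]
    exact mul_nonpos_of_nonpos_of_nonneg (by linarith) h2
end

section
/- Let f : ℝ × ℝ → ℝ be C¹ on the first quadrant with ∂f/∂I ≤ 0 there, set F(S, I) = I·f(S, I), and assume ∂F/∂I ≥ 0 on the first quadrant. Let S̄, Ī > 0 with F(S̄, Ī) > 0. Then for all S > 0 and I > 0 with F(S, Ī) > 0 and F(S, I) > 0: 2 − F(S̄, Ī)/F(S, Ī) + F(S, I)/F(S, Ī) − I/Ī − Ī·f(S, I)/F(S̄, Ī) ≤ 0. -/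
lemma amgm3 (u v w : ℝ) (hu : 0 < u) (hv : 0 < v) (hw : 0 < w) (h : u * v * w = 1) :
    3 ≤ u + v + w := by
  nlinarith [sq_nonneg (u - v), sq_nonneg (v - w), sq_nonneg (u - w), sq_nonneg (u + v + w - 3),
    mul_pos hu hv, mul_pos hv hw, mul_pos hu hw, sq_nonneg (u + v + w)]

lemma mono_of_deriv (g g' : ℝ → ℝ) (hd : ∀ x : ℝ, 0 ≤ x → HasDerivAt g (g' x) x)
    (hg' : ∀ x : ℝ, 0 ≤ x → 0 ≤ g' x) : MonotoneOn g (Set.Ici 0) := by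
  apply monotoneOn_of_deriv_nonneg (convex_Ici 0)
  · exact fun x hx => (hd x hx).continuousAt.continuousWithinAt
  · intro x hx
    rw [interior_Ici] at hx
    exact ((hd x (le_of_lt hx)).differentiableAt).differentiableWithinAt
  · intro x hx
    rw [interior_Ici] at hx
    rw [(hd x (le_of_lt hx)).deriv]
    exact hg' x (le_of_lt hx)

/-- composite inequality from the proof of global stability of the strain-1
boundary equilibrium, for an incidence function `F(S,I) = I·f(S,I)` which is C¹ with
`∂f/∂I ≤ 0` and `∂F/∂I ≥ 0` on the first quadrant. -/
theorem composite_inequality (f fI F FI : ℝ → ℝ → ℝ)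
    (hfC1 : ContDiffOn ℝ 1 (fun p : ℝ × ℝ => f p.1 p.2) {p : ℝ × ℝ | 0 ≤ p.1 ∧ 0 ≤ p.2})
    (hdfI : ∀ S I : ℝ, 0 ≤ S → 0 ≤ I → HasDerivAt (fun y => f S y) (fI S I) I)
    (hfI : ∀ S I : ℝ, 0 ≤ S → 0 ≤ I → fI S I ≤ 0)
    (hF : ∀ S I : ℝ, F S I = I * f S I)
    (hdFI : ∀ S I : ℝ, 0 ≤ S → 0 ≤ I → HasDerivAt (fun y => F S y) (FI S I) I)
    (hFI : ∀ S I : ℝ, 0 ≤ S → 0 ≤ I → 0 ≤ FI S I)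
    (Sb Ib : ℝ) (hSb : 0 < Sb) (hIb : 0 < Ib) (hFb : 0 < F Sb Ib) :
    ∀ S I : ℝ, 0 < S → 0 < I → 0 < F S Ib → 0 < F S I →
      2 - F Sb Ib / F S Ib + F S I / F S Ib - I / Ib - Ib * f S I / F Sb Ib ≤ 0 := by
  intro S I hS hI hB hC
  set A := F Sb Ib with hA'
  set B := F S Ib with hB'
  set C := F S I with hC'
  -- monotonicity of F in I, antitonicity of f in I
  have hFmono : MonotoneOn (fun y => F S y) (Set.Ici 0) :=
    mono_of_deriv _ _ (fun x hx => hdFI S x hS.le hx) (fun x hx => hFI S x hS.le hx)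
  have hfanti : MonotoneOn (fun y => -f S y) (Set.Ici 0) :=
    mono_of_deriv _ _ (fun x hx => ((hdfI S x hS.le hx).neg))
      (fun x hx => neg_nonneg.mpr (hfI S x hS.le hx))
  -- key sign lemma: (I*B - Ib*C)*(B - C) ≤ 0
  have key : (I * B - Ib * C) * (B - C) ≤ 0 := by
    rcases le_total I Ib with h | h
    · have h1 : C ≤ B := hFmono (Set.mem_Ici.mpr hI.le) (Set.mem_Ici.mpr hIb.le) h
      have h2 : -f S I ≤ -f S Ib := hfanti (Set.mem_Ici.mpr hI.le) (Set.mem_Ici.mpr hIb.le) h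
      -- f S I ≥ f S Ib, i.e. C/I ≥ B/Ib, i.e. Ib*C ≥ I*B
      have h3 : I * B ≤ Ib * C := by
        have hfb : B = Ib * f S Ib := hF S Ib
        have hfc : C = I * f S I := hF S I
        have : f S Ib ≤ f S I := by linarith
        calc I * B = I * Ib * f S Ib := by rw [hfb]; ring
          _ ≤ I * Ib * f S I := by
              apply mul_le_mul_of_nonneg_left this (by positivity)
          _ = Ib * C := by rw [hfc]; ring
      nlinarith
    · have h1 : B ≤ C := hFmono (Set.mem_Ici.mpr hIb.le) (Set.mem_Ici.mpr hI.le) h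
      have h2 : -f S Ib ≤ -f S I := hfanti (Set.mem_Ici.mpr hIb.le) (Set.mem_Ici.mpr hI.le) h
      have h3 : Ib * C ≤ I * B := by
        have hfb : B = Ib * f S Ib := hF S Ib
        have hfc : C = I * f S I := hF S I
        have : f S I ≤ f S Ib := by linarith
        calc Ib * C = I * Ib * f S I := by rw [hfc]; ring
          _ ≤ I * Ib * f S Ib := by
              apply mul_le_mul_of_nonneg_left this (by positivity)
          _ = I * B := by rw [hfb]; ring
      nlinarith
  -- rewrite f S I in terms of C
  have hfSI : f S I = C / I := by
    rw [hC', hF S I]; field_simp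
  rw [hfSI]
  -- AM-GM part
  have hu : 0 < A / B := by positivity
  have hv : 0 < Ib * C / (I * A) := by positivity
  have hw : 0 < I * B / (Ib * C) := by positivity
  have huvw : (A / B) * (Ib * C / (I * A)) * (I * B / (Ib * C)) = 1 := by
    field_simp
  have hamgm := amgm3 _ _ _ hu hv hw huvw
  -- sign term
  have hT : (I / Ib - C / B) * (B / C - 1) ≤ 0 := by
    have : (I / Ib - C / B) * (B / C - 1) = (I * B - Ib * C) * (B - C) / (Ib * B * C) := by
      field_simp
    rw [this]
    exact div_nonpos_of_nonpos_of_nonneg key (by positivity)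
  -- decomposition identity
  have hdec : 2 - A / B + C / B - I / Ib - Ib * (C / I) / A
      = (3 - (A / B + Ib * C / (I * A) + I * B / (Ib * C)))
        + (I / Ib - C / B) * (B / C - 1) := by
    field_simp
    ring
  rw [hdec]
  linarith
end

section
/- Assume hypothesis H4: fᵢ(S, I) = S·gᵢ(S, I) with gᵢ C¹ on the first quadrant (i = 1, 2). Let (S*, V₁*, I₁*, I₂*) be an endemic equilibrium of system (3) (all components positive, satisfying Λ − F₁(S*, I₁*) − F₂(S*, I₂*) − λS* = 0, rS* − (μ + kI₂*)V₁* = 0, F₁(S*, I₁*) − α₁I₁* = 0, F₂(S*, I₂*) + kI₂*V₁* − α₂I₂* = 0), and assume that for every (S, V₁, I₁, I₂) with all components positive and (S, V₁, I₁, I₂) ≠ (S*, V₁*, I₁*, I₂*): F₁(S*, I₁*)·(2 − S*/S − S·g₁(S, I₁)/(S*·g₁(S*, I₁*))) + F₂(S*, I₂*)·(2 − S*/S − S·g₂(S, I₂)/(S*·g₂(S*, I₂*))) + rS*·(3 − S*/S − V₁/V₁* − S·V₁*/(S*·V₁)) + μS*·(2 − S*/S − S/S*) + I₁·(S*·g₁(S,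 I₁) − α₁) + I₂·(S*·g₂(S, I₂) + kV₁* − α₂) < 0. Then every solution of system (3) with all initial components positive satisfies (S(t), V₁(t), I₁(t), I₂(t)) → (S*, V₁*, I₁*, I₂*) as t → ∞; that is, E₃ is globally asymptotically stable. -/
/-!
Under H4 the derivative of the Goh–Volterra sum `L = Σ (xᵢ - xᵢ* - xᵢ* log (xᵢ / xᵢ*))` along a
positive solution is exactly the expression of the sign condition, so `L` is a Lyapunov function:
it decreases, and its sublevel sets confine the orbit to a compact box inside the open positive
orthant (which the orbit never leaves, by a first-exit-time argument). If the orbit came back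
infinitely often to distance `ρ` from `E₃`, bounded speed would keep it at distance `ρ / 2` for a
fixed time after each return, during which the rate is below a fixed negative constant; so `L`
would drop by a fixed amount infinitely often, contradicting `L ≥ 0`.
-/

open Set Filter Topology Real

theorem forall_ge_of_real_induction {P : ℝ → Prop} {a : ℝ}
    (hopen : ∀ t, a ≤ t → P t → ∀ᶠ s in 𝓝 t, P s)
    (hstep : ∀ t, a ≤ t → (∀ s ∈ Ico a t, P s) → P t) :
    ∀ t, a ≤ t → P t := by
  by_contra! ⟨T, hT, hPT⟩
  set B := {t | a ≤ t ∧ ¬ P t}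
  have hB : BddBelow B := ⟨a, fun _ h => h.1⟩
  have hBne : B.Nonempty := ⟨T, hT, hPT⟩
  have ha : a ≤ sInf B := le_csInf hBne fun _ h => h.1
  have hbelow : ∀ s ∈ Ico a (sInf B), P s := fun s hs =>
    by_contra fun h => (csInf_le hB ⟨hs.1, h⟩).not_gt hs.2
  obtain ⟨ε, hε, hball⟩ := Metric.eventually_nhds_iff.1 (hopen _ ha (hstep _ ha hbelow))
  obtain ⟨b, hbB, hb⟩ := exists_lt_of_csInf_lt hBne (lt_add_of_pos_right (sInf B) hε)
  refine hbB.2 (hball ?_)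
  rw [Real.dist_eq, abs_lt]
  constructor <;> linarith [csInf_le hB hbB]

theorem nonneg_of_pos_on_Ico {w : ℝ → ℝ} {a b : ℝ} (hw : ContinuousOn w (Icc a b))
    (ha : 0 < w a) (hpos : ∀ t ∈ Ico a b, 0 < w t) : ∀ t ∈ Icc a b, 0 ≤ w t := by
  intro t ht
  rcases eq_or_ne a b with rfl | hab
  · rw [Icc_self, mem_singleton_iff] at ht
    exact ht ▸ ha.le
  rw [← closure_Ico hab] at ht hw
  exact ContinuousWithinAt.closure_le ht continuousWithinAt_const
    ((hw t ht).mono subset_closure) fun s hs => (hpos s hs).le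

theorem pos_of_hasDerivAt_ge_neg_mul {w w' c : ℝ → ℝ} {a b : ℝ} (hab : a ≤ b)
    (hw : ∀ t ∈ Icc a b, HasDerivAt w (w' t) t) (hc : ContinuousOn c (Icc a b))
    (hnn : ∀ t ∈ Icc a b, 0 ≤ w t) (hge : ∀ t ∈ Icc a b, -(c t * w t) ≤ w' t)
    (ha : 0 < w a) : 0 < w b := by
  obtain ⟨C, hC⟩ := isCompact_Icc.exists_bound_of_continuousOn hc
  have hgronwall := le_gronwallBound_of_liminf_deriv_right_le (f := fun t => -w t)
    (f' := fun t => -w' t) (K := -C) (ε := 0)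
    (fun t ht => (hw t ht).continuousAt.neg.continuousWithinAt)
    (fun t ht _ hr => (hw t (Ico_subset_Icc_self ht)).neg.hasDerivWithinAt.liminf_right_slope_le hr)
    le_rfl (fun t ht => by
      have ht' := Ico_subset_Icc_self ht
      nlinarith [(abs_le.1 (hC t ht')).2, hge t ht', hnn t ht'])
    b (right_mem_Icc.2 hab)
  rw [gronwallBound_ε0] at hgronwall
  nlinarith [exp_pos (-C * (b - a))]

theorem strictMonoOn_Icc_of_hasDerivAt_pos {f f' : ℝ → ℝ} {a b : ℝ}
    (hf : ∀ x ∈ Icc a b, HasDerivAt f (f' x) x) (hf' : ∀ x ∈ Icc a b, 0 < f' x) :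
    StrictMonoOn f (Icc a b) := by
  refine strictMonoOn_of_hasDerivWithinAt_pos (f' := f') (convex_Icc a b)
    (fun x hx => (hf x hx).continuousAt.continuousWithinAt) (fun x hx => ?_) fun x hx => ?_
  all_goals rw [interior_Icc] at hx
  · exact (hf x (Ioo_subset_Icc_self hx)).hasDerivWithinAt
  · exact hf' x (Ioo_subset_Icc_self hx)

theorem pos_of_hasDerivAt_mul_pos {g f' : ℝ → ℝ} {b : ℝ} (hb : 0 < b)
    (hf : ∀ x ∈ Icc 0 b, HasDerivAt (fun x => x * g x) (f' x) x)
    (hf' : ∀ x ∈ Icc 0 b, 0 < f' x) : 0 < g b := by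
  have := strictMonoOn_Icc_of_hasDerivAt_pos hf hf' (left_mem_Icc.2 hb.le)
    (right_mem_Icc.2 hb.le) hb
  simp only [zero_mul] at this
  exact pos_of_mul_pos_right this hb.le

theorem sub_le_mul_sub_of_hasDerivAt_le {f f' : ℝ → ℝ} {a b C : ℝ} (hab : a ≤ b)
    (hf : ∀ x ∈ Icc a b, HasDerivAt f (f' x) x) (hf' : ∀ x ∈ Icc a b, f' x ≤ C) :
    f b - f a ≤ C * (b - a) := by
  refine (convex_Icc a b).image_sub_le_mul_sub_of_deriv_le
    (fun x hx => (hf x hx).continuousAt.continuousWithinAt)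
    (fun x hx => ?_) (fun x hx => ?_) a (left_mem_Icc.2 hab) b (right_mem_Icc.2 hab) hab
  all_goals rw [interior_Icc] at hx
  · exact (hf x (Ioo_subset_Icc_self hx)).differentiableAt.differentiableWithinAt
  · rw [(hf x (Ioo_subset_Icc_self hx)).deriv]
    exact hf' x (Ioo_subset_Icc_self hx)

theorem not_bddBelow_of_forall_exists_le_sub {L : ℝ → ℝ} {a δ : ℝ} (hδ : 0 < δ)
    (h : ∀ T, a ≤ T → ∃ t, T ≤ t ∧ L t ≤ L T - δ) : ¬ BddBelow (L '' Ici a) := by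
  rintro ⟨B, hB⟩
  have hdrop : ∀ n : ℕ, ∃ t, a ≤ t ∧ L t ≤ L a - n * δ := by
    intro n
    induction n with
    | zero => exact ⟨a, le_rfl, by simp⟩
    | succ n ih =>
      obtain ⟨t, hat, hLt⟩ := ih
      obtain ⟨t', htt', hLt'⟩ := h t hat
      exact ⟨t', hat.trans htt', by push_cast; linarith⟩
  obtain ⟨n, hn⟩ := exists_nat_gt ((L a - B) / δ)
  obtain ⟨t, hat, hLt⟩ := hdrop n
  have hBt := hB ⟨t, hat, rfl⟩
  rw [div_lt_iff₀ hδ] at hn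
  linarith

theorem IsCompact.exists_neg_bound_of_le_dist {E : Type*} [MetricSpace E] {Φ : E → ℝ}
    {K : Set E} {e : E} (hK : IsCompact K) (hΦ : ContinuousOn Φ K)
    (hΦneg : ∀ p ∈ K, p ≠ e → Φ p < 0) {ρ : ℝ} (hρ : 0 < ρ) :
    ∃ δ < 0, ∀ q ∈ K, ρ ≤ dist q e → Φ q ≤ δ := by
  rcases (K ∩ {q | ρ ≤ dist q e}).eq_empty_or_nonempty with hempty | hne
  · exact ⟨-1, by norm_num, fun q hq hρq => (hempty.subset ⟨hq, hρq⟩).elim⟩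
  obtain ⟨p, ⟨hpK, hpρ⟩, hpmax⟩ :=
    (hK.inter_right (isClosed_le continuous_const (continuous_id.dist continuous_const) :
      IsClosed {q | ρ ≤ dist q e})).exists_isMaxOn hne (hΦ.mono inter_subset_left)
  refine ⟨Φ p, hΦneg p hpK ?_, fun q hq hρq => isMaxOn_iff.1 hpmax q ⟨hq, hρq⟩⟩
  rintro rfl
  have : ρ ≤ dist p p := hpρ
  rw [dist_self] at this
  linarith

theorem tendsto_of_isCompact_of_antitoneOn {E : Type*} [NormedAddCommGroup E]
    [NormedSpace ℝ E] {G : E → E} {Φ : E → ℝ} {x : ℝ → E} {L : ℝ → ℝ} {K : Set E} {e : E}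
    (hK : IsCompact K) (hG : ContinuousOn G K) (hΦ : ContinuousOn Φ K)
    (hΦneg : ∀ p ∈ K, p ≠ e → Φ p < 0)
    (hxK : ∀ t, 0 ≤ t → x t ∈ K) (hx : ∀ t, 0 ≤ t → HasDerivAt x (G (x t)) t)
    (hL : ∀ t, 0 ≤ t → HasDerivAt L (Φ (x t)) t) (hanti : AntitoneOn L (Ici 0))
    (hLb : BddBelow (L '' Ici 0)) :
    Tendsto x atTop (𝓝 e) := by
  obtain ⟨C, hC⟩ := hK.exists_bound_of_continuousOn hG
  have hC0 : 0 ≤ C := (norm_nonneg _).trans (hC _ (hxK 0 le_rfl))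
  have hLip : ∀ a b, 0 ≤ a → a ≤ b → dist (x b) (x a) ≤ C * (b - a) := fun a b ha hab => by
    simpa [dist_eq_norm, abs_of_nonneg (sub_nonneg.2 hab)] using
      (convex_Icc a b).norm_image_sub_le_of_norm_hasDerivWithin_le
        (fun t ht => (hx t (ha.trans ht.1)).hasDerivWithinAt)
        (fun t ht => hC _ (hxK t (ha.trans ht.1))) (left_mem_Icc.2 hab) (right_mem_Icc.2 hab)
  by_contra hne
  rw [Metric.tendsto_atTop] at hne
  push Not at hne
  obtain ⟨ρ, hρ, hfar⟩ := hne
  obtain ⟨δ, hδ, hΦδ⟩ := hK.exists_neg_bound_of_le_dist hΦ hΦneg (half_pos hρ)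
  obtain ⟨Δ, hΔ, hCΔ⟩ : ∃ Δ > 0, C * Δ ≤ ρ / 2 := ⟨ρ / (2 * (C + 1)), by positivity, by
    rw [mul_div_assoc', div_le_div_iff₀ (by positivity) two_pos]
    nlinarith⟩
  -- by the speed bound, an orbit at distance `ρ` from `e` stays `ρ / 2`-far for time `Δ`
  have hdrop : ∀ t, 0 ≤ t → ρ ≤ dist (x t) e → L (t + Δ) ≤ L t + δ * Δ := by
    intro t ht hρt
    have hstay : ∀ s ∈ Icc t (t + Δ), Φ (x s) ≤ δ := fun s hs => by
      refine hΦδ _ (hxK s (ht.trans hs.1)) ?_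
      have hmove : C * (s - t) ≤ C * Δ := mul_le_mul_of_nonneg_left (by linarith [hs.2]) hC0
      linarith [dist_triangle (x t) (x s) e, dist_comm (x t) (x s), hLip t s ht hs.1]
    have := sub_le_mul_sub_of_hasDerivAt_le (le_add_of_nonneg_right hΔ.le)
      (fun s hs => hL s (ht.trans hs.1)) hstay
    linarith
  refine not_bddBelow_of_forall_exists_le_sub (δ := -(δ * Δ)) (by nlinarith)
    (fun T hT => ?_) hLb
  obtain ⟨t, hTt, hρt⟩ := hfar T
  exact ⟨t + Δ, by linarith,
    by linarith [hdrop t (hT.trans hTt) hρt, hanti hT (hT.trans hTt : 0 ≤ t) hTt]⟩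

theorem tendsto_of_lyapunov {E : Type*} [NormedAddCommGroup E] [NormedSpace ℝ E]
    {G : E → E} {V Φ : E → ℝ} {U : Set E} {x : ℝ → E} {e : E}
    (hG : ContinuousOn G U) (hΦ : ContinuousOn Φ U)
    (hΦneg : ∀ p ∈ U, p ≠ e → Φ p < 0) (hΦe : Φ e ≤ 0)
    (hV : ∀ A, ∃ K ⊆ U, IsCompact K ∧ ∀ q ∈ U, V q ≤ A → q ∈ K) (hVb : BddBelow (V '' U))
    (hxU : ∀ t, 0 ≤ t → x t ∈ U) (hx : ∀ t, 0 ≤ t → HasDerivAt x (G (x t)) t)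
    (hVx : ∀ t, 0 ≤ t → HasDerivAt (fun t => V (x t)) (Φ (x t)) t) :
    Tendsto x atTop (𝓝 e) := by
  have hΦx : ∀ t, 0 ≤ t → Φ (x t) ≤ 0 := fun t ht => by
    rcases eq_or_ne (x t) e with h | h
    · exact h ▸ hΦe
    · exact (hΦneg _ (hxU t ht) h).le
  have hanti : AntitoneOn (fun t => V (x t)) (Ici 0) :=
    antitoneOn_of_hasDerivWithinAt_nonpos (f' := fun t => Φ (x t)) (convex_Ici 0)
      (fun t ht => (hVx t ht).continuousAt.continuousWithinAt)
      (fun t ht => (hVx t (interior_subset ht)).hasDerivWithinAt)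
      fun t ht => hΦx t (interior_subset ht)
  obtain ⟨K, hKU, hK, hKsub⟩ := hV (V (x 0))
  exact tendsto_of_isCompact_of_antitoneOn hK (hG.mono hKU) (hΦ.mono hKU)
    (fun p hp => hΦneg p (hKU hp))
    (fun t ht => hKsub _ (hxU t ht) (hanti (le_refl (0 : ℝ)) ht ht)) hx hVx hanti
    (hVb.mono (by rintro _ ⟨t, ht, rfl⟩; exact mem_image_of_mem V (hxU t ht)))

noncomputable def volterra (c x : ℝ) : ℝ := x - c - c * log (x / c)

theorem volterra_nonneg {c x : ℝ} (hc : 0 < c) (hx : 0 < x) : 0 ≤ volterra c x := by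
  have h := mul_le_mul_of_nonneg_left (log_le_sub_one_of_pos (div_pos hx hc)) hc.le
  rw [mul_sub, mul_div_cancel₀ _ hc.ne', mul_one] at h
  unfold volterra
  linarith

theorem HasDerivAt.volterra {w : ℝ → ℝ} {w' t : ℝ} (c : ℝ) (hw : HasDerivAt w w' t)
    (hc : c ≠ 0) (hwt : w t ≠ 0) :
    HasDerivAt (fun s => volterra c (w s)) ((1 - c / w t) * w') t := by
  refine ((hw.sub_const c).sub
    (((hw.div_const c).log (div_ne_zero hwt hc)).const_mul c)).congr_deriv ?_
  field_simp

theorem exists_Icc_of_volterra_le {c : ℝ} (hc : 0 < c) (A : ℝ) :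
    ∃ m M, 0 < m ∧ ∀ x, 0 < x → volterra c x ≤ A → x ∈ Icc m M := by
  refine ⟨c * exp (-(A + c) / c), 2 * (A + c * log 2), by positivity, fun x hx hA => ⟨?_, ?_⟩⟩
  · have hlog : -(A + c) / c ≤ log (x / c) := by
      rw [div_le_iff₀ hc]
      unfold volterra at hA
      linarith
    calc c * exp (-(A + c) / c) ≤ c * (x / c) :=
          mul_le_mul_of_nonneg_left ((le_log_iff_exp_le (div_pos hx hc)).1 hlog) hc.le
      _ = x := mul_div_cancel₀ x hc.ne'
  · have h := log_le_sub_one_of_pos (show 0 < x / c / 2 by positivity)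
    rw [log_div (by positivity) two_ne_zero] at h
    have h' := mul_le_mul_of_nonneg_left h hc.le
    have hx2 : c * (x / c / 2) = x / 2 := by field_simp
    unfold volterra at hA
    nlinarith

def posOrthant : Set (ℝ × ℝ × ℝ × ℝ) := Ioi 0 ×ˢ Ioi 0 ×ˢ Ioi 0 ×ˢ Ioi 0

theorem isOpen_posOrthant : IsOpen posOrthant :=
  isOpen_Ioi.prod (isOpen_Ioi.prod (isOpen_Ioi.prod isOpen_Ioi))

noncomputable def volterraSum : ℝ × ℝ × ℝ × ℝ → ℝ × ℝ × ℝ × ℝ → ℝ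
  | (a₁, a₂, a₃, a₄), (x₁, x₂, x₃, x₄) =>
    volterra a₁ x₁ + volterra a₂ x₂ + volterra a₃ x₃ + volterra a₄ x₄

theorem volterraSum_nonneg {e q : ℝ × ℝ × ℝ × ℝ} (he : e ∈ posOrthant) (hq : q ∈ posOrthant) :
    0 ≤ volterraSum e q := by
  obtain ⟨h₁, h₂, h₃, h₄⟩ := he
  obtain ⟨k₁, k₂, k₃, k₄⟩ := hq
  have := volterra_nonneg h₁ k₁
  have := volterra_nonneg h₂ k₂
  have := volterra_nonneg h₃ k₃
  have := volterra_nonneg h₄ k₄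
  simp only [volterraSum]
  linarith

theorem bddBelow_volterraSum {e : ℝ × ℝ × ℝ × ℝ} (he : e ∈ posOrthant) :
    BddBelow (volterraSum e '' posOrthant) :=
  ⟨0, fun _ ⟨_, hq, hVq⟩ => hVq ▸ volterraSum_nonneg he hq⟩

theorem exists_isCompact_of_volterraSum_le {e : ℝ × ℝ × ℝ × ℝ} (he : e ∈ posOrthant) (A : ℝ) :
    ∃ K ⊆ posOrthant, IsCompact K ∧ ∀ q ∈ posOrthant, volterraSum e q ≤ A → q ∈ K := by
  obtain ⟨h₁, h₂, h₃, h₄⟩ := he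
  obtain ⟨m₁, M₁, hm₁, hb₁⟩ := exists_Icc_of_volterra_le h₁ A
  obtain ⟨m₂, M₂, hm₂, hb₂⟩ := exists_Icc_of_volterra_le h₂ A
  obtain ⟨m₃, M₃, hm₃, hb₃⟩ := exists_Icc_of_volterra_le h₃ A
  obtain ⟨m₄, M₄, hm₄, hb₄⟩ := exists_Icc_of_volterra_le h₄ A
  refine ⟨Icc m₁ M₁ ×ˢ Icc m₂ M₂ ×ˢ Icc m₃ M₃ ×ˢ Icc m₄ M₄,
    fun q ⟨k₁, k₂, k₃, k₄⟩ => ⟨hm₁.trans_le k₁.1, hm₂.trans_le k₂.1, hm₃.trans_le k₃.1,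
      hm₄.trans_le k₄.1⟩,
    isCompact_Icc.prod (isCompact_Icc.prod (isCompact_Icc.prod isCompact_Icc)),
    fun q ⟨k₁, k₂, k₃, k₄⟩ hq => ?_⟩
  have := volterra_nonneg h₁ k₁
  have := volterra_nonneg h₂ k₂
  have := volterra_nonneg h₃ k₃
  have := volterra_nonneg h₄ k₄
  simp only [volterraSum] at hq
  exact ⟨hb₁ _ k₁ (by linarith), hb₂ _ k₂ (by linarith), hb₃ _ k₃ (by linarith),
    hb₄ _ k₄ (by linarith)⟩

/-- The right-hand side of system (3) when `Fᵢ(S, I) = I·S·gᵢ(S, I)`, as a vector field on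
`(S, V₁, I₁, I₂)`. -/
def fluField (Λ r μ k α₁ α₂ lam : ℝ) (g₁ g₂ : ℝ → ℝ → ℝ) :
    ℝ × ℝ × ℝ × ℝ → ℝ × ℝ × ℝ × ℝ
  | (S, V₁, I₁, I₂) =>
    (Λ - I₁ * (S * g₁ S I₁) - I₂ * (S * g₂ S I₂) - lam * S,
     r * S - (μ + k * I₂) * V₁,
     I₁ * (S * g₁ S I₁) - α₁ * I₁,
     I₂ * (S * g₂ S I₂) + k * I₂ * V₁ - α₂ * I₂)

structure IsFluSolution (Λ r μ k α₁ α₂ lam : ℝ) (g₁ g₂ : ℝ → ℝ → ℝ) (S V₁ I₁ I₂ : ℝ → ℝ) :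
    Prop where
  hasDerivAt_S : ∀ t, 0 ≤ t → HasDerivAt S
    (Λ - I₁ t * (S t * g₁ (S t) (I₁ t)) - I₂ t * (S t * g₂ (S t) (I₂ t)) - lam * S t) t
  hasDerivAt_V₁ : ∀ t, 0 ≤ t → HasDerivAt V₁ (r * S t - (μ + k * I₂ t) * V₁ t) t
  hasDerivAt_I₁ : ∀ t, 0 ≤ t → HasDerivAt I₁ (I₁ t * (S t * g₁ (S t) (I₁ t)) - α₁ * I₁ t) t
  hasDerivAt_I₂ : ∀ t, 0 ≤ t →
    HasDerivAt I₂ (I₂ t * (S t * g₂ (S t) (I₂ t)) + k * I₂ t * V₁ t - α₂ * I₂ t) t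

/-- The left-hand side of the sign condition of the theorem, at the point `(S, V₁, I₁, I₂)`. -/
noncomputable def fluRate (r μ k α₁ α₂ : ℝ) (g₁ g₂ : ℝ → ℝ → ℝ) :
    ℝ × ℝ × ℝ × ℝ → ℝ × ℝ × ℝ × ℝ → ℝ
  | (Ss, Vs, Is1, Is2), (S, V₁, I₁, I₂) =>
    Is1 * (Ss * g₁ Ss Is1) * (2 - Ss / S - S * g₁ S I₁ / (Ss * g₁ Ss Is1)) +
    Is2 * (Ss * g₂ Ss Is2) * (2 - Ss / S - S * g₂ S I₂ / (Ss * g₂ Ss Is2)) +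
    r * Ss * (3 - Ss / S - V₁ / Vs - S * Vs / (Ss * V₁)) +
    μ * Ss * (2 - Ss / S - S / Ss) +
    I₁ * (Ss * g₁ S I₁ - α₁) + I₂ * (Ss * g₂ S I₂ + k * Vs - α₂)

section FluModel

variable {Λ r μ k α₁ α₂ lam : ℝ} {g₁ g₂ : ℝ → ℝ → ℝ} {S V₁ I₁ I₂ : ℝ → ℝ}

theorem continuousAt_uncurry_of_pos {g : ℝ → ℝ → ℝ}
    (hg : ContinuousOn (fun p : ℝ × ℝ => g p.1 p.2) {p | 0 ≤ p.1 ∧ 0 ≤ p.2}) {a b : ℝ}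
    (ha : 0 < a) (hb : 0 < b) : ContinuousAt (fun p : ℝ × ℝ => g p.1 p.2) (a, b) :=
  hg.continuousAt (prod_mem_nhds (Ici_mem_nhds ha) (Ici_mem_nhds hb))

theorem continuousOn_fluField
    (hg₁ : ContinuousOn (fun p : ℝ × ℝ => g₁ p.1 p.2) {p | 0 ≤ p.1 ∧ 0 ≤ p.2})
    (hg₂ : ContinuousOn (fun p : ℝ × ℝ => g₂ p.1 p.2) {p | 0 ≤ p.1 ∧ 0 ≤ p.2}) :
    ContinuousOn (fluField Λ r μ k α₁ α₂ lam g₁ g₂) posOrthant := by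
  refine continuousOn_of_forall_continuousAt fun q ⟨hS, _, hI₁, hI₂⟩ => ?_
  have := continuousAt_uncurry_of_pos hg₁ hS hI₁
  have := continuousAt_uncurry_of_pos hg₂ hS hI₂
  show ContinuousAt (fun q : ℝ × ℝ × ℝ × ℝ =>
    fluField Λ r μ k α₁ α₂ lam g₁ g₂ (q.1, q.2.1, q.2.2.1, q.2.2.2)) q
  simp only [fluField]
  fun_prop

theorem continuousOn_fluRate {Ss Vs Is1 Is2 : ℝ} (hSs : Ss ≠ 0)
    (hg₁ : ContinuousOn (fun p : ℝ × ℝ => g₁ p.1 p.2) {p | 0 ≤ p.1 ∧ 0 ≤ p.2})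
    (hg₂ : ContinuousOn (fun p : ℝ × ℝ => g₂ p.1 p.2) {p | 0 ≤ p.1 ∧ 0 ≤ p.2}) :
    ContinuousOn (fluRate r μ k α₁ α₂ g₁ g₂ (Ss, Vs, Is1, Is2)) posOrthant := by
  refine continuousOn_of_forall_continuousAt fun q ⟨hS, hV, hI₁, hI₂⟩ => ?_
  have := continuousAt_uncurry_of_pos hg₁ hS hI₁
  have := continuousAt_uncurry_of_pos hg₂ hS hI₂
  have hS0 : q.1 ≠ 0 := ne_of_gt hS
  have hSV : Ss * q.2.1 ≠ 0 := mul_ne_zero hSs (ne_of_gt hV)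
  show ContinuousAt (fun q : ℝ × ℝ × ℝ × ℝ =>
    fluRate r μ k α₁ α₂ g₁ g₂ (Ss, Vs, Is1, Is2) (q.1, q.2.1, q.2.2.1, q.2.2.2)) q
  simp only [fluRate]
  fun_prop (disch := assumption)

theorem fluRate_eq {Ss Vs Is1 Is2 S V₁ I₁ I₂ : ℝ}
    (he : fluField Λ r μ k α₁ α₂ lam g₁ g₂ (Ss, Vs, Is1, Is2) = 0) (hlam : lam = r + μ)
    (hSs : Ss ≠ 0) (hVs : Vs ≠ 0) (hIs1 : Is1 ≠ 0) (hIs2 : Is2 ≠ 0)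
    (ha₁ : g₁ Ss Is1 ≠ 0) (ha₂ : g₂ Ss Is2 ≠ 0)
    (hS : S ≠ 0) (hV₁ : V₁ ≠ 0) (hI₁ : I₁ ≠ 0) (hI₂ : I₂ ≠ 0) :
    let G := fluField Λ r μ k α₁ α₂ lam g₁ g₂ (S, V₁, I₁, I₂)
    fluRate r μ k α₁ α₂ g₁ g₂ (Ss, Vs, Is1, Is2) (S, V₁, I₁, I₂) =
      (1 - Ss / S) * G.1 + (1 - Vs / V₁) * G.2.1 + (1 - Is1 / I₁) * G.2.2.1 +
        (1 - Is2 / I₂) * G.2.2.2 := by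
  simp only [fluField, Prod.mk_eq_zero] at he ⊢
  obtain ⟨hΛ, hμ, hα₁, hα₂⟩ := he
  obtain rfl : α₁ = Ss * g₁ Ss Is1 := mul_right_cancel₀ hIs1 (by linear_combination -hα₁)
  obtain rfl : α₂ = Ss * g₂ Ss Is2 + k * Vs := mul_right_cancel₀ hIs2 (by linear_combination -hα₂)
  obtain rfl : Λ = Is1 * (Ss * g₁ Ss Is1) + Is2 * (Ss * g₂ Ss Is2) + lam * Ss := by linarith
  obtain rfl : μ = r * Ss / Vs - k * Is2 := by
    rw [eq_sub_iff_add_eq, eq_div_iff hVs]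
    linear_combination -hμ
  subst hlam
  simp only [fluRate]
  field_simp
  ring

theorem fluRate_self {Ss Vs Is1 Is2 : ℝ}
    (he : fluField Λ r μ k α₁ α₂ lam g₁ g₂ (Ss, Vs, Is1, Is2) = 0) (hlam : lam = r + μ)
    (hepos : (Ss, Vs, Is1, Is2) ∈ posOrthant) (ha₁ : g₁ Ss Is1 ≠ 0) (ha₂ : g₂ Ss Is2 ≠ 0) :
    fluRate r μ k α₁ α₂ g₁ g₂ (Ss, Vs, Is1, Is2) (Ss, Vs, Is1, Is2) = 0 := by
  obtain ⟨hSs, hVs, hIs1, hIs2⟩ := hepos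
  rw [fluRate_eq he hlam hSs.ne' hVs.ne' hIs1.ne' hIs2.ne' ha₁ ha₂ hSs.ne' hVs.ne' hIs1.ne'
    hIs2.ne', div_self hSs.ne', div_self hVs.ne', div_self hIs1.ne', div_self hIs2.ne']
  ring

namespace IsFluSolution

theorem hasDerivAt (h : IsFluSolution Λ r μ k α₁ α₂ lam g₁ g₂ S V₁ I₁ I₂) {t : ℝ} (ht : 0 ≤ t) :
    HasDerivAt (fun t => (S t, V₁ t, I₁ t, I₂ t))
      (fluField Λ r μ k α₁ α₂ lam g₁ g₂ (S t, V₁ t, I₁ t, I₂ t)) t :=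
  (h.hasDerivAt_S t ht).prodMk
    ((h.hasDerivAt_V₁ t ht).prodMk ((h.hasDerivAt_I₁ t ht).prodMk (h.hasDerivAt_I₂ t ht)))

theorem hasDerivAt_volterraSum (h : IsFluSolution Λ r μ k α₁ α₂ lam g₁ g₂ S V₁ I₁ I₂)
    {Ss Vs Is1 Is2 : ℝ} (he : fluField Λ r μ k α₁ α₂ lam g₁ g₂ (Ss, Vs, Is1, Is2) = 0)
    (hlam : lam = r + μ) (hepos : (Ss, Vs, Is1, Is2) ∈ posOrthant)
    (ha₁ : g₁ Ss Is1 ≠ 0) (ha₂ : g₂ Ss Is2 ≠ 0) {t : ℝ} (ht : 0 ≤ t)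
    (hx : (S t, V₁ t, I₁ t, I₂ t) ∈ posOrthant) :
    HasDerivAt (fun t => volterraSum (Ss, Vs, Is1, Is2) (S t, V₁ t, I₁ t, I₂ t))
      (fluRate r μ k α₁ α₂ g₁ g₂ (Ss, Vs, Is1, Is2) (S t, V₁ t, I₁ t, I₂ t)) t := by
  obtain ⟨hSs, hVs, hIs1, hIs2⟩ := hepos
  obtain ⟨hS, hV₁, hI₁, hI₂⟩ := hx
  rw [fluRate_eq he hlam hSs.ne' hVs.ne' hIs1.ne' hIs2.ne' ha₁ ha₂ hS.ne' hV₁.ne' hI₁.ne' hI₂.ne']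
  exact ((((h.hasDerivAt_S t ht).volterra Ss hSs.ne' hS.ne').add
    ((h.hasDerivAt_V₁ t ht).volterra Vs hVs.ne' hV₁.ne')).add
    ((h.hasDerivAt_I₁ t ht).volterra Is1 hIs1.ne' hI₁.ne')).add
    ((h.hasDerivAt_I₂ t ht).volterra Is2 hIs2.ne' hI₂.ne')

/-- Each equation has the form `w' = a - c w` with `a ≥ 0` as long as the orbit stays in the closed
orthant, so a component cannot reach `0` in finite time. -/
theorem mem_posOrthant (h : IsFluSolution Λ r μ k α₁ α₂ lam g₁ g₂ S V₁ I₁ I₂)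
    (hΛ : 0 < Λ) (hr : 0 < r)
    (hg₁ : ContinuousOn (fun p : ℝ × ℝ => g₁ p.1 p.2) {p | 0 ≤ p.1 ∧ 0 ≤ p.2})
    (hg₂ : ContinuousOn (fun p : ℝ × ℝ => g₂ p.1 p.2) {p | 0 ≤ p.1 ∧ 0 ≤ p.2})
    (h0 : (S 0, V₁ 0, I₁ 0, I₂ 0) ∈ posOrthant) :
    ∀ t, 0 ≤ t → (S t, V₁ t, I₁ t, I₂ t) ∈ posOrthant := by
  refine forall_ge_of_real_induction (fun t ht hx =>
    (h.hasDerivAt ht).continuousAt.eventually_mem (isOpen_posOrthant.mem_nhds hx)) ?_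
  intro t ht hIco
  have hcont : ∀ {w w' : ℝ → ℝ}, (∀ s, 0 ≤ s → HasDerivAt w (w' s) s) →
      ContinuousOn w (Icc 0 t) := fun hw s hs => (hw s hs.1).continuousAt.continuousWithinAt
  have hS := hcont h.hasDerivAt_S
  have hV₁ := hcont h.hasDerivAt_V₁
  have hI₁ := hcont h.hasDerivAt_I₁
  have hI₂ := hcont h.hasDerivAt_I₂
  have hSnn := nonneg_of_pos_on_Ico hS h0.1 fun s hs => (hIco s hs).1
  have hV₁nn := nonneg_of_pos_on_Ico hV₁ h0.2.1 fun s hs => (hIco s hs).2.1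
  have hI₁nn := nonneg_of_pos_on_Ico hI₁ h0.2.2.1 fun s hs => (hIco s hs).2.2.1
  have hI₂nn := nonneg_of_pos_on_Ico hI₂ h0.2.2.2 fun s hs => (hIco s hs).2.2.2
  have hg₁c : ContinuousOn (fun s => g₁ (S s) (I₁ s)) (Icc 0 t) :=
    hg₁.comp (hS.prodMk hI₁) fun s hs => ⟨hSnn s hs, hI₁nn s hs⟩
  have hg₂c : ContinuousOn (fun s => g₂ (S s) (I₂ s)) (Icc 0 t) :=
    hg₂.comp (hS.prodMk hI₂) fun s hs => ⟨hSnn s hs, hI₂nn s hs⟩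
  refine ⟨pos_of_hasDerivAt_ge_neg_mul ht (fun s hs => h.hasDerivAt_S s hs.1)
      (c := fun s => I₁ s * g₁ (S s) (I₁ s) + I₂ s * g₂ (S s) (I₂ s) + lam)
      (((hI₁.mul hg₁c).add (hI₂.mul hg₂c)).add continuousOn_const) hSnn
      (fun s hs => by linarith) h0.1,
    pos_of_hasDerivAt_ge_neg_mul ht (fun s hs => h.hasDerivAt_V₁ s hs.1)
      (c := fun s => μ + k * I₂ s) (by fun_prop) hV₁nn
      (fun s hs => by linarith [mul_nonneg hr.le (hSnn s hs)]) h0.2.1,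
    pos_of_hasDerivAt_ge_neg_mul ht (fun s hs => h.hasDerivAt_I₁ s hs.1)
      (c := fun s => α₁ - S s * g₁ (S s) (I₁ s)) (continuousOn_const.sub (hS.mul hg₁c)) hI₁nn
      (fun s hs => by linarith) h0.2.2.1,
    pos_of_hasDerivAt_ge_neg_mul ht (fun s hs => h.hasDerivAt_I₂ s hs.1)
      (c := fun s => α₂ - S s * g₂ (S s) (I₂ s) - k * V₁ s)
      ((continuousOn_const.sub (hS.mul hg₂c)).sub (continuousOn_const.mul hV₁)) hI₂nn
      (fun s hs => by linarith) h0.2.2.2⟩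

end IsFluSolution

end FluModel

theorem E3_globally_asymptotically_stable_general
    (Λ r μ k α₁ α₂ lam : ℝ)
    (hΛ : 0 < Λ) (hr : 0 < r)
    (hlam : lam = r + μ)
    (F₁ F₂ f₁ f₂ f₁S f₂S : ℝ → ℝ → ℝ)
    (hH1₁ : ∀ S I : ℝ, F₁ S I = I * f₁ S I)
    (hH1₂ : ∀ S I : ℝ, F₂ S I = I * f₂ S I)
    (hdf₁S : ∀ S I : ℝ, 0 ≤ S → 0 ≤ I → HasDerivAt (fun x => f₁ x I) (f₁S S I) S)
    (hdf₂S : ∀ S I : ℝ, 0 ≤ S → 0 ≤ I → HasDerivAt (fun x => f₂ x I) (f₂S S I) S)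
    (hH2f₁S : ∀ S I : ℝ, 0 ≤ S → 0 ≤ I → 0 < f₁S S I)
    (hH2f₂S : ∀ S I : ℝ, 0 ≤ S → 0 ≤ I → 0 < f₂S S I)
    (S V₁ I₁ I₂ : ℝ → ℝ)
    (hS' : ∀ t : ℝ, 0 ≤ t → HasDerivAt S (Λ - F₁ (S t) (I₁ t) - F₂ (S t) (I₂ t) - lam * S t) t)
    (hV' : ∀ t : ℝ, 0 ≤ t → HasDerivAt V₁ (r * S t - (μ + k * I₂ t) * V₁ t) t)
    (hI₁' : ∀ t : ℝ, 0 ≤ t → HasDerivAt I₁ (F₁ (S t) (I₁ t) - α₁ * I₁ t) t)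
    (hI₂' : ∀ t : ℝ, 0 ≤ t → HasDerivAt I₂ (F₂ (S t) (I₂ t) + k * I₂ t * V₁ t - α₂ * I₂ t) t)
    (g₁ g₂ : ℝ → ℝ → ℝ)
    (hg₁C1 : ContDiffOn ℝ 1 (fun p : ℝ × ℝ => g₁ p.1 p.2) {p : ℝ × ℝ | 0 ≤ p.1 ∧ 0 ≤ p.2})
    (hg₂C1 : ContDiffOn ℝ 1 (fun p : ℝ × ℝ => g₂ p.1 p.2) {p : ℝ × ℝ | 0 ≤ p.1 ∧ 0 ≤ p.2})
    (hH4₁ : ∀ Sx Ix : ℝ, f₁ Sx Ix = Sx * g₁ Sx Ix)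
    (hH4₂ : ∀ Sx Ix : ℝ, f₂ Sx Ix = Sx * g₂ Sx Ix)
    (Ss Vs Is1 Is2 : ℝ) (hSs : 0 < Ss) (hVs : 0 < Vs) (hIs1 : 0 < Is1) (hIs2 : 0 < Is2)
    (heq1 : Λ - F₁ Ss Is1 - F₂ Ss Is2 - lam * Ss = 0)
    (heq2 : r * Ss - (μ + k * Is2) * Vs = 0)
    (heq3 : F₁ Ss Is1 - α₁ * Is1 = 0)
    (heq4 : F₂ Ss Is2 + k * Is2 * Vs - α₂ * Is2 = 0)
    (hineq : ∀ Sx Vx Ix1 Ix2 : ℝ, 0 < Sx → 0 < Vx → 0 < Ix1 → 0 < Ix2 →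
      (Sx, Vx, Ix1, Ix2) ≠ (Ss, Vs, Is1, Is2) →
      F₁ Ss Is1 * (2 - Ss / Sx - Sx * g₁ Sx Ix1 / (Ss * g₁ Ss Is1)) +
      F₂ Ss Is2 * (2 - Ss / Sx - Sx * g₂ Sx Ix2 / (Ss * g₂ Ss Is2)) +
      r * Ss * (3 - Ss / Sx - Vx / Vs - Sx * Vs / (Ss * Vx)) +
      μ * Ss * (2 - Ss / Sx - Sx / Ss) +
      Ix1 * (Ss * g₁ Sx Ix1 - α₁) + Ix2 * (Ss * g₂ Sx Ix2 + k * Vs - α₂) < 0)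
    (hinit : 0 < S 0 ∧ 0 < V₁ 0 ∧ 0 < I₁ 0 ∧ 0 < I₂ 0) :
    Filter.Tendsto S Filter.atTop (nhds Ss) ∧
    Filter.Tendsto V₁ Filter.atTop (nhds Vs) ∧
    Filter.Tendsto I₁ Filter.atTop (nhds Is1) ∧
    Filter.Tendsto I₂ Filter.atTop (nhds Is2) := by
  obtain rfl : f₁ = fun s i => s * g₁ s i := by funext s i; exact hH4₁ s i
  obtain rfl : f₂ = fun s i => s * g₂ s i := by funext s i; exact hH4₂ s i
  obtain rfl : F₁ = fun s i => i * (s * g₁ s i) := by funext s i; exact hH1₁ s i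
  obtain rfl : F₂ = fun s i => i * (s * g₂ s i) := by funext s i; exact hH1₂ s i
  have hsol : IsFluSolution Λ r μ k α₁ α₂ lam g₁ g₂ S V₁ I₁ I₂ := ⟨hS', hV', hI₁', hI₂'⟩
  have he : fluField Λ r μ k α₁ α₂ lam g₁ g₂ (Ss, Vs, Is1, Is2) = 0 := by
    simp only [fluField, Prod.mk_eq_zero]
    exact ⟨heq1, heq2, heq3, heq4⟩
  have hepos : (Ss, Vs, Is1, Is2) ∈ posOrthant := ⟨hSs, hVs, hIs1, hIs2⟩
  have ha₁ : 0 < g₁ Ss Is1 := pos_of_hasDerivAt_mul_pos (g := fun x => g₁ x Is1) hSs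
    (fun x hx => hdf₁S x Is1 hx.1 hIs1.le) fun x hx => hH2f₁S x Is1 hx.1 hIs1.le
  have ha₂ : 0 < g₂ Ss Is2 := pos_of_hasDerivAt_mul_pos (g := fun x => g₂ x Is2) hSs
    (fun x hx => hdf₂S x Is2 hx.1 hIs2.le) fun x hx => hH2f₂S x Is2 hx.1 hIs2.le
  have hg₁ := hg₁C1.continuousOn
  have hg₂ := hg₂C1.continuousOn
  have hpos := hsol.mem_posOrthant hΛ hr hg₁ hg₂ hinit
  have hconv := tendsto_of_lyapunov (continuousOn_fluField hg₁ hg₂)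
    (continuousOn_fluRate hSs.ne' hg₁ hg₂)
    (fun ⟨a, b, c, d⟩ hq hne => hineq a b c d hq.1 hq.2.1 hq.2.2.1 hq.2.2.2 hne)
    (fluRate_self he hlam hepos ha₁.ne' ha₂.ne').le
    (exists_isCompact_of_volterraSum_le hepos) (bddBelow_volterraSum hepos)
    hpos (fun t ht => hsol.hasDerivAt ht)
    fun t ht => hsol.hasDerivAt_volterraSum he hlam hepos ha₁.ne' ha₂.ne' ht (hpos t ht)
  simpa only [Prod.tendsto_iff] using hconv

/-- Theorem 5.10: under H4 (fᵢ(S,I) = S·gᵢ(S,I)) and the Lyapunov sign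
condition, the endemic equilibrium E₃ = (S*, V₁*, I₁*, I₂*) is globally asymptotically
stable: every solution with positive initial values converges to E₃. -/
theorem E3_globally_asymptotically_stable
    (Λ r μ k α₁ α₂ lam : ℝ)
    (hΛ : 0 < Λ) (hr : 0 < r) (hμ : 0 < μ) (hk : 0 < k)
    (hα₁ : μ < α₁) (hα₂ : μ < α₂) (hlam : lam = r + μ)
    (F₁ F₂ f₁ f₂ F₁S F₁I F₂S F₂I f₁S f₁I f₂S f₂I : ℝ → ℝ → ℝ)
    (hF₁nn : ∀ S I : ℝ, 0 ≤ S → 0 ≤ I → 0 ≤ F₁ S I)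
    (hF₂nn : ∀ S I : ℝ, 0 ≤ S → 0 ≤ I → 0 ≤ F₂ S I)
    (hF₁C1 : ContDiffOn ℝ 1 (fun p : ℝ × ℝ => F₁ p.1 p.2) {p : ℝ × ℝ | 0 ≤ p.1 ∧ 0 ≤ p.2})
    (hF₂C1 : ContDiffOn ℝ 1 (fun p : ℝ × ℝ => F₂ p.1 p.2) {p : ℝ × ℝ | 0 ≤ p.1 ∧ 0 ≤ p.2})
    (hf₁C1 : ContDiffOn ℝ 1 (fun p : ℝ × ℝ => f₁ p.1 p.2) {p : ℝ × ℝ | 0 ≤ p.1 ∧ 0 ≤ p.2})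
    (hf₂C1 : ContDiffOn ℝ 1 (fun p : ℝ × ℝ => f₂ p.1 p.2) {p : ℝ × ℝ | 0 ≤ p.1 ∧ 0 ≤ p.2})
    (hH1₁ : ∀ S I : ℝ, F₁ S I = I * f₁ S I)
    (hH1₂ : ∀ S I : ℝ, F₂ S I = I * f₂ S I)
    (hF₁zero : ∀ S I : ℝ, 0 ≤ S → 0 ≤ I → F₁ 0 I = 0 ∧ F₁ S 0 = 0)
    (hF₂zero : ∀ S I : ℝ, 0 ≤ S → 0 ≤ I → F₂ 0 I = 0 ∧ F₂ S 0 = 0)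
    (hdF₁S : ∀ S I : ℝ, 0 ≤ S → 0 ≤ I → HasDerivAt (fun x => F₁ x I) (F₁S S I) S)
    (hdF₁I : ∀ S I : ℝ, 0 ≤ S → 0 ≤ I → HasDerivAt (fun y => F₁ S y) (F₁I S I) I)
    (hdF₂S : ∀ S I : ℝ, 0 ≤ S → 0 ≤ I → HasDerivAt (fun x => F₂ x I) (F₂S S I) S)
    (hdF₂I : ∀ S I : ℝ, 0 ≤ S → 0 ≤ I → HasDerivAt (fun y => F₂ S y) (F₂I S I) I)
    (hdf₁S : ∀ S I : ℝ, 0 ≤ S → 0 ≤ I → HasDerivAt (fun x => f₁ x I) (f₁S S I) S)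
    (hdf₁I : ∀ S I : ℝ, 0 ≤ S → 0 ≤ I → HasDerivAt (fun y => f₁ S y) (f₁I S I) I)
    (hdf₂S : ∀ S I : ℝ, 0 ≤ S → 0 ≤ I → HasDerivAt (fun x => f₂ x I) (f₂S S I) S)
    (hdf₂I : ∀ S I : ℝ, 0 ≤ S → 0 ≤ I → HasDerivAt (fun y => f₂ S y) (f₂I S I) I)
    (hH2f₁S : ∀ S I : ℝ, 0 ≤ S → 0 ≤ I → 0 < f₁S S I)
    (hH2f₁I : ∀ S I : ℝ, 0 ≤ S → 0 ≤ I → f₁I S I ≤ 0)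
    (hH2f₂S : ∀ S I : ℝ, 0 ≤ S → 0 ≤ I → 0 < f₂S S I)
    (hH2f₂I : ∀ S I : ℝ, 0 ≤ S → 0 ≤ I → f₂I S I ≤ 0)
    (S V₁ I₁ I₂ : ℝ → ℝ)
    (hS' : ∀ t : ℝ, 0 ≤ t → HasDerivAt S (Λ - F₁ (S t) (I₁ t) - F₂ (S t) (I₂ t) - lam * S t) t)
    (hV' : ∀ t : ℝ, 0 ≤ t → HasDerivAt V₁ (r * S t - (μ + k * I₂ t) * V₁ t) t)
    (hI₁' : ∀ t : ℝ, 0 ≤ t → HasDerivAt I₁ (F₁ (S t) (I₁ t) - α₁ * I₁ t) t)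
    (hI₂' : ∀ t : ℝ, 0 ≤ t → HasDerivAt I₂ (F₂ (S t) (I₂ t) + k * I₂ t * V₁ t - α₂ * I₂ t) t)
    (g₁ g₂ : ℝ → ℝ → ℝ)
    (hg₁C1 : ContDiffOn ℝ 1 (fun p : ℝ × ℝ => g₁ p.1 p.2) {p : ℝ × ℝ | 0 ≤ p.1 ∧ 0 ≤ p.2})
    (hg₂C1 : ContDiffOn ℝ 1 (fun p : ℝ × ℝ => g₂ p.1 p.2) {p : ℝ × ℝ | 0 ≤ p.1 ∧ 0 ≤ p.2})
    (hH4₁ : ∀ Sx Ix : ℝ, f₁ Sx Ix = Sx * g₁ Sx Ix)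
    (hH4₂ : ∀ Sx Ix : ℝ, f₂ Sx Ix = Sx * g₂ Sx Ix)
    (Ss Vs Is1 Is2 : ℝ) (hSs : 0 < Ss) (hVs : 0 < Vs) (hIs1 : 0 < Is1) (hIs2 : 0 < Is2)
    (heq1 : Λ - F₁ Ss Is1 - F₂ Ss Is2 - lam * Ss = 0)
    (heq2 : r * Ss - (μ + k * Is2) * Vs = 0)
    (heq3 : F₁ Ss Is1 - α₁ * Is1 = 0)
    (heq4 : F₂ Ss Is2 + k * Is2 * Vs - α₂ * Is2 = 0)
    (hineq : ∀ Sx Vx Ix1 Ix2 : ℝ, 0 < Sx → 0 < Vx → 0 < Ix1 → 0 < Ix2 →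
      (Sx, Vx, Ix1, Ix2) ≠ (Ss, Vs, Is1, Is2) →
      F₁ Ss Is1 * (2 - Ss / Sx - Sx * g₁ Sx Ix1 / (Ss * g₁ Ss Is1)) +
      F₂ Ss Is2 * (2 - Ss / Sx - Sx * g₂ Sx Ix2 / (Ss * g₂ Ss Is2)) +
      r * Ss * (3 - Ss / Sx - Vx / Vs - Sx * Vs / (Ss * Vx)) +
      μ * Ss * (2 - Ss / Sx - Sx / Ss) +
      Ix1 * (Ss * g₁ Sx Ix1 - α₁) + Ix2 * (Ss * g₂ Sx Ix2 + k * Vs - α₂) < 0)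
    (hinit : 0 < S 0 ∧ 0 < V₁ 0 ∧ 0 < I₁ 0 ∧ 0 < I₂ 0) :
    Filter.Tendsto S Filter.atTop (nhds Ss) ∧
    Filter.Tendsto V₁ Filter.atTop (nhds Vs) ∧
    Filter.Tendsto I₁ Filter.atTop (nhds Is1) ∧
    Filter.Tendsto I₂ Filter.atTop (nhds Is2) :=
  E3_globally_asymptotically_stable_general Λ r μ k α₁ α₂ lam hΛ hr hlam F₁ F₂ f₁ f₂ f₁S f₂S hH1₁
    hH1₂ hdf₁S hdf₂S hH2f₁S hH2f₂S S V₁ I₁ I₂ hS' hV' hI₁' hI₂' g₁ g₂ hg₁C1 hg₂C1 hH4₁ hH4₂ Ss Vs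
    Is1 Is2 hSs hVs hIs1 hIs2 heq1 heq2 heq3 heq4 hineq hinit
end
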